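/- arXiv:math/0612229 — 7 statements merged into one kernel-verified Lean document; each statement's English description precedes it below -/
import Mathlib

section
/- Let Q1 and Q2 be two quadrics in P^n(F_q) whose defining forms involve only the variables x_0,...,x_{n-l} (for some 1 ≤ l ≤ n-1), and suppose the common zero set of Q1 and Q2 in the subspace E_{n-l} = {x ∈ P^n(F_q) : x_{n-l+1} = ... = x_n = 0} has at most m points. Then |Q1 ∩ Q2| ≤ m·q^l + (q^{l-1} + ... + q + 1). -/
private lemma my_geom (q' l : ℕ) :
    q' * ∑ i ∈ Finset.range l, (q' + 1) ^ i + 1 = (q' + 1) ^ l := by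
  induction l with
  | zero => simp
  | succ l ih =>
      rw [Finset.sum_range_succ]
      calc q' * (∑ i ∈ Finset.range l, (q' + 1) ^ i + (q' + 1) ^ l) + 1
          = (q' * ∑ i ∈ Finset.range l, (q' + 1) ^ i + 1) + q' * (q' + 1) ^ l := by ring
        _ = (q' + 1) ^ l + q' * (q' + 1) ^ l := by rw [ih]
        _ = (q' + 1) ^ (l + 1) := by ring

private lemma my_eval_smul {σ R : Type*} [CommSemiring R] {f : MvPolynomial σ R} {d : ℕ}
    (hf : f.IsHomogeneous d) (c : R) (v : σ → R) :
    MvPolynomial.eval (c • v) f = c ^ d * MvPolynomial.eval v f := by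
  rw [MvPolynomial.eval_eq, MvPolynomial.eval_eq, Finset.mul_sum]
  refine Finset.sum_congr rfl fun s hs => ?_
  have hd : ∑ i ∈ s.support, s i = d := by
    have := hf (MvPolynomial.mem_support_iff.mp hs)
    simpa [Finsupp.weight_apply, Finsupp.sum, Pi.one_apply, smul_eq_mul, mul_one] using this
  simp only [Pi.smul_apply, smul_eq_mul, mul_pow]
  rw [Finset.prod_mul_distrib, Finset.prod_pow_eq_pow_sum, hd]
  ring

private lemma my_card_fiber {α β : Type*} [Finite α] [Finite β] (f : α → β) (k : ℕ)
    (h : ∀ b : β, Nat.card {a : α // f a = b} ≤ k) : Nat.card α ≤ Nat.card β * k := by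
  classical
  cases nonempty_fintype α
  cases nonempty_fintype β
  rw [Nat.card_eq_fintype_card, Nat.card_eq_fintype_card]
  rw [← Finset.card_univ (α := α),
    Finset.card_eq_sum_card_fiberwise (fun a _ => Finset.mem_univ (f a))]
  calc ∑ b ∈ Finset.univ, (Finset.univ.filter (fun a => f a = b)).card
      ≤ ∑ _b ∈ (Finset.univ : Finset β), k := by
        refine Finset.sum_le_sum fun b _ => ?_
        rw [← Fintype.card_subtype, ← Nat.card_eq_fintype_card]
        exact h b
    _ = Fintype.card β * k := by simp [Finset.card_univ, mul_comm]



/-- If two quadrics in `ℙⁿ(F_q)` are defined by forms depending only on the variables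
`x_0, …, x_{n-l}` and their common zeros in the subspace
`E_{n-l} = {x : x_{n-l+1} = ⋯ = x_n = 0}` number at most `m`, then
`|Q1 ∩ Q2| ≤ m·q^l + (q^{l-1} + ⋯ + q + 1)`. -/
theorem stmt_1 (q n l m : ℕ) (Fq : Type) [Field Fq] [Fintype Fq]
    (hq : Fintype.card Fq = q) (hl1 : 1 ≤ l) (hl2 : l ≤ n - 1)
    (f1 f2 : MvPolynomial (Fin (n + 1)) Fq)
    (hf1 : f1.IsHomogeneous 2) (hf2 : f2.IsHomogeneous 2)
    (hf1ne : f1 ≠ 0) (hf2ne : f2 ≠ 0)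
    (hdep1 : ∀ x y : Fin (n + 1) → Fq,
      (∀ i : Fin (n + 1), (i : ℕ) ≤ n - l → x i = y i) →
      MvPolynomial.eval x f1 = MvPolynomial.eval y f1)
    (hdep2 : ∀ x y : Fin (n + 1) → Fq,
      (∀ i : Fin (n + 1), (i : ℕ) ≤ n - l → x i = y i) →
      MvPolynomial.eval x f2 = MvPolynomial.eval y f2)
    (hm : Nat.card {x : Projectivization Fq (Fin (n + 1) → Fq) |
        MvPolynomial.eval x.rep f1 = 0 ∧ MvPolynomial.eval x.rep f2 = 0 ∧
        ∀ i : Fin (n + 1), n - l < (i : ℕ) → x.rep i = 0} ≤ m) :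
    Nat.card {x : Projectivization Fq (Fin (n + 1) → Fq) |
        MvPolynomial.eval x.rep f1 = 0 ∧ MvPolynomial.eval x.rep f2 = 0}
      ≤ m * q ^ l + ∑ i ∈ Finset.range l, q ^ i := by
  classical
  have hq2 : 2 ≤ q := hq ▸ Fintype.one_lt_card
  obtain ⟨q', rfl⟩ : ∃ q', q = q' + 1 := ⟨q - 1, by omega⟩
  have hq' : 1 ≤ q' := by omega
  have hln : l + 1 ≤ n := by rcases n with _ | n <;> omega
  haveI hfinP : Finite (Projectivization Fq (Fin (n + 1) → Fq)) := by
    unfold Projectivization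
    infer_instance
  set S : Set (Projectivization Fq (Fin (n + 1) → Fq)) :=
    {x : Projectivization Fq (Fin (n + 1) → Fq) |
        MvPolynomial.eval x.rep f1 = 0 ∧ MvPolynomial.eval x.rep f2 = 0} with hS
  set Z : Set (Projectivization Fq (Fin (n + 1) → Fq)) :=
    {x : Projectivization Fq (Fin (n + 1) → Fq) |
        MvPolynomial.eval x.rep f1 = 0 ∧ MvPolynomial.eval x.rep f2 = 0 ∧
        ∀ i : Fin (n + 1), n - l < (i : ℕ) → x.rep i = 0} with hZ
  set S0 : Set (Projectivization Fq (Fin (n + 1) → Fq)) :=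
    {x | x ∈ S ∧ ∀ i : Fin (n + 1), (i : ℕ) ≤ n - l → x.rep i = 0} with hS0
  set S1 : Set (Projectivization Fq (Fin (n + 1) → Fq)) :=
    {x | x ∈ S ∧ ¬ ∀ i : Fin (n + 1), (i : ℕ) ≤ n - l → x.rep i = 0} with hS1
  have hidxlt : ∀ j : Fin l, n - l + 1 + (j : ℕ) < n + 1 := fun j => by
    have := j.isLt; omega
  set idx : Fin l → Fin (n + 1) := fun j => ⟨n - l + 1 + (j : ℕ), hidxlt j⟩ with hidx
  -- splitting
  have hsplit : Nat.card S ≤ Nat.card S1 + Nat.card S0 := by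
    have hsub : S ⊆ S1 ∪ S0 := fun x hx => by
      by_cases h : ∀ i : Fin (n + 1), (i : ℕ) ≤ n - l → x.rep i = 0
      · exact Or.inr ⟨hx, h⟩
      · exact Or.inl ⟨hx, h⟩
    calc Nat.card S = S.ncard := Nat.card_coe_set_eq S
      _ ≤ (S1 ∪ S0).ncard := Set.ncard_le_ncard hsub (Set.toFinite _)
      _ ≤ S1.ncard + S0.ncard := Set.ncard_union_le _ _
      _ = Nat.card S1 + Nat.card S0 := by
          rw [← Nat.card_coe_set_eq, ← Nat.card_coe_set_eq]
  -- Step A : the part inside the center of projection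
  have hA : Nat.card S0 ≤ ∑ i ∈ Finset.range l, (q' + 1) ^ i := by
    have hgne : ∀ (c : {c : Fq // c ≠ 0}) (x : S0),
        (fun j => c.1 * (x.1.rep (idx j))) ≠ (0 : Fin l → Fq) := by
      intro c x h0
      obtain ⟨i0, hi0⟩ := Function.ne_iff.mp x.1.rep_nonzero
      have hgt : n - l < (i0 : ℕ) := by
        by_contra hle
        exact hi0 (x.2.2 i0 (by omega))
      have hjlt : (i0 : ℕ) - (n - l + 1) < l := by have := i0.isLt; omega
      have hidxj : idx ⟨(i0 : ℕ) - (n - l + 1), hjlt⟩ = i0 := by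
        apply Fin.ext
        simp only [hidx]
        omega
      have := congrFun h0 ⟨(i0 : ℕ) - (n - l + 1), hjlt⟩
      rw [hidxj] at this
      exact mul_ne_zero c.2 hi0 (by simpa using this)
    set g : {c : Fq // c ≠ 0} × S0 → {w : Fin l → Fq // w ≠ 0} :=
      fun cx => ⟨fun j => cx.1.1 * (cx.2.1.rep (idx j)), hgne cx.1 cx.2⟩ with hg
    have hginj : Function.Injective g := by
      rintro ⟨c, x⟩ ⟨d, y⟩ hxy
      have hfun : ∀ j : Fin l, c.1 * x.1.rep (idx j) = d.1 * y.1.rep (idx j) :=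
        fun j => congrFun (congrArg Subtype.val hxy) j
      have hsmul : c.1 • x.1.rep = d.1 • y.1.rep := by
        funext i
        by_cases hi : (i : ℕ) ≤ n - l
        · simp [x.2.2 i hi, y.2.2 i hi]
        · have hjlt : (i : ℕ) - (n - l + 1) < l := by have := i.isLt; omega
          have hidxj : idx ⟨(i : ℕ) - (n - l + 1), hjlt⟩ = i := by
            apply Fin.ext
            simp only [hidx]
            omega
          have := hfun ⟨(i : ℕ) - (n - l + 1), hjlt⟩
          rw [hidxj] at this
          simpa using this
      have hmkc : ∀ (e : {c : Fq // c ≠ 0}) (w : S0),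
          Projectivization.mk Fq (e.1 • w.1.rep) (smul_ne_zero e.2 w.1.rep_nonzero)
            = w.1 := by
        intro e w
        conv_rhs => rw [← Projectivization.mk_rep w.1]
        rw [Projectivization.mk_eq_mk_iff]
        exact ⟨Units.mk0 e.1 e.2, by simp [Units.smul_def]⟩
      have hxy' : x.1 = y.1 := by
        rw [← hmkc c x, ← hmkc d y]
        congr 1
      have hcd : c = d := by
        obtain ⟨i0, hi0⟩ := Function.ne_iff.mp y.1.rep_nonzero
        rw [Pi.zero_apply] at hi0
        have h2 := congrFun hsmul i0
        rw [hxy'] at h2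
        simp only [Pi.smul_apply, smul_eq_mul] at h2
        exact Subtype.ext (mul_right_cancel₀ hi0 h2)
      exact Prod.ext hcd (Subtype.ext hxy')
    have hcard1 : Nat.card ({c : Fq // c ≠ 0} × S0) ≤ Nat.card {w : Fin l → Fq // w ≠ 0} :=
      Nat.card_le_card_of_injective g hginj
    have hc1 : Nat.card {c : Fq // c ≠ 0} = q' := by
      rw [Nat.card_eq_fintype_card, Fintype.card_subtype_compl, Fintype.card_subtype_eq, hq]
      omega
    have hc2 : Nat.card {w : Fin l → Fq // w ≠ 0} = (q' + 1) ^ l - 1 := by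
      rw [Nat.card_eq_fintype_card, Fintype.card_subtype_compl, Fintype.card_subtype_eq,
        Fintype.card_fun, hq, Fintype.card_fin]
    rw [Nat.card_prod, hc1, hc2] at hcard1
    have hgeq := my_geom q' l
    refine Nat.le_of_mul_le_mul_left ?_ (show 0 < q' by omega)
    omega
  -- Step B : fibers of the projection away from the center
  have hB : Nat.card S1 ≤ m * (q' + 1) ^ l := by
    set trunc : (Fin (n + 1) → Fq) → (Fin (n + 1) → Fq) :=
      fun v i => if (i : ℕ) ≤ n - l then v i else 0 with htrunc
    have htr : ∀ x : S1, trunc x.1.rep ≠ 0 := by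
      intro x h0
      have h := x.2.2
      push_neg at h
      obtain ⟨i, hi, hne⟩ := h
      have := congrFun h0 i
      simp only [htrunc, Pi.zero_apply] at this
      rw [if_pos hi] at this
      exact hne this
    have hmem : ∀ x : S1, ∀ hu : trunc x.1.rep ≠ 0,
        Projectivization.mk Fq (trunc x.1.rep) hu ∈ Z := by
      intro x hu
      obtain ⟨a, ha⟩ := Projectivization.exists_smul_eq_mk_rep Fq (trunc x.1.rep) hu
      have hcoord : ∀ i : Fin (n + 1), n - l < (i : ℕ) →
          (Projectivization.mk Fq (trunc x.1.rep) hu).rep i = 0 := by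
        intro i hi
        rw [← ha]
        simp only [Pi.smul_apply, htrunc, Units.smul_def, smul_eq_mul]
        rw [if_neg (by omega)]
        ring
      have hagree : ∀ i : Fin (n + 1), (i : ℕ) ≤ n - l →
          (a • trunc x.1.rep) i = ((a : Fq) • x.1.rep) i := by
        intro i hi
        simp only [Pi.smul_apply, htrunc, Units.smul_def, smul_eq_mul]
        rw [if_pos hi]
      refine ⟨?_, ?_, hcoord⟩
      · rw [← ha, hdep1 _ _ hagree, my_eval_smul hf1, x.2.1.1, mul_zero]
      · rw [← ha, hdep2 _ _ hagree, my_eval_smul hf2, x.2.1.2, mul_zero]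
    set F : S1 → Z :=
      fun x => ⟨Projectivization.mk Fq (trunc x.1.rep) (htr x), hmem x (htr x)⟩ with hF
    have hfiber : ∀ z : Z, Nat.card {x : S1 // F x = z} ≤ (q' + 1) ^ l := by
      intro z
      have hcf : Nat.card (Fin l → Fq) = (q' + 1) ^ l := by
        rw [Nat.card_eq_fintype_card, Fintype.card_fun, hq, Fintype.card_fin]
      rw [← hcf]
      have hex : ∀ x : {x : S1 // F x = z}, ∃ u : Fin (n + 1) → Fq, ∃ hu : u ≠ 0,
          Projectivization.mk Fq u hu = x.1.1 ∧
          ∀ i : Fin (n + 1), (i : ℕ) ≤ n - l → u i = z.1.rep i := by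
        intro x
        have h1 : Projectivization.mk Fq (trunc x.1.1.rep) (htr x.1) = z.1 :=
          congrArg Subtype.val x.2
        rw [← Projectivization.mk_rep z.1, Projectivization.mk_eq_mk_iff] at h1
        obtain ⟨a, ha⟩ := h1
        refine ⟨((a⁻¹ : Fqˣ) : Fq) • x.1.1.rep,
          smul_ne_zero (Units.ne_zero _) x.1.1.rep_nonzero, ?_, ?_⟩
        · conv_rhs => rw [← Projectivization.mk_rep x.1.1]
          rw [Projectivization.mk_eq_mk_iff]
          exact ⟨a⁻¹, by simp [Units.smul_def]⟩
        · intro i hi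
          have h2 := congrFun ha i
          simp only [Pi.smul_apply, Units.smul_def, smul_eq_mul, htrunc] at h2 ⊢
          rw [if_pos hi] at h2
          rw [← h2, ← mul_assoc, Units.inv_mul, one_mul]
      choose u hne hmku hcoordu using hex
      have hGinj : Function.Injective
          (fun x : {x : S1 // F x = z} => fun j : Fin l => u x (idx j)) := by
        intro x y hxy
        have huxy : u x = u y := by
          funext i
          by_cases hi : (i : ℕ) ≤ n - l
          · rw [hcoordu x i hi, hcoordu y i hi]
          · have hjlt : (i : ℕ) - (n - l + 1) < l := by have := i.isLt; omega
            have hidxj : idx ⟨(i : ℕ) - (n - l + 1), hjlt⟩ = i := by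
              apply Fin.ext
              simp only [hidx]
              omega
            have := congrFun hxy ⟨(i : ℕ) - (n - l + 1), hjlt⟩
            simpa [hidxj] using this
        have hval : x.1.1 = y.1.1 := by
          rw [← hmku x, ← hmku y, Projectivization.mk_eq_mk_iff]
          exact ⟨1, by simp [huxy]⟩
        exact Subtype.ext (Subtype.ext hval)
      exact Nat.card_le_card_of_injective _ hGinj
    calc Nat.card S1 ≤ Nat.card Z * (q' + 1) ^ l := my_card_fiber F _ hfiber
      _ ≤ m * (q' + 1) ^ l := Nat.mul_le_mul_right _ hm
  calc Nat.card S ≤ Nat.card S1 + Nat.card S0 := hsplit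
    _ ≤ m * (q' + 1) ^ l + ∑ i ∈ Finset.range l, (q' + 1) ^ i := add_le_add hB hA
end

section
/- Let f_X = x0·x1 + x2·x3 + x4^2 and f_Q = (x0+x1)(x2+x3) be quadratic forms over F_q with q odd. Then the common projective zero set of f_X and f_Q in P^4(F_q) has exactly 2q^2 + 3q + 1 points. -/
set_option maxRecDepth 8000
set_option maxHeartbeats 1000000
set_option maxRecDepth 4000
open Finset
section helpers
variable {K : Type} [Field K] [Fintype K] [DecidableEq K] {m : ℕ}

lemma card_filter_prod {α β : Type} [Fintype α] [Fintype β] (P : α × β → Prop)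
    [DecidablePred P] :
    (univ.filter P).card = ∑ a : α, (univ.filter fun b => P (a, b)).card := by
  classical
  rw [Finset.card_filter, Fintype.sum_prod_type]
  exact Finset.sum_congr rfl fun a _ => (Finset.card_filter _ _).symm

lemma card_erase_zero (hm : Fintype.card K = m + 1) : (univ.erase (0:K)).card = m := by
  rw [Finset.card_erase_of_mem (Finset.mem_univ _), Finset.card_univ, hm]; omega

lemma cnt_mul (hm : Fintype.card K = m + 1) (c : K) :
    (univ.filter fun p : K × K => p.1 * p.2 = c).card = if c = 0 then 2*m+1 else m := by
  rw [card_filter_prod (fun p : K × K => p.1 * p.2 = c)]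
  rw [← Finset.add_sum_erase _ _ (Finset.mem_univ (0:K))]
  have h0 : (univ.filter fun b : K => ((0:K), b).1 * ((0:K), b).2 = c).card
      = if c = 0 then m + 1 else 0 := by
    split_ifs with h
    · subst h; simp [Finset.filter_true_of_mem, hm]
    · simp [Ne.symm h]
  have h1 : ∀ a ∈ univ.erase (0:K),
      (univ.filter fun b : K => (a, b).1 * (a, b).2 = c).card = 1 := by
    intro a ha
    have ha' : a ≠ 0 := Finset.ne_of_mem_erase ha
    have : (univ.filter fun b : K => (a, b).1 * (a, b).2 = c) = {a⁻¹ * c} := by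
      ext b
      simp only [Finset.mem_filter, Finset.mem_univ, true_and, Finset.mem_singleton]
      constructor
      · intro h; rw [← h]; field_simp
      · intro h; subst h; field_simp
    rw [this, Finset.card_singleton]
  rw [Finset.sum_congr rfl h1, Finset.sum_const, h0, card_erase_zero hm, smul_eq_mul, mul_one]
  split_ifs <;> omega

lemma cnt_sq (hm : Fintype.card K = m + 1) (h2 : (2:K) ≠ 0) :
    (univ.filter fun p : K × K => p.1^2 = p.2^2).card = 2*m+1 := by
  rw [card_filter_prod (fun p : K × K => p.1^2 = p.2^2)]
  rw [← Finset.add_sum_erase _ _ (Finset.mem_univ (0:K))]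
  have h0 : (univ.filter fun b : K => ((0:K), b).1^2 = ((0:K), b).2^2).card = 1 := by
    have : (univ.filter fun b : K => ((0:K), b).1^2 = ((0:K), b).2^2) = {0} := by
      ext b
      simp only [Finset.mem_filter, Finset.mem_univ, true_and, Finset.mem_singleton]
      rw [eq_comm, zero_pow (by norm_num : (2:ℕ) ≠ 0), sq_eq_zero_iff]
    rw [this, Finset.card_singleton]
  have h1 : ∀ a ∈ univ.erase (0:K),
      (univ.filter fun b : K => (a, b).1^2 = (a, b).2^2).card = 2 := by
    intro a ha
    have ha' : a ≠ 0 := Finset.ne_of_mem_erase ha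
    have hne : a ≠ -a := by
      intro h
      apply ha'
      have h' : (2:K) * a = 0 := by linear_combination h
      rcases mul_eq_zero.mp h' with h'' | h''
      · exact absurd h'' h2
      · exact h''
    have : (univ.filter fun b : K => (a, b).1^2 = (a, b).2^2) = {a, -a} := by
      ext b
      simp only [Finset.mem_filter, Finset.mem_univ, true_and, Finset.mem_insert,
        Finset.mem_singleton]
      rw [eq_comm, sq_eq_sq_iff_eq_or_eq_neg]
    rw [this, Finset.card_insert_of_notMem (by simpa using hne), Finset.card_singleton]
  rw [Finset.sum_congr rfl h1, Finset.sum_const, h0, card_erase_zero hm, smul_eq_mul]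
  omega

lemma cnt_hyp4 (hm : Fintype.card K = m + 1) (h2 : (2:K) ≠ 0) :
    (univ.filter fun p : (K×K)×(K×K) => p.2.1 * p.2.2 = p.1.1^2 - p.1.2^2).card
      = m^3 + 4*m^2 + 4*m + 1 := by
  rw [card_filter_prod (fun p : (K×K)×(K×K) => p.2.1 * p.2.2 = p.1.1^2 - p.1.2^2)]
  have step : ∀ x : K × K, (univ.filter fun b : K × K => (x, b).2.1 * (x, b).2.2
      = (x, b).1.1^2 - (x, b).1.2^2).card = if x.1^2 = x.2^2 then 2*m+1 else m := by
    intro x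
    rw [cnt_mul hm (x.1^2 - x.2^2)]
    simp [sub_eq_zero]
  rw [Finset.sum_congr rfl fun x _ => step x, Finset.sum_ite, Finset.sum_const, Finset.sum_const]
  have hB : (univ.filter fun x : K×K => ¬ x.1^2 = x.2^2).card = m*m := by
    have h := Finset.card_filter_add_card_filter_not
      (s := (univ : Finset (K×K))) (fun x : K×K => x.1^2 = x.2^2)
    rw [cnt_sq hm h2, Finset.card_univ, Fintype.card_prod, hm] at h
    have h' : (m+1)*(m+1) = m*m + (2*m+1) := by ring
    linarith
  rw [cnt_sq hm h2, hB, smul_eq_mul, smul_eq_mul]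
  ring

lemma cnt_tern (hm : Fintype.card K = m + 1) :
    (univ.filter fun p : K × (K×K) => p.2.1 * p.2.2 = p.1^2).card = m^2 + 2*m + 1 := by
  rw [card_filter_prod (fun p : K × (K×K) => p.2.1 * p.2.2 = p.1^2)]
  have step : ∀ a : K, (univ.filter fun b : K × K => (a, b).2.1 * (a, b).2.2
      = (a, b).1^2).card = if a = 0 then 2*m+1 else m := by
    intro a
    rw [cnt_mul hm (a^2)]
    simp [sq_eq_zero_iff]
  rw [Finset.sum_congr rfl fun a _ => step a]
  rw [← Finset.add_sum_erase _ _ (Finset.mem_univ (0:K)), if_pos rfl]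
  have h1 : ∀ a ∈ univ.erase (0:K), (if a = 0 then 2*m+1 else m) = m := by
    intro a ha; rw [if_neg (Finset.ne_of_mem_erase ha)]
  rw [Finset.sum_congr rfl h1, Finset.sum_const, card_erase_zero hm, smul_eq_mul]
  ring

lemma cnt_Z1 (hm : Fintype.card K = m + 1) (h2 : (2:K) ≠ 0) :
    (univ.filter fun v : Fin 5 → K =>
      (v 0 * v 1 + v 2 * v 3 + v 4^2 = 0 ∧ v 0 + v 1 = 0)).card
      = m^3 + 4*m^2 + 4*m + 1 := by
  rw [← cnt_hyp4 hm h2]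
  apply Finset.card_nbij' (fun v => ((v 0, v 4), (v 2, v 3)))
    (fun x => ![x.1.1, -x.1.1, x.2.1, x.2.2, x.1.2])
  · intro v hv
    simp only [Finset.mem_coe, Finset.mem_filter, Finset.mem_univ, true_and] at hv ⊢
    linear_combination hv.1 - v 0 * hv.2
  · intro x hx
    simp only [Finset.mem_coe, Finset.mem_filter, Finset.mem_univ, true_and] at hx ⊢
    simp only [Matrix.cons_val_zero, Matrix.cons_val_one, Matrix.head_cons]
    constructor
    · have h0 : (![x.1.1, -x.1.1, x.2.1, x.2.2, x.1.2] : Fin 5 → K) 2 = x.2.1 := by simp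
      have h1 : (![x.1.1, -x.1.1, x.2.1, x.2.2, x.1.2] : Fin 5 → K) 3 = x.2.2 := by simp
      have h3 : (![x.1.1, -x.1.1, x.2.1, x.2.2, x.1.2] : Fin 5 → K) 4 = x.1.2 := by simp
      rw [h0, h1, h3]; linear_combination hx
    · ring
  · intro v hv
    simp only [Finset.mem_coe, Finset.mem_filter, Finset.mem_univ, true_and] at hv
    have h1 : v 1 = -(v 0) := by linear_combination hv.2
    funext k; fin_cases k <;> simp [h1.symm]
  · intro x hx
    ext <;> simp

lemma cnt_Z2 (hm : Fintype.card K = m + 1) (h2 : (2:K) ≠ 0) :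
    (univ.filter fun v : Fin 5 → K =>
      (v 0 * v 1 + v 2 * v 3 + v 4^2 = 0 ∧ v 2 + v 3 = 0)).card
      = m^3 + 4*m^2 + 4*m + 1 := by
  rw [← cnt_hyp4 hm h2]
  apply Finset.card_nbij' (fun v => ((v 2, v 4), (v 0, v 1)))
    (fun x => ![x.2.1, x.2.2, x.1.1, -x.1.1, x.1.2])
  · intro v hv
    simp only [Finset.mem_coe, Finset.mem_filter, Finset.mem_univ, true_and] at hv ⊢
    linear_combination hv.1 - v 2 * hv.2
  · intro x hx
    simp only [Finset.mem_coe, Finset.mem_filter, Finset.mem_univ, true_and] at hx ⊢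
    have h0 : (![x.2.1, x.2.2, x.1.1, -x.1.1, x.1.2] : Fin 5 → K) 2 = x.1.1 := by simp
    have h1 : (![x.2.1, x.2.2, x.1.1, -x.1.1, x.1.2] : Fin 5 → K) 3 = -x.1.1 := by simp
    have h3 : (![x.2.1, x.2.2, x.1.1, -x.1.1, x.1.2] : Fin 5 → K) 4 = x.1.2 := by simp
    simp only [Matrix.cons_val_zero, Matrix.cons_val_one, Matrix.head_cons, h0, h1, h3]
    constructor
    · linear_combination hx
    · ring
  · intro v hv
    simp only [Finset.mem_coe, Finset.mem_filter, Finset.mem_univ, true_and] at hv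
    have h1 : v 3 = -(v 2) := by linear_combination hv.2
    funext k; fin_cases k <;> simp [h1.symm]
  · intro x hx
    ext <;> simp

lemma cnt_Z12 (hm : Fintype.card K = m + 1) (h2 : (2:K) ≠ 0) :
    (univ.filter fun v : Fin 5 → K =>
      ((v 0 * v 1 + v 2 * v 3 + v 4^2 = 0 ∧ v 0 + v 1 = 0) ∧
       (v 0 * v 1 + v 2 * v 3 + v 4^2 = 0 ∧ v 2 + v 3 = 0))).card
      = m^2 + 2*m + 1 := by
  rw [← cnt_tern hm]
  apply Finset.card_nbij' (fun v => (v 0, (v 4 - v 2, v 4 + v 2)))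
    (fun x => ![x.1, -x.1, (x.2.2 - x.2.1)/2, -((x.2.2 - x.2.1)/2), (x.2.1 + x.2.2)/2])
  · intro v hv
    simp only [Finset.mem_coe, Finset.mem_filter, Finset.mem_univ, true_and] at hv ⊢
    have e1 : v 1 = -(v 0) := by linear_combination hv.1.2
    have e2 : v 3 = -(v 2) := by linear_combination hv.2.2
    have := hv.1.1
    rw [e1, e2] at this
    linear_combination this
  · intro x hx
    simp only [Finset.mem_coe, Finset.mem_filter, Finset.mem_univ, true_and] at hx ⊢
    have h0 : (![x.1, -x.1, (x.2.2 - x.2.1)/2, -((x.2.2 - x.2.1)/2), (x.2.1 + x.2.2)/2]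
        : Fin 5 → K) 2 = (x.2.2 - x.2.1)/2 := by simp
    have h1 : (![x.1, -x.1, (x.2.2 - x.2.1)/2, -((x.2.2 - x.2.1)/2), (x.2.1 + x.2.2)/2]
        : Fin 5 → K) 3 = -((x.2.2 - x.2.1)/2) := by simp
    have h3 : (![x.1, -x.1, (x.2.2 - x.2.1)/2, -((x.2.2 - x.2.1)/2), (x.2.1 + x.2.2)/2]
        : Fin 5 → K) 4 = (x.2.1 + x.2.2)/2 := by simp
    simp only [Matrix.cons_val_zero, Matrix.cons_val_one, Matrix.head_cons, h0, h1, h3]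
    refine ⟨⟨?_, by ring⟩, ?_, by ring⟩ <;> field_simp <;> linear_combination (4:K) * hx
  · intro v hv
    simp only [Finset.mem_coe, Finset.mem_filter, Finset.mem_univ, true_and] at hv
    have e1 : v 1 = -(v 0) := by linear_combination hv.1.2
    have e2 : v 3 = -(v 2) := by linear_combination hv.2.2
    funext k
    fin_cases k <;> simp [e1, e2] <;> field_simp <;> ring
  · intro x hx
    refine Prod.ext ?_ (Prod.ext ?_ ?_) <;> simp <;> field_simp <;> ring

lemma cnt_Z (hm : Fintype.card K = m + 1) (h2 : (2:K) ≠ 0) :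
    (univ.filter fun v : Fin 5 → K =>
      v 0 * v 1 + v 2 * v 3 + v 4^2 = 0 ∧ (v 0 + v 1) * (v 2 + v 3) = 0).card
      + (m^2 + 2*m + 1) = 2*(m^3 + 4*m^2 + 4*m + 1) := by
  have hiff : ∀ v : Fin 5 → K,
      (v 0 * v 1 + v 2 * v 3 + v 4^2 = 0 ∧ (v 0 + v 1) * (v 2 + v 3) = 0)
      ↔ ((v 0 * v 1 + v 2 * v 3 + v 4^2 = 0 ∧ v 0 + v 1 = 0)
        ∨ (v 0 * v 1 + v 2 * v 3 + v 4^2 = 0 ∧ v 2 + v 3 = 0)) := by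
    intro v
    rw [← and_or_left, mul_eq_zero]
  rw [Finset.filter_congr (fun v _ => hiff v), Finset.filter_or]
  have h := Finset.card_union_add_card_inter
    (univ.filter fun v : Fin 5 → K => v 0 * v 1 + v 2 * v 3 + v 4^2 = 0 ∧ v 0 + v 1 = 0)
    (univ.filter fun v : Fin 5 → K => v 0 * v 1 + v 2 * v 3 + v 4^2 = 0 ∧ v 2 + v 3 = 0)
  rw [← Finset.filter_and, cnt_Z12 hm h2, cnt_Z1 hm h2, cnt_Z2 hm h2] at h
  linarith

end helpers

open Finset in
open MvPolynomial in
/-- For `q` odd, the quadrics `x0·x1 + x2·x3 + x4² = 0` and `(x0+x1)(x2+x3) = 0`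
in `ℙ⁴(F_q)` meet in exactly `2q² + 3q + 1` points. -/
theorem stmt_6 (q : ℕ) (Fq : Type) [Field Fq] [Fintype Fq]
    (hq : Fintype.card Fq = q) (hchar : ringChar Fq ≠ 2) :
    Nat.card {x : Projectivization Fq (Fin 5 → Fq) |
        MvPolynomial.eval x.rep
          (X 0 * X 1 + X 2 * X 3 + X 4 ^ 2 : MvPolynomial (Fin 5) Fq) = 0 ∧
        MvPolynomial.eval x.rep
          ((X 0 + X 1) * (X 2 + X 3) : MvPolynomial (Fin 5) Fq) = 0}
      = 2 * q ^ 2 + 3 * q + 1 := by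
  letI : DecidableEq Fq := Classical.decEq Fq
  classical
  have h2 : (2:Fq) ≠ 0 := Ring.two_ne_zero hchar
  obtain ⟨m, hm⟩ : ∃ m, Fintype.card Fq = m + 1 :=
    ⟨Fintype.card Fq - 1, by have := Fintype.one_lt_card (α := Fq); omega⟩
  have hm1 : 1 ≤ m := by have := Fintype.one_lt_card (α := Fq); omega
  have hSet : {x : Projectivization Fq (Fin 5 → Fq) |
        MvPolynomial.eval x.rep
          (X 0 * X 1 + X 2 * X 3 + X 4 ^ 2 : MvPolynomial (Fin 5) Fq) = 0 ∧
        MvPolynomial.eval x.rep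
          ((X 0 + X 1) * (X 2 + X 3) : MvPolynomial (Fin 5) Fq) = 0}
      = {x : Projectivization Fq (Fin 5 → Fq) |
          x.rep 0 * x.rep 1 + x.rep 2 * x.rep 3 + x.rep 4^2 = 0 ∧
          (x.rep 0 + x.rep 1) * (x.rep 2 + x.rep 3) = 0} := by
    ext x; simp
  rw [hSet]
  have hhom : ∀ (c : Fq), c ≠ 0 → ∀ v : Fin 5 → Fq,
      (v 0 * v 1 + v 2 * v 3 + v 4^2 = 0 ∧ (v 0 + v 1) * (v 2 + v 3) = 0) →
      ((c • v) 0 * (c • v) 1 + (c • v) 2 * (c • v) 3 + (c • v) 4^2 = 0 ∧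
       ((c • v) 0 + (c • v) 1) * ((c • v) 2 + (c • v) 3) = 0) := by
    intro c hc v hv
    obtain ⟨e1, e2⟩ := hv
    constructor
    · simp only [Pi.smul_apply, smul_eq_mul]
      linear_combination c^2 * e1
    · simp only [Pi.smul_apply, smul_eq_mul]
      linear_combination c^2 * e2
  set Zf : Finset (Fin 5 → Fq) := univ.filter fun v : Fin 5 → Fq =>
    v 0 * v 1 + v 2 * v 3 + v 4^2 = 0 ∧ (v 0 + v 1) * (v 2 + v 3) = 0 with hZf
  have e1 : Zf.card + (m^2 + 2*m + 1) = 2*(m^3 + 4*m^2 + 4*m + 1) := cnt_Z hm h2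
  have hz0 : (0 : Fin 5 → Fq) ∈ Zf := by
    rw [hZf, Finset.mem_filter]
    refine ⟨Finset.mem_univ _, ?_, ?_⟩ <;> simp
  set A : Finset (Fin 5 → Fq) := Zf.erase 0 with hA
  have e2 : A.card + 1 = Zf.card := Finset.card_erase_add_one hz0
  have hmemA : ∀ v : Fin 5 → Fq, v ∈ A ↔ (v ≠ 0 ∧
      (v 0 * v 1 + v 2 * v 3 + v 4^2 = 0 ∧ (v 0 + v 1) * (v 2 + v 3) = 0)) := by
    intro v
    rw [hA, Finset.mem_erase, hZf, Finset.mem_filter]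
    simp [and_assoc]
  set T : Set (Projectivization Fq (Fin 5 → Fq)) :=
    {x : Projectivization Fq (Fin 5 → Fq) |
      x.rep 0 * x.rep 1 + x.rep 2 * x.rep 3 + x.rep 4^2 = 0 ∧
      (x.rep 0 + x.rep 1) * (x.rep 2 + x.rep 3) = 0} with hT
  have hmemT : ∀ x : Projectivization Fq (Fin 5 → Fq), x ∈ T ↔
      (x.rep 0 * x.rep 1 + x.rep 2 * x.rep 3 + x.rep 4^2 = 0 ∧
      (x.rep 0 + x.rep 1) * (x.rep 2 + x.rep 3) = 0) := fun x => Iff.rfl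
  -- the bijection
  have hF : ∀ p : T × Fqˣ, ((p.2 : Fq) • (p.1 : Projectivization Fq (Fin 5 → Fq)).rep) ∈ A := by
    rintro ⟨⟨x, hx⟩, u⟩
    rw [hmemA]
    exact ⟨smul_ne_zero u.ne_zero x.rep_nonzero, hhom _ u.ne_zero _ hx⟩
  set F : T × Fqˣ → {v : Fin 5 → Fq // v ∈ A} := fun p => ⟨_, hF p⟩ with hFdef
  have hbij : Function.Bijective F := by
    constructor
    · rintro ⟨⟨x, hx⟩, u⟩ ⟨⟨y, hy⟩, w⟩ hEq
      have hEq' : (u : Fq) • x.rep = (w : Fq) • y.rep := congrArg Subtype.val hEq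
      have hxy : x = y := by
        have k1 : Projectivization.mk Fq ((u : Fq) • x.rep)
            (smul_ne_zero u.ne_zero x.rep_nonzero) = Projectivization.mk Fq x.rep
            x.rep_nonzero := (Projectivization.mk_eq_mk_iff _ _ _ _ _).mpr
              ⟨u, (Units.smul_def u x.rep).symm ▸ rfl⟩
        have k2 : Projectivization.mk Fq ((w : Fq) • y.rep)
            (smul_ne_zero w.ne_zero y.rep_nonzero) = Projectivization.mk Fq y.rep
            y.rep_nonzero := (Projectivization.mk_eq_mk_iff _ _ _ _ _).mpr
              ⟨w, (Units.smul_def w y.rep).symm ▸ rfl⟩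
        calc x = Projectivization.mk Fq x.rep x.rep_nonzero := (Projectivization.mk_rep x).symm
          _ = Projectivization.mk Fq ((u : Fq) • x.rep) _ := k1.symm
          _ = Projectivization.mk Fq ((w : Fq) • y.rep) _ := by
              congr 1
          _ = Projectivization.mk Fq y.rep y.rep_nonzero := k2
          _ = y := Projectivization.mk_rep y
      subst hxy
      obtain ⟨i, hi⟩ := Function.ne_iff.mp x.rep_nonzero
      have hi' : x.rep i ≠ 0 := by simpa using hi
      have : (u : Fq) * x.rep i = (w : Fq) * x.rep i := congrFun hEq' i
      have huw : u = w := Units.ext (mul_right_cancel₀ hi' this)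
      simp [huw]
    · rintro ⟨v, hv⟩
      rw [hmemA] at hv
      obtain ⟨hv0, hPv⟩ := hv
      set x := Projectivization.mk Fq v hv0 with hx
      have hrep : Projectivization.mk Fq x.rep x.rep_nonzero = Projectivization.mk Fq v hv0 :=
        (Projectivization.mk_rep x).trans hx
      obtain ⟨a, ha⟩ := (Projectivization.mk_eq_mk_iff _ _ _ _ _).mp hrep
      have ha' : (a : Fq) • v = x.rep := (Units.smul_def a v) ▸ ha
      have hxT : x ∈ T := by
        rw [hmemT, ← ha']
        exact hhom _ a.ne_zero _ hPv
      refine ⟨⟨⟨x, hxT⟩, a⁻¹⟩, ?_⟩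
      apply Subtype.ext
      show ((a⁻¹ : Fqˣ) : Fq) • x.rep = v
      rw [← ha', smul_smul]
      simp
  have e3 : Nat.card T * m = A.card := by
    have c1 : Nat.card (T × Fqˣ) = Nat.card {v : Fin 5 → Fq // v ∈ A} :=
      Nat.card_eq_of_bijective F hbij
    rw [Nat.card_prod, Nat.card_eq_finsetCard] at c1
    have c2 : Nat.card Fqˣ = m := by
      rw [Nat.card_eq_fintype_card, Fintype.card_units, hm]
      omega
    rw [← c1, c2]
  -- final arithmetic
  have hqm : q = m + 1 := by omega
  have e1' := congrArg (Nat.cast : ℕ → ℤ) e1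
  have e2' := congrArg (Nat.cast : ℕ → ℤ) e2
  have e3' := congrArg (Nat.cast : ℕ → ℤ) e3
  push_cast at e1' e2' e3'
  have hZint : ((Nat.card T : ℤ)) * (m : ℤ) = (2*(m:ℤ)^2 + 7*m + 6) * m := by
    linear_combination e1' + e2' + e3'
  have hm0 : (m : ℤ) ≠ 0 := by exact_mod_cast Nat.one_le_iff_ne_zero.mp hm1
  have hfin : (Nat.card T : ℤ) = 2*(m:ℤ)^2 + 7*m + 6 := mul_right_cancel₀ hm0 hZint
  have : (Nat.card T : ℤ) = 2*(q:ℤ)^2 + 3*q + 1 := by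
    rw [hfin, hqm]; push_cast; ring
  exact_mod_cast this
end

section
/- The non-singular Hermitian curve x0^{t+1} + x1^{t+1} + x2^{t+1} = 0 in P^2(F_{t^2}) has exactly t^3 + 1 points. -/
set_option linter.unusedSectionVars false
set_option linter.unusedVariables false

open Finset Polynomial

namespace Stmt10

variable {Fq : Type} [Field Fq] [Fintype Fq] [DecidableEq Fq]

lemma card_filter_root_le (p : Fq[X]) (hp : p ≠ 0) :
    #(univ.filter fun x : Fq => p.eval x = 0) ≤ p.natDegree := by
  apply Polynomial.card_le_degree_of_subset_roots
  intro x hx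
  rw [Finset.mem_val, Finset.mem_filter] at hx
  rw [Polynomial.mem_roots hp]
  exact hx.2

lemma count_pow_le (k : ℕ) (hk : 0 < k) (c : Fq) :
    #(univ.filter fun x : Fq => x ^ k = c) ≤ k := by
  have h := card_filter_root_le (X ^ k - C c) (X_pow_sub_C_ne_zero hk c)
  rw [natDegree_X_pow_sub_C] at h
  refine le_trans (le_of_eq (congrArg Finset.card ?_)) h
  apply Finset.filter_congr
  intro x _
  simp [sub_eq_zero]

lemma pow_fix (t : ℕ) (hq : Fintype.card Fq = t ^ 2) (a : Fq) :
    (a ^ (t + 1)) ^ t = a ^ (t + 1) := by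
  have hc : a ^ (t ^ 2) = a := by rw [← hq]; exact FiniteField.pow_card a
  rw [← pow_mul, show (t + 1) * t = t ^ 2 + t by ring, pow_add, hc, mul_comm, ← pow_succ]

lemma count_pow_eq (t : ℕ) (ht : 2 ≤ t) (hq : Fintype.card Fq = t ^ 2) :
    ∀ c : Fq, c ^ t = c →
      #(univ.filter fun x : Fq => x ^ (t + 1) = c) = if c = 0 then 1 else t + 1 := by
  have ht0 : t ≠ 0 := by omega
  set W : Finset Fq := univ.filter fun c : Fq => c ^ t = c with hW
  -- |W| ≤ t
  have hdeg : ((X : Fq[X]) ^ t - X).natDegree = t := by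
    rw [natDegree_sub_eq_left_of_natDegree_lt, natDegree_X_pow]
    rw [natDegree_X_pow, natDegree_X]; omega
  have hpne : ((X : Fq[X]) ^ t - X) ≠ 0 := by
    intro h; rw [h] at hdeg; simp at hdeg; omega
  have hWle : #W ≤ t := by
    have h := card_filter_root_le _ hpne
    rw [hdeg] at h
    refine le_trans (le_of_eq (congrArg Finset.card ?_)) h
    apply Finset.filter_congr
    intro x _
    simp [sub_eq_zero]
  -- sum of fibers
  have hsum : ∑ c ∈ W, #(univ.filter fun x : Fq => x ^ (t + 1) = c) = t ^ 2 := by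
    rw [← hq, ← Finset.card_univ,
      Finset.card_eq_sum_card_fiberwise (f := fun x : Fq => x ^ (t + 1)) (t := W)
        (fun x _ => by simp [hW, pow_fix t hq x])]
  have h0W : (0 : Fq) ∈ W := by simp [hW, zero_pow ht0]
  have h0 : #(univ.filter fun x : Fq => x ^ (t + 1) = (0 : Fq)) = 1 := by
    rw [Finset.card_eq_one]
    refine ⟨0, ?_⟩
    ext x
    simp [pow_eq_zero_iff (Nat.succ_ne_zero t)]
  -- every nonzero fiber over W has size exactly t+1
  have hsum' : (1 : ℕ) + ∑ c ∈ W.erase 0, #(univ.filter fun x : Fq => x ^ (t + 1) = c)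
      = t ^ 2 := by
    have h := Finset.add_sum_erase W
      (fun c => #(univ.filter fun x : Fq => x ^ (t + 1) = c)) h0W
    simp only [h0] at h
    rw [h, hsum]
  have hWe : #(W.erase 0) ≤ t - 1 := by
    rw [Finset.card_erase_of_mem h0W]; omega
  have hub : ∑ c ∈ W.erase 0, #(univ.filter fun x : Fq => x ^ (t + 1) = c)
      ≤ #(W.erase 0) * (t + 1) := by
    have := Finset.sum_le_card_nsmul (W.erase 0)
      (fun c => #(univ.filter fun x : Fq => x ^ (t + 1) = c)) (t + 1)
      (fun c _ => count_pow_le (t + 1) (Nat.succ_pos t) c)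
    simpa [smul_eq_mul] using this
  have hprod : #(W.erase 0) * (t + 1) ≤ (t - 1) * (t + 1) :=
    Nat.mul_le_mul_right _ hWe
  have hts : (t - 1) * (t + 1) + 1 = t ^ 2 := by
    obtain ⟨s, rfl⟩ : ∃ s, t = s + 2 := ⟨t - 2, by omega⟩
    simp [Nat.add_sub_cancel]
    ring
  have heq : ∑ c ∈ W.erase 0, #(univ.filter fun x : Fq => x ^ (t + 1) = c)
      = ∑ _c ∈ W.erase 0, (t + 1) := by
    rw [Finset.sum_const, smul_eq_mul]
    omega
  have hkey := (Finset.sum_eq_sum_iff_of_le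
    (fun c _ => count_pow_le (t + 1) (Nat.succ_pos t) c)).1 heq
  intro c hc
  by_cases hc0 : c = 0
  · rw [if_pos hc0, hc0]; exact h0
  · rw [if_neg hc0]
    exact hkey c (Finset.mem_erase.2 ⟨hc0, by simp [hW, hc]⟩)

lemma frob_sub (t : ℕ) (ht : 2 ≤ t) (hq : Fintype.card Fq = t ^ 2) (a b : Fq) :
    (a - b) ^ t = a ^ t - b ^ t := by
  have hp : (ringChar Fq).Prime := CharP.char_is_prime Fq _
  haveI : Fact (ringChar Fq).Prime := ⟨hp⟩
  obtain ⟨n, _, hcard⟩ := FiniteField.card Fq (ringChar Fq)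
  have hdvd : t ∣ ringChar Fq ^ (n : ℕ) := by
    rw [← hcard, hq]; exact dvd_pow_self t two_ne_zero
  obtain ⟨m, _, ht'⟩ := (Nat.dvd_prime_pow hp).1 hdvd
  rw [ht']
  exact sub_pow_char_pow ..

end Stmt10

/-- The non-singular Hermitian curve `x0^{t+1} + x1^{t+1} + x2^{t+1} = 0` in
`ℙ²(F_{t²})` has exactly `t³ + 1` points. -/
theorem stmt_10 (t : ℕ) (Fq : Type) [Field Fq] [Fintype Fq]
    (hq : Fintype.card Fq = t ^ 2) :
    Nat.card {x : Projectivization Fq (Fin 3 → Fq) |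
        ∑ i, x.rep i ^ (t + 1) = 0} = t ^ 3 + 1 := by
  classical
  have hcard2 : 1 < Fintype.card Fq := Fintype.one_lt_card
  have ht : 2 ≤ t := by
    by_contra h
    push_neg at h
    interval_cases t <;> simp_all
  -- closure properties of the set {a : a^t = a}
  have hsub := Stmt10.frob_sub (Fq := Fq) t ht hq
  have hneg : ∀ a : Fq, a ^ t = a → (-a) ^ t = -a := by
    intro a ha
    have h := hsub 0 a
    rw [zero_sub, ha, zero_pow (by omega : t ≠ 0), zero_sub] at h
    exact h
  have hadd : ∀ a b : Fq, a ^ t = a → b ^ t = b → (a + b) ^ t = a + b := by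
    intro a b ha hb
    have h := hsub a (-b)
    rw [sub_neg_eq_add, ha, hneg b hb, sub_neg_eq_add] at h
    exact h
  have hL1 := Stmt10.pow_fix (Fq := Fq) t hq
  have hcount := Stmt10.count_pow_eq (Fq := Fq) t ht hq
  -- fiber counts
  have hkey : ∀ a b : Fq,
      #(univ.filter fun x : Fq => x ^ (t + 1) = -(a ^ (t + 1) + b ^ (t + 1)))
        = if a ^ (t + 1) + b ^ (t + 1) = 0 then 1 else t + 1 := by
    intro a b
    have hmem : (-(a ^ (t + 1) + b ^ (t + 1))) ^ t = -(a ^ (t + 1) + b ^ (t + 1)) :=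
      hneg _ (hadd _ _ (hL1 a) (hL1 b))
    rw [hcount _ hmem, neg_eq_zero]
  -- the count A of pairs (y,z) with y^{t+1} + z^{t+1} = 0
  have hA2 : #(univ.filter fun yz : Fq × Fq => yz.1 ^ (t + 1) + yz.2 ^ (t + 1) = 0)
      = ∑ z : Fq, (if z = 0 then 1 else t + 1) := by
    rw [Finset.card_eq_sum_card_fiberwise (f := fun yz : Fq × Fq => yz.2)
      (t := univ) (fun _ _ => mem_univ _)]
    apply Finset.sum_congr rfl
    intro z _
    rw [Finset.filter_filter]
    have hbij : #(univ.filter fun yz : Fq × Fq =>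
          (yz.1 ^ (t + 1) + yz.2 ^ (t + 1) = 0) ∧ yz.2 = z)
        = #(univ.filter fun y : Fq => y ^ (t + 1) = -(z ^ (t + 1) + (0:Fq) ^ (t + 1))) := by
      apply Finset.card_nbij' (i := fun yz => yz.1) (j := fun y => (y, z))
      · intro a ha
        simp only [Finset.mem_coe, mem_filter, mem_univ, true_and] at ha ⊢
        obtain ⟨h1, h2⟩ := ha
        rw [zero_pow (Nat.succ_ne_zero t), add_zero]
        rw [h2] at h1
        linear_combination h1
      · intro y hy
        simp only [Finset.mem_coe, mem_filter, mem_univ, true_and] at hy ⊢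
        rw [zero_pow (Nat.succ_ne_zero t), add_zero] at hy
        exact ⟨by linear_combination hy, trivial⟩
      · intro a ha
        simp only [Finset.mem_coe, mem_filter, mem_univ, true_and] at ha
        exact Prod.ext rfl ha.2.symm
      · intro y _
        rfl
    rw [hbij, hkey z 0]
    rw [zero_pow (Nat.succ_ne_zero t), add_zero, pow_eq_zero_iff (Nat.succ_ne_zero t)]
  have hsumA2 : ∑ z : Fq, (if z = 0 then 1 else t + 1)
      = 1 + (Fintype.card Fq - 1) * (t + 1) := by
    have hc1 : #(univ.filter fun z : Fq => z = 0) = 1 := by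
      rw [Finset.card_eq_one]
      exact ⟨0, by ext x; simp⟩
    have hc2 : #(univ.filter fun z : Fq => z = 0) + #(univ.filter fun z : Fq => ¬z = 0)
        = Fintype.card Fq := by
      rw [Finset.card_filter_add_card_filter_not, Finset.card_univ]
    have hc3 : #(univ.filter fun z : Fq => ¬z = 0) = Fintype.card Fq - 1 := by omega
    rw [Finset.sum_ite, Finset.sum_const, Finset.sum_const, smul_eq_mul, smul_eq_mul,
      hc1, hc3]
  -- the full count N3
  have hN3 : #(univ.filter fun v : Fin 3 → Fq => ∑ i, v i ^ (t + 1) = 0)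
      = ∑ yz : Fq × Fq, (if yz.1 ^ (t + 1) + yz.2 ^ (t + 1) = 0 then 1 else t + 1) := by
    rw [Finset.card_eq_sum_card_fiberwise (f := fun v : Fin 3 → Fq => (v 1, v 2))
      (t := univ) (fun _ _ => mem_univ _)]
    apply Finset.sum_congr rfl
    intro yz _
    rw [Finset.filter_filter]
    have hbij : #(univ.filter fun v : Fin 3 → Fq =>
          (∑ i, v i ^ (t + 1) = 0) ∧ (v 1, v 2) = yz)
        = #(univ.filter fun x : Fq => x ^ (t + 1) = -(yz.1 ^ (t + 1) + yz.2 ^ (t + 1))) := by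
      apply Finset.card_nbij' (i := fun v => v 0) (j := fun x => ![x, yz.1, yz.2])
      · intro v hv
        simp only [Finset.mem_coe, mem_filter, mem_univ, true_and] at hv ⊢
        obtain ⟨h1, h2⟩ := hv
        rw [Fin.sum_univ_three] at h1
        have e1 : v 1 = yz.1 := congrArg Prod.fst h2
        have e2 : v 2 = yz.2 := congrArg Prod.snd h2
        rw [e1, e2] at h1
        linear_combination h1
      · intro x hx
        simp only [Finset.mem_coe, mem_filter, mem_univ, true_and] at hx ⊢
        constructor
        · rw [Fin.sum_univ_three]
          simp only [Matrix.cons_val_zero, Matrix.cons_val_one, Matrix.head_cons,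
            Matrix.cons_val_two, Matrix.tail_cons]
          linear_combination hx
        · simp
      · intro v hv
        simp only [Finset.mem_coe, mem_filter, mem_univ, true_and] at hv
        have e1 : v 1 = yz.1 := congrArg Prod.fst hv.2
        have e2 : v 2 = yz.2 := congrArg Prod.snd hv.2
        funext i
        fin_cases i <;> simp [e1.symm, e2.symm]
      · intro x _
        simp
    rw [hbij, hkey yz.1 yz.2]
  -- arithmetic: N3 value
  obtain ⟨A, hAdef⟩ : ∃ A : ℕ,
      #(univ.filter fun yz : Fq × Fq => yz.1 ^ (t + 1) + yz.2 ^ (t + 1) = 0) = A := ⟨_, rfl⟩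
  obtain ⟨B, hBdef⟩ : ∃ B : ℕ,
      #(univ.filter fun yz : Fq × Fq => ¬(yz.1 ^ (t + 1) + yz.2 ^ (t + 1) = 0)) = B := ⟨_, rfl⟩
  obtain ⟨N3, hN3def⟩ : ∃ N3 : ℕ,
      #(univ.filter fun v : Fin 3 → Fq => ∑ i, v i ^ (t + 1) = 0) = N3 := ⟨_, rfl⟩
  have hAB : A + B = t ^ 2 * t ^ 2 := by
    rw [← hAdef, ← hBdef, Finset.card_filter_add_card_filter_not, Finset.card_univ,
      Fintype.card_prod, hq]
  have hA : A + t = t ^ 3 + t ^ 2 := by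
    have hu : (Fintype.card Fq - 1) + 1 = t ^ 2 := by
      rw [Nat.sub_add_cancel (le_of_lt hcard2), hq]
    rw [← hAdef, hA2, hsumA2]
    have h1 : 1 + (Fintype.card Fq - 1) * (t + 1) + t
        = ((Fintype.card Fq - 1) + 1) * (t + 1) := by ring
    rw [h1, hu]
    ring
  have hN3val : N3 = A + B * (t + 1) := by
    rw [← hN3def, hN3, Finset.sum_ite, Finset.sum_const, Finset.sum_const, smul_eq_mul,
      smul_eq_mul, mul_one, hAdef, hBdef]
  have hN3Z : (N3 : ℤ) + t ^ 3 = ((t : ℤ) ^ 3 + 1) * t ^ 2 := by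
    have e1 : (A : ℤ) + B = (t : ℤ) ^ 2 * t ^ 2 := by exact_mod_cast hAB
    have e2 : (A : ℤ) + t = (t : ℤ) ^ 3 + t ^ 2 := by exact_mod_cast hA
    have e3 : (N3 : ℤ) = A + B * (t + 1) := by exact_mod_cast hN3val
    linear_combination e3 + ((t : ℤ) + 1) * e1 - ((t : ℤ) + 1) * e2 + e2
  -- relate N3 to the projective count
  set Sp := {x : Projectivization Fq (Fin 3 → Fq) | ∑ i, x.rep i ^ (t + 1) = 0} with hSpdef
  have hhom : ∀ (c : Fq) (v : Fin 3 → Fq),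
      ∑ i, (c • v) i ^ (t + 1) = c ^ (t + 1) * ∑ i, v i ^ (t + 1) := by
    intro c v
    rw [Finset.mul_sum]
    exact Finset.sum_congr rfl fun i _ => by simp [mul_pow]
  have hbijV : Nat.card (Sp × Fqˣ)
      = Nat.card {v : Fin 3 → Fq // v ≠ 0 ∧ ∑ i, v i ^ (t + 1) = 0} := by
    apply Nat.card_congr
    refine Equiv.ofBijective (fun xc => ⟨(xc.2 : Fq) • xc.1.1.rep, ?_, ?_⟩) ⟨?_, ?_⟩
    · exact smul_ne_zero (Units.ne_zero _) xc.1.1.rep_nonzero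
    · rw [hhom, xc.1.2, mul_zero]
    · rintro ⟨⟨x, hx⟩, c⟩ ⟨⟨y, hy⟩, d⟩ h
      simp only [Subtype.mk.injEq] at h
      have hxy : x = y := by
        conv_lhs => rw [← x.mk_rep]
        conv_rhs => rw [← y.mk_rep]
        rw [Projectivization.mk_eq_mk_iff]
        refine ⟨c⁻¹ * d, ?_⟩
        have : (↑(c⁻¹ * d) : Fq) • y.rep = (↑c⁻¹ : Fq) • ((d : Fq) • y.rep) := by
          rw [smul_smul]; push_cast; ring_nf
        rw [Units.smul_def, this, ← h, smul_smul]
        simp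
      subst hxy
      obtain ⟨i, hi⟩ : ∃ i, x.rep i ≠ 0 := by
        by_contra hcon
        push_neg at hcon
        exact x.rep_nonzero (funext hcon)
      have hcd : (c : Fq) = d := by
        have := congrFun h i
        simp only [Pi.smul_apply, smul_eq_mul] at this
        exact mul_right_cancel₀ hi this
      simp [Prod.ext_iff, Subtype.ext_iff, Units.ext_iff, hcd]
    · rintro ⟨v, hv0, hvP⟩
      set x := Projectivization.mk Fq v hv0 with hxdef
      obtain ⟨a, ha⟩ : ∃ a : Fqˣ, a • v = x.rep := by
        rw [← Projectivization.mk_eq_mk_iff Fq _ _ x.rep_nonzero hv0]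
        exact x.mk_rep
      have hx : ∑ i, x.rep i ^ (t + 1) = 0 := by
        rw [← ha, Units.smul_def, hhom, hvP, mul_zero]
      refine ⟨(⟨x, hx⟩, a⁻¹), ?_⟩
      apply Subtype.ext
      show (↑a⁻¹ : Fq) • x.rep = v
      rw [← ha, Units.smul_def, smul_smul]
      simp
  -- counting the subtype
  have hsubcount : Nat.card {v : Fin 3 → Fq // v ≠ 0 ∧ ∑ i, v i ^ (t + 1) = 0} + 1 = N3 := by
    rw [Nat.card_eq_fintype_card, Fintype.card_subtype, ← hN3def]
    have hzero : (0 : Fin 3 → Fq) ∈ univ.filter fun v : Fin 3 → Fq => ∑ i, v i ^ (t + 1) = 0 := by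
      simp [zero_pow (Nat.succ_ne_zero t)]
    have hfe : (univ.filter fun v : Fin 3 → Fq => v ≠ 0 ∧ ∑ i, v i ^ (t + 1) = 0)
        = (univ.filter fun v : Fin 3 → Fq => ∑ i, v i ^ (t + 1) = 0).erase 0 := by
      ext v
      simp only [mem_filter, mem_univ, true_and, Finset.mem_erase]
    rw [hfe, Finset.card_erase_add_one hzero]
  -- putting it together
  have hU : Nat.card Fqˣ + 1 = t ^ 2 := by
    rw [Nat.card_eq_fintype_card, Fintype.card_units,
      Nat.sub_add_cancel (le_of_lt hcard2), hq]
  have hprod : Nat.card Sp * Nat.card Fqˣ + 1 = N3 := by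
    rw [← Nat.card_prod, hbijV, hsubcount]
  have hNVeq : Nat.card Sp * Nat.card Fqˣ = (t ^ 3 + 1) * Nat.card Fqˣ := by
    have e1 : (Nat.card Sp * Nat.card Fqˣ : ℤ) + 1 = (N3 : ℤ) := by exact_mod_cast hprod
    have e3 : (Nat.card Fqˣ : ℤ) + 1 = (t : ℤ) ^ 2 := by exact_mod_cast hU
    have : (Nat.card Sp * Nat.card Fqˣ : ℤ) = ((t : ℤ) ^ 3 + 1) * (Nat.card Fqˣ : ℤ) := by
      linear_combination e1 + hN3Z - ((t : ℤ) ^ 3 + 1) * e3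
    exact_mod_cast this
  have hUpos : 0 < Nat.card Fqˣ := Nat.card_pos
  exact Nat.eq_of_mul_eq_mul_right hUpos hNVeq
end

section
/- Any nonzero homogeneous polynomial f of degree h ≤ q in m+1 variables over F_q has at most h·q^{m-1} + q^{m-2} + ... + q + 1 projective zeros in P^m(F_q). -/
set_option linter.unusedSectionVars false
set_option maxHeartbeats 1000000
open MvPolynomial Finset


open MvPolynomial Finset

section Counting
variable {α β : Type*} [Fintype α] [Fintype β]

lemma myNatCard_eq_card_filter (P : α → Prop) [DecidablePred P] :
    Nat.card {x // P x} = (univ.filter P).card := by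
  rw [Nat.card_eq_fintype_card, Fintype.card_subtype]

lemma myNatCard_mono (P Q : α → Prop) (h : ∀ x, P x → Q x) :
    Nat.card {x // P x} ≤ Nat.card {x // Q x} := by
  classical
  rw [myNatCard_eq_card_filter, myNatCard_eq_card_filter]
  exact Finset.card_le_card (fun x hx => by
    simp only [mem_filter, mem_univ, true_and] at hx ⊢; exact h x hx)

lemma myNatCard_fiber_sum (P : α → Prop) (g : α → β) :
    Nat.card {x // P x} = ∑ b : β, Nat.card {x // P x ∧ g x = b} := by
  classical
  rw [myNatCard_eq_card_filter]
  rw [Finset.card_eq_sum_card_fiberwise (f := g) (t := univ) (fun x _ => mem_univ _)]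
  refine Finset.sum_congr rfl fun b _ => ?_
  rw [myNatCard_eq_card_filter, Finset.filter_filter]

lemma myNatCard_fst_fiber (P : α → β → Prop) (a : α) :
    Nat.card {x : α × β // (fun p : α × β => P p.1 p.2) x ∧ x.1 = a} = Nat.card {b // P a b} := by
  apply Nat.card_congr
  refine ⟨fun p => ⟨p.1.2, by rcases p with ⟨⟨a', b⟩, hP, h1⟩; subst h1; exact hP⟩,
          fun b => ⟨⟨a, b.1⟩, b.2, rfl⟩, ?_, ?_⟩
  · rintro ⟨⟨a', b⟩, hP, rfl⟩; rfl
  · rintro ⟨b, hb⟩; rfl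

lemma myNatCard_snd_fiber (P : α → β → Prop) (b : β) :
    Nat.card {x : α × β // (fun p : α × β => P p.1 p.2) x ∧ x.2 = b} = Nat.card {a // P a b} := by
  apply Nat.card_congr
  refine ⟨fun p => ⟨p.1.1, by rcases p with ⟨⟨a, b'⟩, hP, h1⟩; subst h1; exact hP⟩,
          fun a => ⟨⟨a.1, b⟩, a.2, rfl⟩, ?_, ?_⟩
  · rintro ⟨⟨a, b'⟩, hP, rfl⟩; rfl
  · rintro ⟨a, ha⟩; rfl

lemma myNatCard_double (P : α → β → Prop) :
    ∑ a : α, Nat.card {b // P a b} = ∑ b : β, Nat.card {a // P a b} := by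
  classical
  have h1 := myNatCard_fiber_sum (fun p : α × β => P p.1 p.2) Prod.fst
  have h2 := myNatCard_fiber_sum (fun p : α × β => P p.1 p.2) Prod.snd
  simp only [myNatCard_fst_fiber] at h1
  simp only [myNatCard_snd_fiber] at h2
  rw [← h1, h2]

lemma myNatCard_le (P : α → Prop) : Nat.card {x // P x} ≤ Fintype.card α := by
  classical
  rw [myNatCard_eq_card_filter]
  exact le_trans (Finset.card_filter_le _ _) (le_of_eq Finset.card_univ)
end Counting

lemma myGeom (q k : ℕ) (hq : 1 ≤ q) :
    (∑ i ∈ Finset.range k, q ^ i) * (q - 1) + 1 = q ^ k := by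
  induction k with
  | zero => simp
  | succ k ih =>
    rw [Finset.sum_range_succ, add_mul, pow_succ]
    have h1 : q ^ k * (q - 1) + q ^ k = q ^ k * q := by
      rw [← Nat.mul_succ, Nat.succ_eq_add_one, Nat.sub_add_cancel hq]
    omega

section Poly
variable {Fq : Type} [Field Fq] [Fintype Fq]

lemma myEvalSmul {k : ℕ} {f : MvPolynomial (Fin k) Fq} {d : ℕ}
    (hf : f.IsHomogeneous d) (c : Fq) (x : Fin k → Fq) :
    eval (c • x) f = c ^ d * eval x f := by
  rw [eval_eq', eval_eq', Finset.mul_sum]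
  refine Finset.sum_congr rfl fun m hm => ?_
  have hdeg : ∑ i, m i = d := by
    have := hf (mem_support_iff.mp hm)
    rw [Finsupp.weight_apply] at this
    simp only [Finsupp.sum, Pi.one_apply, smul_eq_mul, mul_one] at this
    rw [← this]
    exact (Finset.sum_subset (Finset.subset_univ _) (fun i _ hi => by
      simpa using Finsupp.notMem_support_iff.mp hi)).symm
  have : ∏ i, (c • x) i ^ m i = c ^ d * ∏ i, x i ^ m i := by
    simp only [Pi.smul_apply, smul_eq_mul, mul_pow]
    rw [Finset.prod_mul_distrib, Finset.prod_pow_eq_pow_sum, hdeg]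
  rw [this]; ring

/-- the linear form with coefficient vector `a` -/
noncomputable def linf'' {k : ℕ} (a : Fin k → Fq) : MvPolynomial (Fin k) Fq :=
  ∑ i, C (a i) * X i

lemma eval_linf'' {k : ℕ} (a x : Fin k → Fq) :
    eval x (linf'' a) = ∑ i, a i * x i := by
  simp [linf'']

lemma linf''_isHomogeneous {k : ℕ} (a : Fin k → Fq) : (linf'' a).IsHomogeneous 1 :=
  IsHomogeneous.sum _ _ _ fun i _ => isHomogeneous_C_mul_X (a i) i

lemma coeff_single_linf'' {k : ℕ} (a : Fin k → Fq) (i : Fin k) :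
    coeff (Finsupp.single i 1) (linf'' a) = a i := by
  classical
  rw [linf'', coeff_sum]
  rw [Finset.sum_eq_single i]
  · simp [coeff_C_mul, coeff_X']
  · intro j _ hji
    have hs : (Finsupp.single j 1 = Finsupp.single i 1) ↔ j = i :=
      Finsupp.single_left_inj one_ne_zero
    simp [coeff_C_mul, coeff_X', hs, hji]
  · exact fun h => absurd (Finset.mem_univ i) h

lemma linf''_ne_zero {k : ℕ} {a : Fin k → Fq} (ha : a ≠ 0) : (linf'' a : MvPolynomial (Fin k) Fq) ≠ 0 := by
  intro h
  apply ha
  funext i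
  have := coeff_single_linf'' a i
  rw [h] at this
  simpa using this.symm

lemma rename_linf'' {k : ℕ} (e : Fin k ≃ Fin k) (a : Fin k → Fq) :
    rename e (linf'' a) = linf'' (a ∘ e.symm) := by
  simp only [linf'', map_sum, map_mul, rename_C, rename_X]
  rw [← Equiv.sum_comp e (fun i => C ((a ∘ e.symm) i) * X i)]
  exact Finset.sum_congr rfl fun i _ => by simp

end Poly

section PolyAll
variable {Fq : Type} [Field Fq] [Fintype Fq]

lemma eval_bind₁' {k l : ℕ} (g : Fin k → MvPolynomial (Fin l) Fq) (y : Fin l → Fq)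
    (p : MvPolynomial (Fin k) Fq) :
    eval y (bind₁ g p) = eval (fun i => eval y (g i)) p :=
  eval₂Hom_bind₁ (RingHom.id Fq) y g p

noncomputable def shG {k : ℕ} (a : Fin (k + 1) → Fq) : Fin (k + 1) → MvPolynomial (Fin (k + 1)) Fq :=
  Fin.cons (linf'' a) (fun i => X i.succ)

noncomputable def shInv {k : ℕ} (a : Fin (k + 1) → Fq) : Fin (k + 1) → Fq :=
  Fin.cons (a 0)⁻¹ (fun i => -((a 0)⁻¹ * a i.succ))

@[simp] lemma shG_zero {k : ℕ} (a : Fin (k + 1) → Fq) : shG a 0 = linf'' a := rfl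
@[simp] lemma shG_succ {k : ℕ} (a : Fin (k + 1) → Fq) (i : Fin k) : shG a i.succ = X i.succ :=
  Fin.cons_succ _ _ _
@[simp] lemma shInv_zero {k : ℕ} (a : Fin (k + 1) → Fq) : shInv a 0 = (a 0)⁻¹ := rfl
@[simp] lemma shInv_succ {k : ℕ} (a : Fin (k + 1) → Fq) (i : Fin k) :
    shInv a i.succ = -((a 0)⁻¹ * a i.succ) := Fin.cons_succ _ _ _

lemma shInv_ne_zero {k : ℕ} (a : Fin (k + 1) → Fq) (ha : a 0 ≠ 0) : shInv a 0 ≠ 0 := by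
  simpa using inv_ne_zero ha

lemma shInv_shInv {k : ℕ} (a : Fin (k + 1) → Fq) (ha : a 0 ≠ 0) : shInv (shInv a) = a := by
  funext i
  induction i using Fin.cases with
  | zero => simp
  | succ i =>
    rw [shInv_succ, shInv_zero, shInv_succ]
    field_simp

lemma bind_shG_linf {k : ℕ} (a : Fin (k + 1) → Fq) (ha : a 0 ≠ 0) :
    bind₁ (shG (shInv a)) (linf'' a) = X 0 := by
  rw [linf'', map_sum]
  simp only [map_mul, bind₁_C_right, bind₁_X_right]
  rw [Fin.sum_univ_succ]
  simp only [shG_zero, shG_succ]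
  rw [linf'', Finset.mul_sum, Fin.sum_univ_succ]
  simp only [shInv_zero, shInv_succ]
  have h2 : ∀ i : Fin k,
      C (a 0) * (C (-((a 0)⁻¹ * a i.succ)) * X i.succ) = -(C (a i.succ) * X i.succ) := by
    intro i
    rw [← mul_assoc, ← map_mul, mul_neg, ← mul_assoc, mul_inv_cancel₀ ha, one_mul]
    simp
  simp only [h2]
  rw [Finset.sum_neg_distrib, add_assoc, neg_add_cancel, add_zero,
    ← mul_assoc, ← map_mul, mul_inv_cancel₀ ha, map_one, one_mul]

lemma bind_shG_shG {k : ℕ} (a : Fin (k + 1) → Fq) (ha : a 0 ≠ 0) (i : Fin (k + 1)) :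
    bind₁ (shG (shInv a)) (shG a i) = X i := by
  induction i using Fin.cases with
  | zero => rw [shG_zero]; exact bind_shG_linf a ha
  | succ i => rw [shG_succ, bind₁_X_right, shG_succ]

lemma bind_shG_comp {k : ℕ} (a : Fin (k + 1) → Fq) (ha : a 0 ≠ 0)
    (p : MvPolynomial (Fin (k + 1)) Fq) :
    bind₁ (shG (shInv a)) (bind₁ (shG a) p) = p := by
  rw [bind₁_bind₁]
  have : (fun i => bind₁ (shG (shInv a)) (shG a i)) = X := by
    funext i; exact bind_shG_shG a ha i
  rw [this]
  exact congrFun (congrArg DFunLike.coe bind₁_X_left) p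

lemma shG_isHomogeneous {k : ℕ} (a : Fin (k + 1) → Fq) (i : Fin (k + 1)) :
    (shG a i).IsHomogeneous 1 := by
  induction i using Fin.cases with
  | zero =>
    rw [shG_zero, linf'']
    exact IsHomogeneous.sum _ _ _ fun i _ => isHomogeneous_C_mul_X (a i) i
  | succ i => rw [shG_succ]; exact isHomogeneous_X _ _


/-- Coordinate change normalizing a nonzero linear form to the coordinate `y 0`. -/
lemma change {k : ℕ} (a : Fin (k + 1) → Fq) (ha : a ≠ 0) :
    ∃ (T : MvPolynomial (Fin (k + 1)) Fq → MvPolynomial (Fin (k + 1)) Fq)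
      (e : (Fin (k + 1) → Fq) ≃ (Fin (k + 1) → Fq)),
      (∀ p y, eval y (T p) = eval (e y) p) ∧
      (∀ y, ∑ i, a i * e y i = y 0) ∧
      (∀ p, T p = 0 ↔ p = 0) ∧
      (∀ p d, p.IsHomogeneous d → (T p).IsHomogeneous d) ∧
      (∀ p, X 0 ∣ T p ↔ linf'' a ∣ p) ∧
      (e 0 = 0) := by
  -- pivot
  obtain ⟨j, hj⟩ : ∃ j, a j ≠ 0 := by
    by_contra h; push_neg at h; exact ha (funext h)
  set e₀ : Fin (k + 1) ≃ Fin (k + 1) := Equiv.swap 0 j with he₀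
  have he₀symm : e₀.symm = e₀ := Equiv.symm_swap 0 j
  have he₀invol : ∀ i, e₀ (e₀ i) = i := fun i => Equiv.swap_apply_self 0 j i
  set a₁ : Fin (k + 1) → Fq := a ∘ e₀ with ha₁
  have ha₁0 : a₁ 0 ≠ 0 := by
    simpa [ha₁, he₀, Equiv.swap_apply_left] using hj
  set b : Fin (k + 1) → Fq := shInv a₁ with hb
  have hb0 : shInv b = a₁ := shInv_shInv a₁ ha₁0
  have hbne : b 0 ≠ 0 := by rw [hb, shInv_zero]; exact inv_ne_zero ha₁0
  -- point maps
  set σ : (Fin (k + 1) → Fq) → (Fin (k + 1) → Fq) → (Fin (k + 1) → Fq) :=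
    fun c y => fun i => eval y (shG c i) with hσ
  have hσeval : ∀ c y p, eval y (bind₁ (shG c) p) = eval (σ c y) p := by
    intro c y p; rw [eval_bind₁']
  have hσba : ∀ y, σ a₁ (σ b y) = y := by
    intro y; funext i
    have : σ a₁ (σ b y) i = eval y (bind₁ (shG b) (shG a₁ i)) := by
      rw [hσeval]
    rw [this, hb, bind_shG_shG a₁ ha₁0, eval_X]
  have hσab : ∀ y, σ b (σ a₁ y) = y := by
    intro y; funext i
    have : σ b (σ a₁ y) i = eval y (bind₁ (shG a₁) (shG b i)) := by
      rw [hσeval]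
    rw [this, ← hb0, hb, bind_shG_shG b hbne, eval_X]
  set e : (Fin (k + 1) → Fq) ≃ (Fin (k + 1) → Fq) :=
    { toFun := fun y => (σ b y) ∘ e₀
      invFun := fun x => σ a₁ (x ∘ e₀)
      left_inv := fun y => by
        show σ a₁ ((σ b y ∘ ⇑e₀) ∘ ⇑e₀) = y
        have h : (σ b y ∘ ⇑e₀) ∘ ⇑e₀ = σ b y := by
          funext i; simp only [Function.comp_apply]; rw [he₀invol]
        rw [h, hσba]
      right_inv := fun x => by
        show σ b (σ a₁ (x ∘ ⇑e₀)) ∘ ⇑e₀ = x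
        rw [hσab]
        funext i; simp only [Function.comp_apply]; rw [he₀invol] } with he
  set T : MvPolynomial (Fin (k + 1)) Fq → MvPolynomial (Fin (k + 1)) Fq :=
    fun p => bind₁ (shG b) (rename e₀ p) with hT
  set Tback : MvPolynomial (Fin (k + 1)) Fq → MvPolynomial (Fin (k + 1)) Fq :=
    fun p => rename e₀ (bind₁ (shG a₁) p) with hTback
  have hTT : ∀ p, Tback (T p) = p := by
    intro p
    rw [hT, hTback]
    simp only []
    have h1 : bind₁ (shG a₁) (bind₁ (shG b) (rename e₀ p)) = rename e₀ p := by
      have := bind_shG_comp b hbne (rename e₀ p)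
      rwa [hb0] at this
    rw [h1, rename_rename]
    have : (⇑e₀ ∘ ⇑e₀) = id := funext he₀invol
    rw [this, rename_id, AlgHom.id_apply]
  have hTT' : ∀ p, T (Tback p) = p := by
    intro p
    rw [hT, hTback]
    simp only []
    rw [rename_rename]
    have : (⇑e₀ ∘ ⇑e₀) = id := funext he₀invol
    rw [this, rename_id, hb]
    exact bind_shG_comp a₁ ha₁0 p
  refine ⟨T, e, ?_, ?_, ?_, ?_, ?_, ?_⟩
  · intro p y
    rw [hT]; simp only []
    rw [hσeval, eval_rename]
    rfl
  · intro y
    have hsum : ∑ i, a i * (σ b y) (e₀ i) = ∑ i, a (e₀ i) * (σ b y) i := by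
      rw [← Equiv.sum_comp e₀ (fun i => a (e₀ i) * (σ b y) i)]
      exact Finset.sum_congr rfl fun i _ => by rw [he₀invol]
    have h2 : ∑ i, a₁ i * (σ b y) i = σ a₁ (σ b y) 0 := by
      rw [hσ]; simp only []
      rw [shG_zero, eval_linf'']
    calc ∑ i, a i * e y i = ∑ i, a (e₀ i) * (σ b y) i := hsum
      _ = σ a₁ (σ b y) 0 := h2
      _ = y 0 := by rw [hσba]
  · intro p
    constructor
    · intro h
      have := hTT p
      rw [h] at this
      rw [← this, hTback]; simp only []
      rw [map_zero, map_zero]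
    · intro h; rw [h, hT]; simp only []; rw [map_zero, map_zero]
  · intro p d hp
    rw [hT]; simp only []
    have h1 : (rename e₀ p).IsHomogeneous d := hp.rename_isHomogeneous
    have := h1.aeval (shG b) (fun i => shG_isHomogeneous b i)
    rw [aeval_eq_bind₁] at this
    simpa using this
  · intro p
    constructor
    · rintro ⟨u, hu⟩
      refine ⟨Tback u, ?_⟩
      have := hTT p
      rw [hu] at this
      rw [← this, hTback]; simp only []
      rw [map_mul, map_mul]
      congr 1
      rw [bind₁_X_right, shG_zero, rename_linf'', he₀symm]
      have : (a₁ ∘ ⇑e₀) = a := by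
        funext i; simp only [ha₁, Function.comp_apply]; rw [he₀invol]
      rw [this]
    · rintro ⟨u, hu⟩
      refine ⟨T u, ?_⟩
      rw [hu, hT]; simp only []
      rw [map_mul, map_mul]
      congr 1
      rw [rename_linf'', he₀symm, hb]
      have : (a ∘ ⇑e₀) = a₁ := rfl
      rw [this, bind_shG_linf a₁ ha₁0]
  · rw [he]; simp only [Equiv.coe_fn_mk]
    funext i
    simp only [Function.comp]
    rw [hσ]; simp only []
    have h0 : eval (0 : Fin (k+1) → Fq) (shG b (e₀ i)) = 0 := by
      have := myEvalSmul (shG_isHomogeneous b (e₀ i)) 0 0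
      simpa using this
    exact h0

/-- restriction to the hyperplane `x 0 = 0` -/
noncomputable def res {k : ℕ} (p : MvPolynomial (Fin (k + 1)) Fq) : MvPolynomial (Fin k) Fq :=
  ((finSuccEquiv Fq k) p).coeff 0

lemma eval_res {k : ℕ} (p : MvPolynomial (Fin (k + 1)) Fq) (z : Fin k → Fq) :
    eval z (res p) = eval (Fin.cons 0 z) p := by
  rw [eval_eq_eval_mv_eval', ← Polynomial.coeff_zero_eq_eval_zero, Polynomial.coeff_map, res]

lemma res_isHomogeneous {k : ℕ} {p : MvPolynomial (Fin (k + 1)) Fq} {d : ℕ}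
    (hp : p.IsHomogeneous d) : (res p).IsHomogeneous d :=
  hp.finSuccEquiv_coeff_isHomogeneous 0 d (zero_add d)

lemma res_eq_zero_iff {k : ℕ} (p : MvPolynomial (Fin (k + 1)) Fq) :
    res p = 0 ↔ (X 0 : MvPolynomial (Fin (k + 1)) Fq) ∣ p := by
  rw [res, ← Polynomial.X_dvd_iff]
  constructor
  · rintro ⟨G, hG⟩
    refine ⟨(finSuccEquiv Fq k).symm G, ?_⟩
    apply (finSuccEquiv Fq k).injective
    rw [map_mul, hG, finSuccEquiv_X_zero, AlgEquiv.apply_symm_apply]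
  · rintro ⟨u, hu⟩
    refine ⟨finSuccEquiv Fq k u, ?_⟩
    rw [hu, map_mul, finSuccEquiv_X_zero]

/-- dehomogenization: substitute `x 0 = 1` -/
noncomputable def deh {k : ℕ} (p : MvPolynomial (Fin (k + 1)) Fq) : MvPolynomial (Fin k) Fq :=
  Polynomial.eval (1 : MvPolynomial (Fin k) Fq) ((finSuccEquiv Fq k) p)

lemma eval_deh {k : ℕ} (p : MvPolynomial (Fin (k + 1)) Fq) (z : Fin k → Fq) :
    eval z (deh p) = eval (Fin.cons 1 z) p := by
  rw [eval_eq_eval_mv_eval', deh, Polynomial.eval_one_map]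

lemma deh_totalDegree {k : ℕ} (p : MvPolynomial (Fin (k + 1)) Fq) :
    (deh p).totalDegree ≤ p.totalDegree := by
  rw [deh, Polynomial.eval_eq_sum_range]
  simp_rw [one_pow, mul_one]
  refine le_trans (totalDegree_finset_sum _ _) ?_
  refine Finset.sup_le fun i _ => ?_
  by_cases h : ((finSuccEquiv Fq k) p).coeff i = 0
  · rw [h]; simp
  · exact le_trans (Nat.le_add_right _ i) (totalDegree_coeff_finSuccEquiv_add_le p i h)

lemma deh_ne_zero {k : ℕ} {p : MvPolynomial (Fin (k + 1)) Fq} {s : ℕ}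
    (hp : p.IsHomogeneous s) (hpne : p ≠ 0) : deh p ≠ 0 := by
  intro h0
  apply hpne
  set F := (finSuccEquiv Fq k) p with hF
  have hFcoeff : ∀ i, F.coeff i = 0 := by
    intro i₀
    by_cases hne : F.coeff i₀ = 0
    · exact hne
    have hi₀s : i₀ ≤ s := by
      have := totalDegree_coeff_finSuccEquiv_add_le p i₀ hne
      have h2 := hp.totalDegree_le
      omega
    have hexp : deh p = ∑ i ∈ Finset.range (F.natDegree + 1), F.coeff i := by
      rw [deh, Polynomial.eval_eq_sum_range]
      simp_rw [one_pow, mul_one]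
      rfl
    have hcomp : (homogeneousComponent (s - i₀)) (deh p) = F.coeff i₀ := by
      rw [hexp, map_sum]
      rw [Finset.sum_eq_single i₀]
      · have : (F.coeff i₀).IsHomogeneous (s - i₀) :=
          hp.finSuccEquiv_coeff_isHomogeneous i₀ (s - i₀) (by omega)
        rw [homogeneousComponent_of_mem this, if_pos rfl]
      · intro i _ hii₀
        by_cases hci : F.coeff i = 0
        · rw [hci, map_zero]
        · have his : i ≤ s := by
            have := totalDegree_coeff_finSuccEquiv_add_le p i hci
            have h2 := hp.totalDegree_le
            omega
          have : (F.coeff i).IsHomogeneous (s - i) :=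
            hp.finSuccEquiv_coeff_isHomogeneous i (s - i) (by omega)
          rw [homogeneousComponent_of_mem this, if_neg (by omega)]
      · intro hnotmem
        exact absurd (Finset.mem_range.mpr (by
          by_contra hgt
          push_neg at hgt
          exact hne (Polynomial.coeff_eq_zero_of_natDegree_lt (by omega)))) hnotmem
    rw [h0, map_zero] at hcomp
    exact hcomp.symm
  have : F = 0 := Polynomial.ext fun i => by rw [hFcoeff i, Polynomial.coeff_zero]
  have := congrArg (finSuccEquiv Fq k).symm this
  rwa [AlgEquiv.symm_apply_apply, map_zero] at this

lemma divisor_homog {k : ℕ} {f l u : MvPolynomial (Fin k) Fq} {d : ℕ}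
    (hf : f.IsHomogeneous (d + 1)) (hl : l.IsHomogeneous 1) (hlne : l ≠ 0)
    (hfu : f = l * u) : u.IsHomogeneous d := by
  classical
  have hzero : ∀ j, j ≠ d → homogeneousComponent j u = 0 := by
    intro j₀ hj₀
    have hdecomp : u = ∑ j ∈ Finset.range (u.totalDegree + 1), homogeneousComponent j u :=
      (sum_homogeneousComponent u).symm
    have hcomp : homogeneousComponent (j₀ + 1) f = l * homogeneousComponent j₀ u := by
      conv_lhs => rw [hfu, hdecomp, Finset.mul_sum, map_sum]
      rw [Finset.sum_eq_single j₀]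
      · have : (l * homogeneousComponent j₀ u).IsHomogeneous (1 + j₀) :=
          hl.mul (homogeneousComponent_isHomogeneous j₀ u)
        rw [homogeneousComponent_of_mem this, if_pos (by omega)]
      · intro j _ hjj₀
        have : (l * homogeneousComponent j u).IsHomogeneous (1 + j) :=
          hl.mul (homogeneousComponent_isHomogeneous j u)
        rw [homogeneousComponent_of_mem this, if_neg (by omega)]
      · intro hnm
        by_cases hc : homogeneousComponent j₀ u = 0
        · rw [hc, mul_zero, map_zero]
        · exfalso
          apply hnm
          rw [Finset.mem_range]
          by_contra hgt
          push_neg at hgt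
          exact hc (homogeneousComponent_eq_zero _ u (by omega))
    have hfz : homogeneousComponent (j₀ + 1) f = 0 := by
      rw [homogeneousComponent_of_mem hf, if_neg (by omega)]
    rw [hfz] at hcomp
    rcases mul_eq_zero.mp hcomp.symm with h | h
    · exact absurd h hlne
    · exact h
  have hdecomp : u = ∑ j ∈ Finset.range (u.totalDegree + 1), homogeneousComponent j u :=
    (sum_homogeneousComponent u).symm
  by_cases hd : d ∈ Finset.range (u.totalDegree + 1)
  · have hsum : (∑ j ∈ Finset.range (u.totalDegree + 1), homogeneousComponent j u)
        = homogeneousComponent d u :=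
      Finset.sum_eq_single d (fun j _ hjd => hzero j hjd) (fun h => absurd hd h)
    have hu : u = homogeneousComponent d u := by
      conv_lhs => rw [hdecomp]
      exact hsum
    rw [hu]
    exact homogeneousComponent_isHomogeneous d u
  · have : u = 0 := by
      rw [hdecomp]
      apply Finset.sum_eq_zero
      intro j hj
      exact hzero j (fun hjd => hd (hjd ▸ hj))
    rw [this]
    exact isHomogeneous_zero _ _ _

lemma finSuccEquiv_ne_zero' {k : ℕ} {f : MvPolynomial (Fin (k + 1)) Fq} (hf : f ≠ 0) :
    (finSuccEquiv Fq k) f ≠ 0 := fun h =>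
  hf (by have := congrArg (finSuccEquiv Fq k).symm h
         rwa [AlgEquiv.symm_apply_apply, map_zero] at this)

lemma SZ_slice {k : ℕ} (f : MvPolynomial (Fin (k + 1)) Fq) (z : Fin k → Fq) :
    Nat.card {x : Fin (k + 1) → Fq // eval x f = 0 ∧ Fin.tail x = z} =
      Nat.card {c : Fq //
        Polynomial.eval c (Polynomial.map (eval z) ((finSuccEquiv Fq k) f)) = 0} := by
  apply Nat.card_congr
  refine ⟨fun x => ⟨x.1 0, ?_⟩, fun c => ⟨Fin.cons c.1 z, ?_, Fin.tail_cons _ _⟩, ?_, ?_⟩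
  · obtain ⟨x, hx, hz⟩ := x
    subst hz
    show Polynomial.eval (x 0) _ = 0
    rw [← eval_eq_eval_mv_eval', Fin.cons_self_tail]
    exact hx
  · rw [eval_eq_eval_mv_eval']
    exact c.2
  · rintro ⟨x, hx, hz⟩
    apply Subtype.ext
    simp only []
    rw [← hz, Fin.cons_self_tail]
  · rintro ⟨c, hc⟩; rfl

lemma SZ_root_bound {k : ℕ} (F : Polynomial (MvPolynomial (Fin k) Fq)) (z : Fin k → Fq)
    (h : eval z F.leadingCoeff ≠ 0) :
    Nat.card {c : Fq // Polynomial.eval c (Polynomial.map (eval z) F) = 0} ≤ F.natDegree := by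
  classical
  set Pz := Polynomial.map (eval z) F with hPz
  have hPzne : Pz ≠ 0 := fun h0 => by
    have : Pz.coeff F.natDegree = 0 := by rw [h0, Polynomial.coeff_zero]
    rw [hPz, Polynomial.coeff_map] at this
    exact h this
  rw [myNatCard_eq_card_filter]
  have hsub : univ.filter (fun c => Polynomial.eval c Pz = 0) ⊆ Pz.roots.toFinset := by
    intro c hc
    rw [Multiset.mem_toFinset, Polynomial.mem_roots']
    exact ⟨hPzne, (Finset.mem_filter.mp hc).2⟩
  calc (univ.filter (fun c => Polynomial.eval c Pz = 0)).card
      ≤ Pz.roots.toFinset.card := Finset.card_le_card hsub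
    _ ≤ Multiset.card Pz.roots := Multiset.toFinset_card_le _
    _ ≤ Pz.natDegree := Polynomial.card_roots' Pz
    _ ≤ F.natDegree := Polynomial.natDegree_map_le

lemma SZ_split {k : ℕ} (f : MvPolynomial (Fin (k + 1)) Fq) :
    Nat.card {x : Fin (k + 1) → Fq // eval x f = 0} ≤
      (Fintype.card Fq) ^ k * ((finSuccEquiv Fq k) f).natDegree +
      (Fintype.card Fq) *
        Nat.card {z : Fin k → Fq // eval z ((finSuccEquiv Fq k) f).leadingCoeff = 0} := by
  classical
  set F := (finSuccEquiv Fq k) f with hF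
  set d := F.natDegree with hd
  set L := F.leadingCoeff with hL
  rw [myNatCard_fiber_sum (fun x => eval x f = 0) Fin.tail]
  have hbound : ∀ z : Fin k → Fq,
      Nat.card {x : Fin (k + 1) → Fq // eval x f = 0 ∧ Fin.tail x = z} ≤
        d + (if eval z L = 0 then Fintype.card Fq else 0) := by
    intro z
    rw [SZ_slice]
    by_cases hz : eval z L = 0
    · rw [if_pos hz]
      exact le_trans (myNatCard_le _) (by omega)
    · rw [if_neg hz, add_zero]
      exact SZ_root_bound F z hz
  calc ∑ z : Fin k → Fq, Nat.card {x : Fin (k + 1) → Fq // eval x f = 0 ∧ Fin.tail x = z}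
      ≤ ∑ z : Fin k → Fq, (d + (if eval z L = 0 then Fintype.card Fq else 0)) :=
        Finset.sum_le_sum fun z _ => hbound z
    _ = (Fintype.card Fq) ^ k * d +
        (univ.filter (fun z => eval z L = 0)).card * Fintype.card Fq := by
        rw [Finset.sum_add_distrib, Finset.sum_const, ← Finset.sum_filter, Finset.sum_const]
        simp [Fintype.card_fun, mul_comm, Fintype.card_pi]
    _ = _ := by
        rw [myNatCard_eq_card_filter (fun z => eval z L = 0)]
        ring

lemma SZ : ∀ (k : ℕ) (f : MvPolynomial (Fin (k + 1)) Fq), f ≠ 0 →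
    Nat.card {x : Fin (k + 1) → Fq // eval x f = 0} ≤
      f.totalDegree * (Fintype.card Fq) ^ k := by
  intro k
  induction k with
  | zero =>
    intro f hf
    have hFne := finSuccEquiv_ne_zero' hf
    set F := (finSuccEquiv Fq 0) f with hF
    have hLne : F.leadingCoeff ≠ 0 := Polynomial.leadingCoeff_ne_zero.mpr hFne
    have hdD : F.natDegree ≤ f.totalDegree := by
      have := totalDegree_coeff_finSuccEquiv_add_le f F.natDegree
        (by rwa [← Polynomial.leadingCoeff])
      omega
    have hbad : Nat.card {z : Fin 0 → Fq // eval z F.leadingCoeff = 0} = 0 := by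
      obtain ⟨c, hc⟩ := MvPolynomial.C_surjective (Fin 0) F.leadingCoeff
      have hcne : c ≠ 0 := fun h => hLne (by rw [← hc, h, map_zero])
      have : IsEmpty {z : Fin 0 → Fq // eval z F.leadingCoeff = 0} := by
        constructor
        rintro ⟨z, hz⟩
        rw [← hc, eval_C] at hz
        exact hcne hz
      exact Nat.card_of_isEmpty
    have := SZ_split (Fq := Fq) f
    rw [← hF, hbad, mul_zero, add_zero, pow_zero, one_mul] at this
    calc Nat.card {x : Fin 1 → Fq // eval x f = 0} ≤ F.natDegree := this
      _ ≤ f.totalDegree * (Fintype.card Fq) ^ 0 := by rw [pow_zero, mul_one]; exact hdD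
  | succ k ih =>
    intro f hf
    have hFne := finSuccEquiv_ne_zero' hf
    set F := (finSuccEquiv Fq (k + 1)) f with hF
    have hLne : F.leadingCoeff ≠ 0 := Polynomial.leadingCoeff_ne_zero.mpr hFne
    have hsum : F.leadingCoeff.totalDegree + F.natDegree ≤ f.totalDegree := by
      exact totalDegree_coeff_finSuccEquiv_add_le f F.natDegree
        (by rwa [← Polynomial.leadingCoeff])
    have hbad := ih F.leadingCoeff hLne
    have := SZ_split (Fq := Fq) f
    rw [← hF] at this
    set q := Fintype.card Fq
    calc Nat.card {x : Fin (k + 2) → Fq // eval x f = 0}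
        ≤ q ^ (k + 1) * F.natDegree + q * Nat.card {z : Fin (k+1) → Fq // eval z F.leadingCoeff = 0} := this
      _ ≤ q ^ (k + 1) * F.natDegree + q * (F.leadingCoeff.totalDegree * q ^ k) :=
          Nat.add_le_add_left (Nat.mul_le_mul_left _ hbad) _
      _ = (F.natDegree + F.leadingCoeff.totalDegree) * q ^ (k + 1) := by ring
      _ ≤ f.totalDegree * q ^ (k + 1) :=
          Nat.mul_le_mul_right _ (by omega)




lemma cons_zero_eq_zero_iff {k : ℕ} (z : Fin k → Fq) :
    (Fin.cons 0 z : Fin (k + 1) → Fq) = 0 ↔ z = 0 := by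
  constructor
  · intro h
    funext i
    have := congrFun h i.succ
    simpa using this
  · rintro rfl
    funext i
    induction i using Fin.cases <;> simp

lemma hyperplane_card (k : ℕ) :
    Nat.card {y : Fin (k + 1) → Fq // y 0 = 0} = (Fintype.card Fq) ^ k := by
  have e : {y : Fin (k + 1) → Fq // y 0 = 0} ≃ (Fin k → Fq) :=
    { toFun := fun y => Fin.tail y.1
      invFun := fun z => ⟨Fin.cons 0 z, Fin.cons_zero _ _⟩
      left_inv := fun y => Subtype.ext (by
        show (Fin.cons 0 (Fin.tail y.1) : Fin (k+1) → Fq) = y.1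
        conv_rhs => rw [← Fin.cons_self_tail y.1]
        rw [y.2])
      right_inv := fun z => by
        show Fin.tail (Fin.cons 0 z : Fin (k+1) → Fq) = z
        exact Fin.tail_cons _ _ }
  rw [Nat.card_congr e, Nat.card_eq_fintype_card]
  simp [Fintype.card_pi]

lemma hyperplane_card_ne (k : ℕ) :
    Nat.card {y : Fin (k + 1) → Fq // y ≠ 0 ∧ y 0 = 0} = (Fintype.card Fq) ^ k - 1 := by
  classical
  have e : {y : Fin (k + 1) → Fq // y ≠ 0 ∧ y 0 = 0} ≃ {z : Fin k → Fq // z ≠ 0} :=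
    { toFun := fun y => ⟨Fin.tail y.1, fun h => y.2.1 (by
        have hy : Fin.cons (y.1 0) (Fin.tail y.1) = y.1 := Fin.cons_self_tail y.1
        rw [← hy, y.2.2, h]
        exact (cons_zero_eq_zero_iff 0).mpr rfl)⟩
      invFun := fun z => ⟨Fin.cons 0 z.1,
        fun h => z.2 ((cons_zero_eq_zero_iff z.1).mp h), Fin.cons_zero _ _⟩
      left_inv := fun y => Subtype.ext (by
        show (Fin.cons 0 (Fin.tail y.1) : Fin (k+1) → Fq) = y.1
        conv_rhs => rw [← Fin.cons_self_tail y.1]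
        rw [y.2.2])
      right_inv := fun z => Subtype.ext (by
        show Fin.tail (Fin.cons 0 z.1 : Fin (k+1) → Fq) = z.1
        exact Fin.tail_cons _ _) }
  rw [Nat.card_congr e, myNatCard_eq_card_filter]
  have : univ.filter (fun z : Fin k → Fq => z ≠ 0) = univ.erase 0 := by
    ext z; simp [Finset.mem_erase, and_comm]
  rw [this, Finset.card_erase_of_mem (mem_univ _), Finset.card_univ]
  simp [Fintype.card_pi]

lemma arithA (q h Q : ℕ) (hq : 1 ≤ q) (hh : 1 ≤ h) :
    q * Q + (q - 1) * (h - 1) * Q ≤ (q - 1) * h * Q + Q := by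
  obtain ⟨q', rfl⟩ := Nat.exists_eq_add_of_le hq
  obtain ⟨h', rfl⟩ := Nat.exists_eq_add_of_le hh
  simp only [Nat.add_sub_cancel_left]
  exact Nat.le_of_eq (by ring)

lemma sliceA {k : ℕ} {u : MvPolynomial (Fin (k + 1)) Fq} {s : ℕ}
    (hu : u.IsHomogeneous s) (c : Fq) (hc : c ≠ 0) :
    Nat.card {y : Fin (k + 1) → Fq // eval y (X 0 * u) = 0 ∧ y 0 = c} =
      Nat.card {z : Fin k → Fq // eval z (deh u) = 0} := by
  have key : ∀ y : Fin (k + 1) → Fq, y 0 = c →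
      (Fin.cons 1 (c⁻¹ • Fin.tail y) : Fin (k+1) → Fq) = c⁻¹ • y := by
    intro y hy
    funext i
    induction i using Fin.cases with
    | zero => simp [hy, inv_mul_cancel₀ hc]
    | succ i => simp [Fin.tail]
  apply Nat.card_congr
  refine ⟨fun y => ⟨c⁻¹ • Fin.tail y.1, ?_⟩,
          fun z => ⟨c • (Fin.cons 1 z.1 : Fin (k+1) → Fq), ?_, ?_⟩, ?_, ?_⟩
  · obtain ⟨y, ⟨hev, hy0⟩⟩ := y
    rw [eval_deh, key y hy0, myEvalSmul hu]
    rw [map_mul, eval_X] at hev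
    rcases mul_eq_zero.mp hev with h | h
    · exact absurd (hy0 ▸ h) hc
    · rw [h, mul_zero]
  · rw [map_mul, eval_X]
    have h1 : eval (c • (Fin.cons 1 z.1 : Fin (k+1) → Fq)) u
        = c ^ s * eval (Fin.cons 1 z.1 : Fin (k+1) → Fq) u := myEvalSmul hu c _
    have h2 : eval (Fin.cons 1 z.1 : Fin (k+1) → Fq) u = 0 := by
      rw [← eval_deh]; exact z.2
    rw [h1, h2, mul_zero, mul_zero]
  · show (c • (Fin.cons 1 z.1 : Fin (k+1) → Fq)) 0 = c
    simp
  · rintro ⟨y, hev, hy0⟩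
    apply Subtype.ext
    show c • (Fin.cons 1 (c⁻¹ • Fin.tail y) : Fin (k+1) → Fq) = y
    rw [key y hy0, smul_smul, mul_inv_cancel₀ hc, one_smul]
  · rintro ⟨z, hz⟩
    apply Subtype.ext
    show c⁻¹ • Fin.tail (c • (Fin.cons 1 z : Fin (k+1) → Fq)) = z
    have : Fin.tail (c • (Fin.cons 1 z : Fin (k+1) → Fq)) = c • z := by
      funext i; simp [Fin.tail]
    rw [this, smul_smul, inv_mul_cancel₀ hc, one_smul]

lemma caseA {n h : ℕ} (f : MvPolynomial (Fin (n + 2)) Fq)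
    (hh1 : 1 ≤ h) (hfne : f ≠ 0) (hfh : f.IsHomogeneous h)
    (hdvd : ∃ a : Fin (n + 2) → Fq, a ≠ 0 ∧ linf'' a ∣ f) :
    Nat.card {x : Fin (n + 2) → Fq // eval x f = 0} ≤
      (Fintype.card Fq - 1) * h * (Fintype.card Fq) ^ n + (Fintype.card Fq) ^ n := by
  classical
  obtain ⟨a, ha, hadvd⟩ := hdvd
  obtain ⟨T, e, hEval, hSum, hZero, hHomog, hDvd, hE0⟩ := change a ha
  have hf₂ne : T f ≠ 0 := fun h0 => hfne ((hZero f).mp h0)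
  have hf₂hom : (T f).IsHomogeneous h := hHomog f h hfh
  obtain ⟨u, hu⟩ : (X 0 : MvPolynomial (Fin (n + 2)) Fq) ∣ T f := (hDvd f).mpr hadvd
  have hune : u ≠ 0 := fun h0 => hf₂ne (by rw [hu, h0, mul_zero])
  have huhom : u.IsHomogeneous (h - 1) := by
    have hrw : h - 1 + 1 = h := by omega
    apply divisor_homog (l := (X 0 : MvPolynomial (Fin (n + 2)) Fq)) (hrw ▸ hf₂hom)
      (isHomogeneous_X _ _) (X_ne_zero _) hu
  have hcard : Nat.card {x : Fin (n + 2) → Fq // eval x f = 0} =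
      Nat.card {y : Fin (n + 2) → Fq // eval y (T f) = 0} := by
    apply Nat.card_congr
    exact (Equiv.subtypeEquiv e (fun y => by rw [hEval f y])).symm
  rw [hcard, myNatCard_fiber_sum (fun y => eval y (T f) = 0) (fun y => y 0)]
  set q := Fintype.card Fq with hqdef
  have hq1 : 1 ≤ q := Fintype.card_pos
  have hmain : ∀ c : Fq, Nat.card {y : Fin (n + 2) → Fq // eval y (T f) = 0 ∧ y 0 = c} ≤
      if c = 0 then q ^ (n + 1) else (h - 1) * q ^ n := by
    intro c
    by_cases hc : c = 0
    · rw [if_pos hc, hc]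
      calc Nat.card {y : Fin (n + 2) → Fq // eval y (T f) = 0 ∧ y 0 = 0}
          ≤ Nat.card {y : Fin (n + 2) → Fq // y 0 = 0} :=
            myNatCard_mono _ _ (fun y hy => hy.2)
        _ = q ^ (n + 1) := hyperplane_card (n + 1)
    · rw [if_neg hc]
      have heq : Nat.card {y : Fin (n + 2) → Fq // eval y (T f) = 0 ∧ y 0 = c} =
          Nat.card {z : Fin (n + 1) → Fq // eval z (deh u) = 0} := by
        simp_rw [hu]
        exact sliceA huhom c hc
      rw [heq]
      calc Nat.card {z : Fin (n + 1) → Fq // eval z (deh u) = 0}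
          ≤ (deh u).totalDegree * q ^ n := SZ n (deh u) (deh_ne_zero huhom hune)
        _ ≤ (h - 1) * q ^ n := Nat.mul_le_mul_right _
            (le_trans (deh_totalDegree u) huhom.totalDegree_le)
  calc ∑ c : Fq, Nat.card {y : Fin (n + 2) → Fq // eval y (T f) = 0 ∧ y 0 = c}
      ≤ ∑ c : Fq, (if c = 0 then q ^ (n + 1) else (h - 1) * q ^ n) :=
        Finset.sum_le_sum fun c _ => hmain c
    _ = q ^ (n + 1) + (q - 1) * ((h - 1) * q ^ n) := by
        rw [← Finset.add_sum_erase _ _ (mem_univ (0 : Fq)), if_pos rfl]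
        congr 1
        rw [Finset.sum_congr rfl (fun c hc => if_neg (Finset.mem_erase.mp hc).1),
          Finset.sum_const, Finset.card_erase_of_mem (mem_univ _), Finset.card_univ,
          smul_eq_mul]
    _ ≤ (q - 1) * h * q ^ n + q ^ n := by
        have := arithA q h (q ^ n) hq1 hh1
        calc q ^ (n + 1) + (q - 1) * ((h - 1) * q ^ n)
            = q * q ^ n + (q - 1) * (h - 1) * q ^ n := by ring
          _ ≤ (q - 1) * h * q ^ n + q ^ n := this




lemma eval_zero_of_homog {k h : ℕ} {f : MvPolynomial (Fin k) Fq}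
    (hf : f.IsHomogeneous h) (hh : 1 ≤ h) : eval (0 : Fin k → Fq) f = 0 := by
  have := myEvalSmul hf 0 0
  rw [smul_zero, zero_pow (by omega), zero_mul] at this
  exact this

lemma nonzero_card (k : ℕ) :
    Nat.card {a : Fin k → Fq // a ≠ 0} = (Fintype.card Fq) ^ k - 1 := by
  classical
  rw [myNatCard_eq_card_filter]
  have : univ.filter (fun z : Fin k → Fq => z ≠ 0) = univ.erase 0 := by
    ext z; simp [Finset.mem_erase, and_comm]
  rw [this, Finset.card_erase_of_mem (mem_univ _), Finset.card_univ]
  simp [Fintype.card_pi]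

/-- Case B, base case: a binary form with no linear factor has no nonzero root. -/
lemma caseB0 {h : ℕ} (f : MvPolynomial (Fin 2) Fq) (hh1 : 1 ≤ h) (hhq : h ≤ Fintype.card Fq)
    (hfh : f.IsHomogeneous h)
    (Hno : ∀ a : Fin 2 → Fq, a ≠ 0 → ¬ linf'' a ∣ f) :
    ∀ x : Fin 2 → Fq, eval x f = 0 → x = 0 := by
  intro x hx
  by_contra hxne
  have hx2 : ¬ (x 0 = 0 ∧ x 1 = 0) := by
    rintro ⟨h0, h1⟩
    apply hxne
    funext i
    induction i using Fin.cases with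
    | zero => exact h0
    | succ i =>
      have : i = 0 := Subsingleton.elim _ _
      rw [this]
      exact h1
  set a : Fin 2 → Fq := Fin.cons (x 1) (fun _ => -(x 0)) with hadef
  have ha0 : a 0 = x 1 := rfl
  have ha1 : a 1 = -(x 0) := rfl
  have ha : a ≠ 0 := by
    intro h0
    apply hx2
    constructor
    · have := congrFun h0 1
      rw [ha1] at this
      simpa using this
    · have := congrFun h0 0
      rw [ha0] at this
      simpa using this
  have hker : ∀ w : Fin 2 → Fq, (∑ i, a i * w i = 0) → ∃ c : Fq, w = c • x := by
    intro w hw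
    rw [Fin.sum_univ_two, ha0, ha1] at hw
    by_cases hx0 : x 0 = 0
    · have hx1 : x 1 ≠ 0 := fun h1 => hx2 ⟨hx0, h1⟩
      have hw0 : w 0 = 0 := by
        rw [hx0] at hw
        simpa [hx1] using hw
      refine ⟨w 1 * (x 1)⁻¹, ?_⟩
      funext i
      induction i using Fin.cases with
      | zero =>
        show w 0 = (w 1 * (x 1)⁻¹) * x 0
        rw [hw0, hx0, mul_zero]
      | succ i =>
        have hi : i = 0 := Subsingleton.elim _ _
        subst hi
        show w 1 = (w 1 * (x 1)⁻¹) * x 1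
        field_simp
    · refine ⟨w 0 * (x 0)⁻¹, ?_⟩
      funext i
      induction i using Fin.cases with
      | zero =>
        show w 0 = (w 0 * (x 0)⁻¹) * x 0
        field_simp
      | succ i =>
        have hi : i = 0 := Subsingleton.elim _ _
        subst hi
        show w 1 = (w 0 * (x 0)⁻¹) * x 1
        have : x 1 * w 0 = x 0 * w 1 := by linear_combination hw
        field_simp
        linear_combination -this
  obtain ⟨T, e, hEval, hSum, hZero, hHomog, hDvd, hE0⟩ := change a ha
  have hres0 : res (T f) = 0 := by
    apply IsHomogeneous.eq_zero_of_forall_eval_eq_zero_of_le_card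
      (res_isHomogeneous (hHomog f h hfh))
    · intro z
      rw [eval_res, hEval]
      obtain ⟨c, hc⟩ := hker (e (Fin.cons 0 z)) (by rw [hSum, Fin.cons_zero])
      rw [hc, myEvalSmul hfh, hx, mul_zero]
    · rw [Cardinal.mk_fintype]
      exact_mod_cast hhq
  exact Hno a ha ((hDvd f).mp ((res_eq_zero_iff (T f)).mp hres0))

lemma arithBZ (q h Q : ℤ) (hq : 2 ≤ q) (hh1 : 1 ≤ h) (hhq : h ≤ q) (hQ : 1 ≤ Q) :
    (q*(q*(q*Q)) - 1) * ((q-1)*h*Q + Q) <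
      ((q-1)*h*(q*Q) + q*Q) * (q*(q*Q) - 1) + (q*(q*(q*Q)) - 1) := by
  have hq1 : (0:ℤ) ≤ q - 1 := by omega
  have hQ0 : (0:ℤ) < Q := by omega
  have s1 : (q-1)*h ≤ (q-1)*q := mul_le_mul_of_nonneg_left hhq hq1
  have s2 : ((q-1)*h)*((q-1)*Q) ≤ ((q-1)*q)*((q-1)*Q) :=
    mul_le_mul_of_nonneg_right s1 (mul_nonneg hq1 (le_of_lt hQ0))
  nlinarith [s2, hQ0, hq, mul_pos hQ0 hQ0, sq_nonneg (q-1), mul_pos (mul_pos hQ0 hQ0) hQ0,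
    mul_le_mul_of_nonneg_left hQ (show (0:ℤ) ≤ 2*q*q - 2*q + 1 by nlinarith [sq_nonneg q]),
    mul_pos (show (0:ℤ) < q by omega) hQ0]

lemma arithB (q h Q : ℕ) (hq : 2 ≤ q) (hh1 : 1 ≤ h) (hhq : h ≤ q) (hQ : 1 ≤ Q) :
    (q * (q * (q * Q)) - 1) * ((q - 1) * h * Q + Q) <
      ((q - 1) * h * (q * Q) + q * Q) * (q * (q * Q) - 1) + (q * (q * (q * Q)) - 1) := by
  have h1 : 1 ≤ q * (q * (q * Q)) := by
    have : 0 < q * (q * (q * Q)) := by positivity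
    omega
  have h2 : 1 ≤ q * (q * Q) := by
    have : 0 < q * (q * Q) := by positivity
    omega
  have h3 : 1 ≤ q := by omega
  zify [h1, h2, h3]
  exact arithBZ q h Q (by exact_mod_cast hq) (by exact_mod_cast hh1)
    (by exact_mod_cast hhq) (by exact_mod_cast hQ)

lemma restBound {n h : ℕ} (f : MvPolynomial (Fin (n + 3)) Fq)
    (hfh : f.IsHomogeneous h)
    (Hno : ∀ a : Fin (n + 3) → Fq, a ≠ 0 → ¬ linf'' a ∣ f)
    (IH : ∀ g : MvPolynomial (Fin (n + 2)) Fq, g ≠ 0 → g.IsHomogeneous h →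
      Nat.card {z : Fin (n + 2) → Fq // eval z g = 0} ≤
        (Fintype.card Fq - 1) * h * (Fintype.card Fq) ^ n + (Fintype.card Fq) ^ n)
    (a : Fin (n + 3) → Fq) (ha : a ≠ 0) :
    Nat.card {x : Fin (n + 3) → Fq // eval x f = 0 ∧ ∑ i, a i * x i = 0} ≤
      (Fintype.card Fq - 1) * h * (Fintype.card Fq) ^ n + (Fintype.card Fq) ^ n := by
  obtain ⟨T, e, hEval, hSum, hZero, hHomog, hDvd, hE0⟩ := change a ha
  have hgne : res (T f) ≠ 0 := by
    intro h0
    exact Hno a ha ((hDvd f).mp ((res_eq_zero_iff (T f)).mp h0))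
  have hghom : (res (T f)).IsHomogeneous h := res_isHomogeneous (hHomog f h hfh)
  have e1 : Nat.card {x : Fin (n + 3) → Fq // eval x f = 0 ∧ ∑ i, a i * x i = 0} =
      Nat.card {y : Fin (n + 3) → Fq // eval y (T f) = 0 ∧ y 0 = 0} := by
    apply Nat.card_congr
    refine (Equiv.subtypeEquiv e (fun y => ?_)).symm
    rw [hEval f y, ← hSum y]
  have e2 : Nat.card {y : Fin (n + 3) → Fq // eval y (T f) = 0 ∧ y 0 = 0} =
      Nat.card {z : Fin (n + 2) → Fq // eval z (res (T f)) = 0} := by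
    apply Nat.card_congr
    refine ⟨fun y => ⟨Fin.tail y.1, ?_⟩, fun z => ⟨Fin.cons 0 z.1, ?_, Fin.cons_zero _ _⟩, ?_, ?_⟩
    · have hcons : (Fin.cons 0 (Fin.tail y.1) : Fin (n+3) → Fq) = y.1 := by
        conv_rhs => rw [← Fin.cons_self_tail y.1]
        rw [y.2.2]
      rw [eval_res, hcons]
      exact y.2.1
    · rw [← eval_res]
      exact z.2
    · rintro ⟨y, hy1, hy2⟩
      apply Subtype.ext
      show (Fin.cons 0 (Fin.tail y) : Fin (n+3) → Fq) = y
      conv_rhs => rw [← Fin.cons_self_tail y]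
      rw [hy2]
    · rintro ⟨z, hz⟩
      apply Subtype.ext
      show Fin.tail (Fin.cons 0 z : Fin (n+3) → Fq) = z
      exact Fin.tail_cons _ _
  rw [e1, e2]
  exact IH _ hgne hghom

lemma kernelCard {n : ℕ} (x : Fin (n + 3) → Fq) (hx : x ≠ 0) :
    Nat.card {a : Fin (n + 3) → Fq // a ≠ 0 ∧ ∑ i, a i * x i = 0} =
      (Fintype.card Fq) ^ (n + 2) - 1 := by
  obtain ⟨T, e, hEval, hSum, hZero, hHomog, hDvd, hE0⟩ := change x hx
  have e1 : Nat.card {a : Fin (n + 3) → Fq // a ≠ 0 ∧ ∑ i, a i * x i = 0} =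
      Nat.card {y : Fin (n + 3) → Fq // y ≠ 0 ∧ y 0 = 0} := by
    apply Nat.card_congr
    refine (Equiv.subtypeEquiv e (fun y => ?_)).symm
    constructor
    · rintro ⟨hy1, hy2⟩
      refine ⟨fun h0 => hy1 (e.injective (h0.trans hE0.symm)), ?_⟩
      calc ∑ i, e y i * x i = ∑ i, x i * e y i :=
            Finset.sum_congr rfl fun i _ => mul_comm _ _
        _ = y 0 := hSum y
        _ = 0 := hy2
    · rintro ⟨hy1, hy2⟩
      refine ⟨fun h0 => hy1 (by rw [h0, hE0]), ?_⟩
      have hc : ∑ i, x i * e y i = 0 :=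
        (Finset.sum_congr rfl fun i _ => mul_comm _ _).trans hy2
      exact (hSum y).symm.trans hc
  rw [e1]
  exact hyperplane_card_ne (n + 2)

lemma caseBstep {n h : ℕ} (f : MvPolynomial (Fin (n + 3)) Fq)
    (hh1 : 1 ≤ h) (hhq : h ≤ Fintype.card Fq) (hfne : f ≠ 0) (hfh : f.IsHomogeneous h)
    (Hno : ∀ a : Fin (n + 3) → Fq, a ≠ 0 → ¬ linf'' a ∣ f)
    (IH : ∀ g : MvPolynomial (Fin (n + 2)) Fq, g ≠ 0 → g.IsHomogeneous h →
      Nat.card {z : Fin (n + 2) → Fq // eval z g = 0} ≤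
        (Fintype.card Fq - 1) * h * (Fintype.card Fq) ^ n + (Fintype.card Fq) ^ n) :
    Nat.card {x : Fin (n + 3) → Fq // eval x f = 0} ≤
      (Fintype.card Fq - 1) * h * (Fintype.card Fq) ^ (n + 1) + (Fintype.card Fq) ^ (n + 1) := by
  classical
  set q := Fintype.card Fq with hqdef
  have hq2 : 2 ≤ q := Fintype.one_lt_card
  set B := (q - 1) * h * q ^ n + q ^ n with hB
  set P : (Fin (n + 3) → Fq) → (Fin (n + 3) → Fq) → Prop :=
    fun a x => a ≠ 0 ∧ (eval x f = 0 ∧ ∑ i, a i * x i = 0) with hP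
  have hdouble := myNatCard_double P
  -- left side bound
  have hleft : ∑ a : Fin (n + 3) → Fq, Nat.card {x // P a x} ≤ (q ^ (n + 3) - 1) * B := by
    have hterm : ∀ a : Fin (n + 3) → Fq, a ≠ 0 → Nat.card {x // P a x} ≤ B := by
      intro a ha
      calc Nat.card {x // P a x}
          ≤ Nat.card {x : Fin (n + 3) → Fq // eval x f = 0 ∧ ∑ i, a i * x i = 0} :=
            myNatCard_mono _ _ (fun x hx => hx.2)
        _ ≤ B := restBound f hfh Hno IH a ha
    have hzero : Nat.card {x // P (0 : Fin (n + 3) → Fq) x} = 0 := by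
      have : IsEmpty {x // P (0 : Fin (n + 3) → Fq) x} := ⟨fun p => p.2.1 rfl⟩
      exact Nat.card_of_isEmpty
    rw [← Finset.add_sum_erase _ _ (mem_univ (0 : Fin (n + 3) → Fq)), hzero, zero_add]
    calc ∑ a ∈ univ.erase (0 : Fin (n + 3) → Fq), Nat.card {x // P a x}
        ≤ ∑ a ∈ univ.erase (0 : Fin (n + 3) → Fq), B :=
          Finset.sum_le_sum fun a haa => hterm a (Finset.mem_erase.mp haa).1
      _ = (q ^ (n + 3) - 1) * B := by
          rw [Finset.sum_const, Finset.card_erase_of_mem (mem_univ _), Finset.card_univ,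
            smul_eq_mul]
          congr 2
          simp [Fintype.card_pi, hqdef]
  -- right side lower bound
  set S := univ.filter (fun x : Fin (n + 3) → Fq => eval x f = 0) with hS
  have h0S : (0 : Fin (n + 3) → Fq) ∈ S := by
    rw [hS, Finset.mem_filter]
    exact ⟨mem_univ _, eval_zero_of_homog hfh hh1⟩
  have hright : (q ^ (n + 3) - 1) + (S.card - 1) * (q ^ (n + 2) - 1) ≤
      ∑ x : Fin (n + 3) → Fq, Nat.card {a // P a x} := by
    have hsub : S ⊆ univ := Finset.subset_univ _
    have hstep1 : ∑ x ∈ S, Nat.card {a // P a x} ≤ ∑ x : Fin (n + 3) → Fq, Nat.card {a // P a x} :=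
      Finset.sum_le_sum_of_subset hsub
    have ht0 : Nat.card {a // P a (0 : Fin (n + 3) → Fq)} = q ^ (n + 3) - 1 := by
      have heq : Nat.card {a // P a (0 : Fin (n + 3) → Fq)} =
          Nat.card {a : Fin (n + 3) → Fq // a ≠ 0} := by
        apply Nat.card_congr
        apply Equiv.subtypeEquiv (Equiv.refl _)
        intro a
        simp only [Equiv.refl_apply, hP]
        constructor
        · exact fun hh => hh.1
        · intro hh
          exact ⟨hh, eval_zero_of_homog hfh hh1, by simp⟩
      rw [heq, nonzero_card]
    have htx : ∀ x ∈ S.erase 0, Nat.card {a // P a x} = q ^ (n + 2) - 1 := by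
      intro x hxx
      obtain ⟨hxne, hxS⟩ := Finset.mem_erase.mp hxx
      rw [hS, Finset.mem_filter] at hxS
      have heq : Nat.card {a // P a x} =
          Nat.card {a : Fin (n + 3) → Fq // a ≠ 0 ∧ ∑ i, a i * x i = 0} := by
        apply Nat.card_congr
        apply Equiv.subtypeEquiv (Equiv.refl _)
        intro a
        simp only [Equiv.refl_apply, hP]
        constructor
        · exact fun hh => ⟨hh.1, hh.2.2⟩
        · exact fun hh => ⟨hh.1, hxS.2, hh.2⟩
      rw [heq, kernelCard x hxne]
    calc (q ^ (n + 3) - 1) + (S.card - 1) * (q ^ (n + 2) - 1)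
        = Nat.card {a // P a (0 : Fin (n + 3) → Fq)} + ∑ x ∈ S.erase 0, Nat.card {a // P a x} := by
          rw [ht0]
          congr 1
          rw [Finset.sum_congr rfl htx, Finset.sum_const, smul_eq_mul,
            Finset.card_erase_of_mem h0S]
      _ = ∑ x ∈ S, Nat.card {a // P a x} :=
            Finset.add_sum_erase S (fun x => Nat.card {a // P a x}) h0S
      _ ≤ _ := hstep1
  -- combining
  have hcount : Nat.card {x : Fin (n + 3) → Fq // eval x f = 0} = S.card := by
    rw [hS, myNatCard_eq_card_filter]
  rw [hcount]
  by_contra hcon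
  push_neg at hcon
  set M := (q - 1) * h * q ^ (n + 1) + q ^ (n + 1) with hM
  have hSM : M + 1 ≤ S.card := hcon
  have hineq : (q ^ (n + 3) - 1) + M * (q ^ (n + 2) - 1) ≤ (q ^ (n + 3) - 1) * B := by
    calc (q ^ (n + 3) - 1) + M * (q ^ (n + 2) - 1)
        ≤ (q ^ (n + 3) - 1) + (S.card - 1) * (q ^ (n + 2) - 1) := by
          have : M ≤ S.card - 1 := by omega
          exact Nat.add_le_add_left (Nat.mul_le_mul_right _ this) _
      _ ≤ ∑ x : Fin (n + 3) → Fq, Nat.card {a // P a x} := hright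
      _ = ∑ a : Fin (n + 3) → Fq, Nat.card {x // P a x} := hdouble.symm
      _ ≤ (q ^ (n + 3) - 1) * B := hleft
  have harith := arithB q h (q ^ n) hq2 hh1 hhq (Nat.one_le_pow _ _ (by omega))
  have hp1 : q ^ (n + 1) = q * q ^ n := by ring
  have hp2 : q ^ (n + 2) = q * (q * q ^ n) := by ring
  have hp3 : q ^ (n + 3) = q * (q * (q * q ^ n)) := by ring
  rw [hM, hB, hp1, hp2, hp3] at hineq
  omega




theorem serre_affine (n : ℕ) : ∀ (h : ℕ) (f : MvPolynomial (Fin (n + 2)) Fq),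
    1 ≤ h → h ≤ Fintype.card Fq → f ≠ 0 → f.IsHomogeneous h →
    Nat.card {x : Fin (n + 2) → Fq // eval x f = 0} ≤
      (Fintype.card Fq - 1) * h * (Fintype.card Fq) ^ n + (Fintype.card Fq) ^ n := by
  induction n with
  | zero =>
    intro h f hh1 hhq hfne hfh
    by_cases hdvd : ∃ a : Fin 2 → Fq, a ≠ 0 ∧ linf'' a ∣ f
    · exact caseA f hh1 hfne hfh hdvd
    · push_neg at hdvd
      have hzero := caseB0 f hh1 hhq hfh (fun a ha => hdvd a ha)
      have h1 : Nat.card {x : Fin 2 → Fq // eval x f = 0} ≤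
          Nat.card {x : Fin 2 → Fq // x = 0} := myNatCard_mono _ _ hzero
      have h2 : Nat.card {x : Fin 2 → Fq // x = (0 : Fin 2 → Fq)} = 1 := by
        haveI : Unique {x : Fin 2 → Fq // x = (0 : Fin 2 → Fq)} :=
          ⟨⟨⟨0, rfl⟩⟩, fun y => Subtype.ext y.2⟩
        exact Nat.card_unique
      rw [h2] at h1
      calc Nat.card {x : Fin (0+2) → Fq // eval x f = 0} ≤ 1 := h1
        _ ≤ (Fintype.card Fq - 1) * h * (Fintype.card Fq) ^ 0 + (Fintype.card Fq) ^ 0 := by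
            rw [pow_zero]; omega
  | succ n ih =>
    intro h f hh1 hhq hfne hfh
    by_cases hdvd : ∃ a : Fin (n + 3) → Fq, a ≠ 0 ∧ linf'' a ∣ f
    · exact caseA f hh1 hfne hfh hdvd
    · push_neg at hdvd
      exact caseBstep f hh1 hhq hfne hfh (fun a ha => hdvd a ha)
        (fun g hg hgh => ih h g hh1 hhq hg hgh)

open Projectivization in
lemma proj_count {m h : ℕ} (f : MvPolynomial (Fin (m + 1)) Fq)
    (hfh : f.IsHomogeneous h) :
    Nat.card {p : Projectivization Fq (Fin (m + 1) → Fq) // eval p.rep f = 0} *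
      (Fintype.card Fq - 1) =
    Nat.card {y : Fin (m + 1) → Fq // eval y f = 0 ∧ y ≠ 0} := by
  classical
  set V := Fin (m + 1) → Fq
  have hrepeval : ∀ (y : V) (hy : y ≠ 0), eval y f = 0 →
      eval (Projectivization.mk Fq y hy).rep f = 0 := by
    intro y hy hev
    obtain ⟨c, hc⟩ := exists_smul_eq_mk_rep Fq y hy
    rw [← hc, Units.smul_def, myEvalSmul hfh, hev, mul_zero]
  set g : {y : V // eval y f = 0 ∧ y ≠ 0} →
      {p : Projectivization Fq V // eval p.rep f = 0} :=
    fun y => ⟨Projectivization.mk Fq y.1 y.2.2, hrepeval y.1 y.2.2 y.2.1⟩ with hg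
  haveI hfinP : Finite (Projectivization Fq V) := Quotient.finite _
  haveI : Fintype {p : Projectivization Fq V // eval p.rep f = 0} := Fintype.ofFinite _
  haveI : Fintype {y : V // eval y f = 0 ∧ y ≠ 0} := Fintype.ofFinite _
  have hfiber : ∀ p : {p : Projectivization Fq V // eval p.rep f = 0},
      Nat.card {y // g y = p} = Fintype.card Fq - 1 := by
    intro p
    have hee : {y // g y = p} ≃ Fqˣ := by
      symm
      apply Equiv.ofBijective (f := fun c : Fqˣ =>
        (⟨⟨(c : Fq) • p.1.rep,
          by rw [myEvalSmul hfh, p.2, mul_zero],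
          smul_ne_zero (Units.ne_zero c) p.1.rep_nonzero⟩,
          by
            apply Subtype.ext
            show Projectivization.mk Fq ((c : Fq) • p.1.rep) _ = p.1
            conv_rhs => rw [← p.1.mk_rep]
            rw [mk_eq_mk_iff]
            exact ⟨c, by rw [Units.smul_def]⟩⟩ : {y // g y = p}))
      constructor
      · intro c c' hcc
        have := congrArg (fun z => z.1.1) hcc
        simp only at this
        have := smul_left_injective Fq p.1.rep_nonzero this
        exact Units.ext this
      · rintro ⟨⟨y, hy1, hy2⟩, hyp⟩
        have hmk : Projectivization.mk Fq y hy2 = p.1 := congrArg Subtype.val hyp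
        rw [← p.1.mk_rep, mk_eq_mk_iff Fq _ _ hy2 p.1.rep_nonzero] at hmk
        obtain ⟨c, hc⟩ := hmk
        refine ⟨c, ?_⟩
        apply Subtype.ext
        apply Subtype.ext
        show (c : Fq) • p.1.rep = y
        rw [← Units.smul_def, hc]
    rw [Nat.card_congr hee, Nat.card_eq_fintype_card, Fintype.card_units]
  have hsigma : Nat.card {y : V // eval y f = 0 ∧ y ≠ 0} =
      ∑ p : {p : Projectivization Fq V // eval p.rep f = 0}, Nat.card {y // g y = p} := by
    rw [← Nat.card_congr (Equiv.sigmaFiberEquiv g), Nat.card_eq_fintype_card,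
      Fintype.card_sigma]
    exact Finset.sum_congr rfl fun p _ => (Nat.card_eq_fintype_card).symm
  rw [hsigma, Finset.sum_congr rfl (fun p _ => hfiber p), Finset.sum_const,
    Finset.card_univ, smul_eq_mul, Nat.card_eq_fintype_card]

lemma zero_in_count {k h : ℕ} (f : MvPolynomial (Fin k) Fq)
    (hfh : f.IsHomogeneous h) (hh1 : 1 ≤ h) :
    Nat.card {y : Fin k → Fq // eval y f = 0} =
      Nat.card {y : Fin k → Fq // eval y f = 0 ∧ y ≠ 0} + 1 := by
  classical
  rw [myNatCard_eq_card_filter, myNatCard_eq_card_filter]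
  have hmem : (0 : Fin k → Fq) ∈ univ.filter (fun y : Fin k → Fq => eval y f = 0) := by
    rw [Finset.mem_filter]
    exact ⟨mem_univ _, eval_zero_of_homog hfh hh1⟩
  have herase : univ.filter (fun y : Fin k → Fq => eval y f = 0 ∧ y ≠ 0) =
      (univ.filter (fun y : Fin k → Fq => eval y f = 0)).erase 0 := by
    ext y
    simp only [Finset.mem_filter, Finset.mem_erase, mem_univ, true_and]
    tauto
  rw [herase, Finset.card_erase_of_mem hmem]
  have : 1 ≤ (univ.filter (fun y : Fin k → Fq => eval y f = 0)).card :=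
    Finset.card_pos.mpr ⟨0, hmem⟩
  omega

/-- Serre–Sørensen bound: a nonzero homogeneous polynomial of degree `h ≤ q` in
`m+1` variables over `F_q` has at most `h·q^{m-1} + q^{m-2} + ⋯ + q + 1` projective
zeros in `ℙᵐ(F_q)`. -/
theorem stmt_11 (q m h : ℕ) (Fq : Type) [Field Fq] [Fintype Fq]
    (hq : Fintype.card Fq = q) (hm : 1 ≤ m) (hh : h ≤ q)
    (f : MvPolynomial (Fin (m + 1)) Fq) (hfne : f ≠ 0)
    (hf : f.IsHomogeneous h) :
    Nat.card {x : Projectivization Fq (Fin (m + 1) → Fq) |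
        MvPolynomial.eval x.rep f = 0}
      ≤ h * q ^ (m - 1) + ∑ i ∈ Finset.range (m - 1), q ^ i := by
  subst hq
  have hq2 : 2 ≤ Fintype.card Fq := Fintype.one_lt_card
  by_cases hh1 : 1 ≤ h
  · obtain ⟨m', rfl⟩ : ∃ m', m = m' + 1 := ⟨m - 1, by omega⟩
    simp only [Nat.add_sub_cancel]
    have main := serre_affine (Fq := Fq) m' h f hh1 hh hfne hf
    have hz := zero_in_count f hf hh1
    have hp := proj_count f hf
    set N := Nat.card
      {p : Projectivization Fq (Fin (m' + 1 + 1) → Fq) // eval p.rep f = 0} with hN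
    have main' : Nat.card {x : Fin (m' + 1 + 1) → Fq // eval x f = 0} ≤
        (Fintype.card Fq - 1) * h * (Fintype.card Fq) ^ m' + (Fintype.card Fq) ^ m' := main
    have hchain : N * (Fintype.card Fq - 1) + 1 ≤
        (Fintype.card Fq - 1) * h * (Fintype.card Fq) ^ m' + (Fintype.card Fq) ^ m' := by
      rw [hp]
      omega
    have hgeom := myGeom (Fintype.card Fq) m' (by omega)
    have hfact : (Fintype.card Fq - 1) * h * (Fintype.card Fq) ^ m' + (Fintype.card Fq) ^ m' =
        (h * (Fintype.card Fq) ^ m' + ∑ i ∈ Finset.range m', (Fintype.card Fq) ^ i) *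
          (Fintype.card Fq - 1) + 1 := by
      rw [← hgeom]
      ring
    rw [hfact] at hchain
    have hNle : N * (Fintype.card Fq - 1) ≤
        (h * (Fintype.card Fq) ^ m' + ∑ i ∈ Finset.range m', (Fintype.card Fq) ^ i) *
          (Fintype.card Fq - 1) := by omega
    have hfin := Nat.le_of_mul_le_mul_right hNle (by omega : 0 < Fintype.card Fq - 1)
    exact hfin
  · have h0 : h = 0 := by omega
    subst h0
    have hallzero : ∀ x : Projectivization Fq (Fin (m + 1) → Fq), eval x.rep f ≠ 0 := by
      intro x hx
      apply hfne
      apply hf.eq_zero_of_forall_eval_eq_zero_of_le_card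
      · intro r
        have h1 : eval ((0 : Fq) • r) f = (0 : Fq) ^ 0 * eval r f := myEvalSmul hf 0 r
        have h2 : eval ((0 : Fq) • x.rep) f = (0 : Fq) ^ 0 * eval x.rep f := myEvalSmul hf 0 _
        rw [zero_smul, pow_zero, one_mul] at h1 h2
        rw [← h1, h2, hx]
      · simp
    haveI : IsEmpty {x : Projectivization Fq (Fin (m + 1) → Fq) | eval x.rep f = 0} :=
      ⟨fun p => hallzero p.1 p.2⟩
    rw [Nat.card_of_isEmpty]
    exact Nat.zero_le _


end PolyAll
end

section
/- The Serre–Sørensen bound h·q^{m-1} + π_{m-2} for the number of projective zeros of a degree-h form in P^m(F_q) is attained when the form is a product of h distinct linear forms whose hyperplanes all pass through a common codimension-2 linear subspace (for h ≤ q). -/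
open Projectivization Finset
open scoped LinearAlgebra.Projectivization

section aux

variable {Fq V : Type*} [Field Fq] [Fintype Fq] [AddCommGroup V] [Module Fq V] [Fintype V]

noncomputable def SS12.projEquiv : (ℙ Fq V) × Fqˣ ≃ {v : V // v ≠ 0} := by
  apply Equiv.ofBijective
    (fun p => ⟨(p.2 : Fq) • p.1.rep, smul_ne_zero p.2.ne_zero p.1.rep_nonzero⟩)
  constructor
  · rintro ⟨x, c⟩ ⟨y, d⟩ hxy
    simp only [Subtype.mk.injEq] at hxy
    have hx : x = y := by
      conv_lhs => rw [← x.mk_rep]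
      conv_rhs => rw [← y.mk_rep]
      rw [mk_eq_mk_iff]
      refine ⟨c⁻¹ * d, ?_⟩
      rw [mul_smul, Units.smul_def d, ← hxy]
      simp [Units.smul_def, smul_smul]
    subst hx
    have hcd : (c : Fq) = d := by
      by_contra hcd
      have h2 := sub_smul (c : Fq) (d : Fq) x.rep
      rw [hxy, sub_self] at h2
      rcases smul_eq_zero.mp h2 with h3 | h3
      · exact hcd (sub_eq_zero.mp h3)
      · exact x.rep_nonzero h3
    exact Prod.ext rfl (Units.ext hcd)
  · rintro ⟨v, hv⟩
    obtain ⟨a, ha⟩ := exists_smul_eq_mk_rep Fq v hv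
    refine ⟨⟨mk Fq v hv, a⁻¹⟩, ?_⟩
    ext
    show ((a⁻¹ : Fqˣ) : Fq) • (mk Fq v hv).rep = v
    rw [← ha]
    simp [Units.smul_def, smul_smul]

lemma SS12.card_proj_mul :
    Nat.card (ℙ Fq V) * (Fintype.card Fq - 1) = Fintype.card V - 1 := by
  classical
  have h1 : Nat.card ((ℙ Fq V) × Fqˣ) = Nat.card {v : V // v ≠ 0} :=
    Nat.card_congr SS12.projEquiv
  rw [Nat.card_prod, Nat.card_units, Nat.card_eq_fintype_card (α := Fq),
    Nat.card_eq_fintype_card (α := {v : V // v ≠ 0})] at h1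
  rw [h1]
  simp only [ne_eq]
  rw [Fintype.card_subtype_compl, Fintype.card_subtype_eq]

/-- The points of `ℙ V` lying in a submodule `W` biject with `ℙ W`. -/
noncomputable def SS12.projSubEquiv (W : Submodule Fq V) :
    ℙ Fq W ≃ {x : ℙ Fq V | x.rep ∈ W} := by
  have key : ∀ (y : ℙ Fq W), (mk Fq (y.rep : V)
      (fun h => y.rep_nonzero (Subtype.coe_injective (by simpa using h)))).rep ∈ W := by
    intro y
    set hny : (y.rep : V) ≠ 0 :=
      fun h => y.rep_nonzero (Subtype.coe_injective (by simpa using h))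
    obtain ⟨a, ha⟩ := exists_smul_eq_mk_rep Fq (y.rep : V) hny
    rw [← ha]
    exact W.smul_mem _ y.rep.2
  apply Equiv.ofBijective (fun y => ⟨mk Fq (y.rep : V)
      (fun h => y.rep_nonzero (Subtype.coe_injective (by simpa using h))), key y⟩)
  constructor
  · intro y1 y2 h12
    simp only [Subtype.mk.injEq, mk_eq_mk_iff] at h12
    obtain ⟨a, ha⟩ := h12
    conv_lhs => rw [← y1.mk_rep]
    conv_rhs => rw [← y2.mk_rep]
    rw [mk_eq_mk_iff]
    exact ⟨a, Subtype.coe_injective (by simpa [Units.smul_def] using ha)⟩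
  · rintro ⟨x, hx⟩
    have hx0 : (⟨x.rep, hx⟩ : W) ≠ 0 :=
      fun h => x.rep_nonzero (by simpa [Subtype.ext_iff] using h)
    refine ⟨mk Fq (⟨x.rep, hx⟩ : W) hx0, ?_⟩
    ext
    obtain ⟨a, ha⟩ := exists_smul_eq_mk_rep Fq (⟨x.rep, hx⟩ : W) hx0
    show mk Fq ((mk Fq (⟨x.rep, hx⟩ : W) hx0).rep : V) _ = x
    conv_rhs => rw [← x.mk_rep]
    rw [mk_eq_mk_iff]
    refine ⟨a, ?_⟩
    rw [← ha]
    simp [Units.smul_def]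

lemma SS12.card_in_submodule (W : Submodule Fq V) :
    Nat.card {x : ℙ Fq V | x.rep ∈ W}
      = ∑ i ∈ Finset.range (Module.finrank Fq W), (Fintype.card Fq) ^ i := by
  classical
  have hq : 1 ≤ Fintype.card Fq := Fintype.card_pos
  have h1 : Nat.card {x : ℙ Fq V | x.rep ∈ W} = Nat.card (ℙ Fq W) :=
    (Nat.card_congr (SS12.projSubEquiv W)).symm
  have h2 : Nat.card (ℙ Fq W) * (Fintype.card Fq - 1) = Fintype.card W - 1 :=
    SS12.card_proj_mul
  have h3 : Fintype.card W = Fintype.card Fq ^ Module.finrank Fq W :=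
    Module.card_eq_pow_finrank
  have h4 : (∑ i ∈ Finset.range (Module.finrank Fq W), (Fintype.card Fq) ^ i)
      * (Fintype.card Fq - 1) = Fintype.card Fq ^ Module.finrank Fq W - 1 :=
    geom_sum_mul_of_one_le hq _
  have hge : 1 < Fintype.card Fq := Fintype.one_lt_card
  have hpos : 0 < Fintype.card Fq - 1 := by omega
  refine Nat.eq_of_mul_eq_mul_right hpos ?_
  rw [h1, h2, h3, h4]

end aux

/-- The Serre–Sørensen bound `h·q^{m-1} + π_{m-2}` is attained by a product of `h`
distinct linear forms whose hyperplanes all contain a common codimension-2 linear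
subspace: such a union of `h` hyperplanes has exactly
`h·q^{m-1} + q^{m-2} + ⋯ + q + 1` points in `ℙᵐ(F_q)` (for `h ≤ q`). -/
theorem stmt_12 (q m h : ℕ) (Fq : Type) [Field Fq] [Fintype Fq]
    (hq : Fintype.card Fq = q) (hm : 1 ≤ m) (hh1 : 1 ≤ h) (hh : h ≤ q)
    (ℓ : Fin h → ((Fin (m + 1) → Fq) →ₗ[Fq] Fq))
    (hne : ∀ i, ℓ i ≠ 0)
    (hdist : ∀ i j, i ≠ j → LinearMap.ker (ℓ i) ≠ LinearMap.ker (ℓ j))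
    (K : Submodule Fq (Fin (m + 1) → Fq)) (hK : Module.finrank Fq K = m - 1)
    (hKsub : ∀ i, K ≤ LinearMap.ker (ℓ i)) :
    Nat.card {x : Projectivization Fq (Fin (m + 1) → Fq) |
        ∏ i, ℓ i x.rep = 0}
      = h * q ^ (m - 1) + ∑ i ∈ Finset.range (m - 1), q ^ i := by
  classical
  have hdimV : Module.finrank Fq (Fin (m + 1) → Fq) = m + 1 := by
    rw [Module.finrank_fintype_fun_eq_card, Fintype.card_fin]
  -- rank of each kernel is m
  have hker : ∀ i, Module.finrank Fq (LinearMap.ker (ℓ i)) = m := by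
    intro i
    have hr : Module.finrank Fq (LinearMap.range (ℓ i)) = 1 := by
      have : LinearMap.range (ℓ i) = ⊤ := by
        rw [LinearMap.range_eq_top]
        intro y
        obtain ⟨v, hv⟩ : ∃ v, ℓ i v ≠ 0 := by
          by_contra hcon
          push_neg at hcon
          exact hne i (LinearMap.ext fun v => hcon v)
        exact ⟨(y / ℓ i v) • v, by simp [map_smul, div_mul_cancel₀ _ hv]⟩
      rw [this, finrank_top, Module.finrank_self]
    have := LinearMap.finrank_range_add_finrank_ker (ℓ i)
    rw [hdimV, hr] at this
    omega
  -- intersections of distinct kernels equal K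
  have hinter : ∀ i j, i ≠ j →
      LinearMap.ker (ℓ i) ⊓ LinearMap.ker (ℓ j) = K := by
    intro i j hij
    have hsup : LinearMap.ker (ℓ i) ⊔ LinearMap.ker (ℓ j) = ⊤ := by
      have hnle : ¬ LinearMap.ker (ℓ j) ≤ LinearMap.ker (ℓ i) := by
        intro hle
        exact hdist i j hij
          (Submodule.eq_of_le_of_finrank_le hle (by rw [hker i, hker j])).symm
      have hlt : LinearMap.ker (ℓ i) < LinearMap.ker (ℓ i) ⊔ LinearMap.ker (ℓ j) :=
        left_lt_sup.mpr hnle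
      have h5 := Submodule.finrank_lt_finrank_of_lt hlt
      rw [hker i] at h5
      have h6 : Module.finrank Fq
          (LinearMap.ker (ℓ i) ⊔ LinearMap.ker (ℓ j) : Submodule Fq (Fin (m + 1) → Fq)) ≤ m + 1 := by
        exact le_trans (Submodule.finrank_le _) (le_of_eq hdimV)
      exact Submodule.eq_top_of_finrank_eq (by rw [hdimV]; omega)
    have htop : Module.finrank Fq (⊤ : Submodule Fq (Fin (m + 1) → Fq)) = m + 1 := by
      rw [finrank_top, hdimV]
    have hsum := Submodule.finrank_sup_add_finrank_inf_eq
      (LinearMap.ker (ℓ i)) (LinearMap.ker (ℓ j))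
    rw [hsup, htop, hker i, hker j] at hsum
    have hrk : Module.finrank Fq (LinearMap.ker (ℓ i) ⊓ LinearMap.ker (ℓ j) : Submodule Fq (Fin (m + 1) → Fq))
        = m - 1 := by omega
    symm
    refine Submodule.eq_of_le_of_finrank_eq (le_inf (hKsub i) (hKsub j)) ?_
    rw [hK, hrk]
  -- sets
  set A : Fin h → Set (ℙ Fq (Fin (m + 1) → Fq)) := fun i => {x : ℙ Fq (Fin (m + 1) → Fq) | x.rep ∈ LinearMap.ker (ℓ i)} with hA
  set B : Set (ℙ Fq (Fin (m + 1) → Fq)) := {x : ℙ Fq (Fin (m + 1) → Fq) | x.rep ∈ K} with hB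
  have hSeq : {x : ℙ Fq (Fin (m + 1) → Fq) | ∏ i, ℓ i x.rep = 0} = (⋃ i, A i \ B) ∪ B := by
    ext x
    simp only [Set.mem_setOf_eq, Set.mem_union, Set.mem_iUnion, Set.mem_diff, hA, hB,
      Finset.prod_eq_zero_iff, Finset.mem_univ, true_and, LinearMap.mem_ker,
      Set.mem_setOf_eq]
    constructor
    · rintro ⟨i, hi⟩
      by_cases hxB : x.rep ∈ K
      · exact Or.inr hxB
      · exact Or.inl ⟨i, hi, hxB⟩
    · rintro (⟨i, hi, _⟩ | hxB)
      · exact ⟨i, hi⟩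
      · exact ⟨⟨0, hh1⟩, hKsub ⟨0, hh1⟩ hxB⟩
  have hBsubA : ∀ i, B ⊆ A i := fun i x hx => hKsub i hx
  -- cardinalities of A i and B
  have hcardA : ∀ i, (A i).ncard = ∑ j ∈ Finset.range m, q ^ j := by
    intro i
    rw [← Nat.card_coe_set_eq, hA]
    have := SS12.card_in_submodule (Fq := Fq) (V := (Fin (m + 1) → Fq)) (LinearMap.ker (ℓ i))
    rw [hker i, hq] at this
    exact this
  have hcardB : B.ncard = ∑ j ∈ Finset.range (m - 1), q ^ j := by
    rw [← Nat.card_coe_set_eq, hB]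
    have := SS12.card_in_submodule (Fq := Fq) (V := (Fin (m + 1) → Fq)) K
    rw [hK, hq] at this
    exact this
  -- disjointness
  have hdisj : ∀ i j, i ≠ j → Disjoint (A i \ B) (A j \ B) := by
    intro i j hij
    rw [Set.disjoint_left]
    rintro x ⟨hxi, hxB⟩ ⟨hxj, _⟩
    apply hxB
    have : x.rep ∈ LinearMap.ker (ℓ i) ⊓ LinearMap.ker (ℓ j) := ⟨hxi, hxj⟩
    rw [hinter i j hij] at this
    exact this
  have hdisjB : Disjoint (⋃ i, A i \ B) B := by
    rw [Set.disjoint_left]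
    rintro x hx hxB
    rw [Set.mem_iUnion] at hx
    obtain ⟨i, _, hxB'⟩ := hx
    exact hxB' hxB
  -- compute
  haveI : Finite (ℙ Fq (Fin (m + 1) → Fq)) := Quotient.finite _
  haveI : Fintype (ℙ Fq (Fin (m + 1) → Fq)) := Fintype.ofFinite _
  rw [Nat.card_coe_set_eq, hSeq,
    Set.ncard_union_eq hdisjB (Set.toFinite _) (Set.toFinite _)]
  have hIU : (⋃ i, A i \ B).ncard = ∑ i : Fin h, (A i \ B).ncard := by
    rw [Set.ncard_eq_toFinset_card', Set.toFinset_iUnion]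
    rw [Finset.card_biUnion]
    · exact Finset.sum_congr rfl fun i _ => (Set.ncard_eq_toFinset_card' _).symm
    · intro i _ j _ hij
      have hd := hdisj i j hij
      rw [← Set.disjoint_toFinset (s := A i \ B) (t := A j \ B)] at hd
      simpa [Set.toFinset_diff] using hd
  have hmn : m - 1 + 1 = m := by omega
  have hsplit : ∑ j ∈ Finset.range m, q ^ j
      = ∑ j ∈ Finset.range (m - 1), q ^ j + q ^ (m - 1) := by
    conv_lhs => rw [← hmn]
    rw [Finset.sum_range_succ]
  have hdiff : ∀ i, (A i \ B).ncard = q ^ (m - 1) := by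
    intro i
    rw [Set.ncard_diff (hBsubA i), hcardA i, hcardB, hsplit]
    exact Nat.add_sub_cancel_left _ _
  rw [hIU, hcardB]
  simp only [hdiff, Finset.sum_const, Finset.card_univ, Fintype.card_fin, smul_eq_mul]
end

section
/- Let X be the Hermitian variety x0^{t+1}+...+x4^{t+1}=0 in P^4(F_q), q = t^2, and let h ≤ t. Then the evaluation map sending a homogeneous form of degree h in 5 variables to its vector of values at the points of X is injective; consequently the functional code C_2(X) has dimension 15. -/
variable {Fq : Type} [Field Fq] [Fintype Fq] {t : ℕ}

lemma aux_two_le (hq : Fintype.card Fq = t ^ 2) : 2 ≤ t := by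
  have h1 : 1 < Fintype.card Fq := Fintype.one_lt_card
  by_contra hc
  interval_cases t <;> simp_all

lemma aux_frob (hq : Fintype.card Fq = t ^ 2) : ∃ φ : Fq →+* Fq, ∀ x, φ x = x ^ t := by
  obtain ⟨n, hp, hcard⟩ := FiniteField.card Fq (ringChar Fq)
  have ht2 : t ^ 2 = (ringChar Fq) ^ (n : ℕ) := hq ▸ hcard
  have hdvd : t ∣ (ringChar Fq) ^ (n : ℕ) := ⟨t, by rw [← ht2]; ring⟩
  obtain ⟨m, hm, rfl⟩ := (Nat.dvd_prime_pow hp).mp hdvd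
  haveI : Fact (Nat.Prime (ringChar Fq)) := ⟨hp⟩
  exact ⟨iterateFrobenius Fq (ringChar Fq) m, fun x => iterateFrobenius_def _ _ _⟩

lemma aux_pow_card (hq : Fintype.card Fq = t ^ 2) (x : Fq) : x ^ (t * t) = x := by
  have := FiniteField.pow_card x
  rwa [hq, pow_two] at this


open Polynomial Finset

set_option linter.unusedSectionVars false

variable {Fq : Type} [Field Fq] [Fintype Fq] [DecidableEq Fq] {t : ℕ}

lemma aux_roots_card {P : Polynomial Fq} (hP : P ≠ 0) {s : Finset Fq}
    (hs : ∀ x ∈ s, P.eval x = 0) : s.card ≤ P.natDegree := by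
  classical
  calc s.card ≤ P.roots.toFinset.card := by
        apply Finset.card_le_card
        intro x hx
        simp only [Multiset.mem_toFinset, mem_roots, hP, ne_eq, not_false_eq_true, true_and,
          IsRoot.def]
        exact hs x hx
    _ ≤ Multiset.card P.roots := Multiset.toFinset_card_le _
    _ ≤ P.natDegree := P.card_roots'

lemma aux_pow_fiber_card (k : ℕ) (hk : 1 ≤ k) (z : Fq) :
    (univ.filter fun s : Fq => s ^ k = z).card ≤ k := by
  have h := aux_roots_card (P := X ^ k - C z) (s := univ.filter fun s : Fq => s ^ k = z) ?_ ?_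
  · exact h.trans natDegree_X_pow_sub_C.le
  · intro h0
    have : (X ^ k - C z : Polynomial Fq).coeff k = 0 := by rw [h0]; simp
    rw [coeff_sub, coeff_X_pow, if_pos rfl, coeff_C, if_neg (by omega : ¬ k = 0)] at this
    simp at this
  · intro x hx
    simp only [mem_filter] at hx
    simp [hx.2]

-- main counting lemma: fibers of the norm map have ≥ t+1 elements
lemma aux_norm_fiber (hq : Fintype.card Fq = t ^ 2) (ht : 2 ≤ t) {z : Fq} (hz : z ≠ 0)
    (hzf : z ^ t = z) : t + 1 ≤ (univ.filter fun s : Fq => s ^ (t + 1) = z).card := by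
  set A : Finset Fq := univ.erase 0 with hA
  have hcardA : A.card = t ^ 2 - 1 := by
    rw [hA, Finset.card_erase_of_mem (mem_univ _), Finset.card_univ, hq]
  set Fix0 : Finset Fq := univ.filter (fun w : Fq => w ^ t = w ∧ w ≠ 0) with hFix0
  have hzFix : z ∈ Fix0 := by simp [hFix0, hzf, hz]
  have hFixcard : Fix0.card ≤ t - 1 := by
    have h1 : (insert (0:Fq) Fix0).card ≤ t := by
      refine le_trans (aux_roots_card (P := X ^ t - X) ?_ ?_) ?_
      · intro h0
        have : (X ^ t - X : Polynomial Fq).coeff t = 0 := by rw [h0]; simp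
        rw [coeff_sub, coeff_X_pow, if_pos rfl, coeff_X, if_neg (by omega : ¬ 1 = t)] at this
        simp at this
      · intro x hx
        rcases Finset.mem_insert.mp hx with rfl | hx
        · simp [zero_pow (by omega : t ≠ 0)]
        · simp only [hFix0, mem_filter] at hx
          simp [hx.2.1]
      · refine (natDegree_sub_le _ _).trans ?_
        simp
        omega
    have h2 : Fix0.card + 1 = (insert (0:Fq) Fix0).card := by
      rw [Finset.card_insert_of_notMem (by simp [hFix0])]
    omega
  -- fiberwise counting
  have hmapsto : ∀ a ∈ A, a ^ (t + 1) ∈ Fix0 := by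
    intro a ha
    have ha0 : a ≠ 0 := by simpa [hA] using ha
    have : (a ^ (t+1)) ^ t = a ^ (t+1) := by
      have h := FiniteField.pow_card a
      rw [hq] at h
      calc (a ^ (t+1)) ^ t = a ^ (t^2) * a ^ t := by ring
        _ = a ^ (t + 1) := by rw [h]; ring
    simp [hFix0, this, pow_ne_zero, ha0]
  have hsum : A.card = ∑ w ∈ Fix0, (A.filter fun a => a ^ (t+1) = w).card :=
    Finset.card_eq_sum_card_fiberwise hmapsto
  by_contra hcon
  push_neg at hcon
  have hz_fiber : (A.filter fun a => a ^ (t+1) = z).card ≤ t := by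
    have hsub : (A.filter fun a => a ^ (t+1) = z) ⊆ (univ.filter fun s : Fq => s ^ (t + 1) = z) := by
      intro x hx; simp only [mem_filter] at hx ⊢; exact ⟨mem_univ _, hx.2⟩
    have := Finset.card_le_card hsub
    omega
  have hother : ∀ w ∈ Fix0.erase z, (A.filter fun a => a ^ (t+1) = w).card ≤ t + 1 := by
    intro w hw
    refine le_trans (Finset.card_le_card ?_) (aux_pow_fiber_card (t+1) (by omega) w)
    intro x hx; simp only [mem_filter] at hx ⊢; exact ⟨mem_univ _, hx.2⟩
  have hsplit : ∑ w ∈ Fix0, (A.filter fun a => a ^ (t+1) = w).card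
      = (A.filter fun a => a ^ (t+1) = z).card
        + ∑ w ∈ Fix0.erase z, (A.filter fun a => a ^ (t+1) = w).card := by
    rw [← Finset.sum_erase_add _ _ hzFix]; ring
  have hbound : ∑ w ∈ Fix0.erase z, (A.filter fun a => a ^ (t+1) = w).card
      ≤ (Fix0.card - 1) * (t + 1) := by
    have := Finset.sum_le_card_nsmul (Fix0.erase z) _ (t+1) hother
    simpa [Finset.card_erase_of_mem hzFix, smul_eq_mul] using this
  have hle : (Fix0.card - 1) * (t+1) ≤ (t - 2) * (t + 1) :=
    Nat.mul_le_mul_right _ (by omega)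
  have harith : t ^ 2 - 1 ≤ t + (t - 2) * (t + 1) := by omega
  have : (t-2) * (t+1) + t + 1 < t ^ 2 := by nlinarith [Nat.sub_add_cancel ht]
  omega


variable {Fq : Type} [Field Fq] [Fintype Fq] {t : ℕ} {φ : Fq →+* Fq}

section
variable (hφ : ∀ x : Fq, φ x = x ^ t) (hc : ∀ x : Fq, x ^ (t * t) = x)
include hφ

lemma aux_add_pow (a b : Fq) : (a + b) ^ t = a ^ t + b ^ t := by
  rw [← hφ, ← hφ, ← hφ, map_add]

include hc in
lemma aux_Hsymm (v w : Fin 5 → Fq) :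
    ∑ i, w i * v i ^ t = (∑ i, v i * w i ^ t) ^ t := by
  rw [← hφ, map_sum]
  apply Finset.sum_congr rfl
  intro i _
  rw [map_mul, hφ, hφ, ← pow_mul, hc, mul_comm]

lemma aux_S_expand (v w : Fin 5 → Fq) (s : Fq) :
    ∑ i, (v i + s * w i) ^ (t + 1)
      = ∑ i, v i ^ (t+1) + s ^ t * ∑ i, v i * w i ^ t
        + s * ∑ i, w i * v i ^ t + s ^ (t+1) * ∑ i, w i ^ (t+1) := by
  have key : ∀ a b : Fq, (a + s * b) ^ (t + 1)
      = a ^ (t+1) + s^t * (a * b^t) + s * (b * a^t) + s^(t+1) * b^(t+1) := by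
    intro a b
    calc (a + s*b)^(t+1) = (a+s*b)^t * (a+s*b) := pow_succ _ _
      _ = (a^t + s^t * b^t) * (a+s*b) := by rw [aux_add_pow hφ, mul_pow]
      _ = _ := by ring
  simp only [key]
  simp [Finset.sum_add_distrib, Finset.mul_sum]

end

section
variable (hq : Fintype.card Fq = t ^ 2) (hφ : ∀ x : Fq, φ x = x ^ t)
  (hc : ∀ x : Fq, x ^ (t * t) = x) (ht : 2 ≤ t)

-- helper sum
lemma aux_ite_dot {k : Fin 5} (c : Fq) (g : Fin 5 → Fq) :
    ∑ i, (if i = k then c else 0) * g i = c * g k := by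
  simp [ite_mul, Finset.sum_ite_eq']

-- local notation for the two-coordinate vectors
private def Wv (k j : Fin 5) (x : Fq) : Fin 5 → Fq :=
  fun i => (if i = k then 1 else 0) + (if i = j then -x else 0)

lemma aux_dot_Wv (g : Fin 5 → Fq) (k j : Fin 5) (x : Fq) :
    ∑ i, g i * Wv k j x i = g k - x * g j := by
  simp only [Wv, mul_add]
  rw [Finset.sum_add_distrib]
  simp only [mul_ite, mul_one, mul_zero, mul_neg, Finset.sum_ite_eq', mem_univ, if_true]
  ring

lemma aux_dot_Wv' (g : Fin 5 → Fq) (k j : Fin 5) (x : Fq) :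
    ∑ i, Wv k j x i * g i = g k - x * g j := by
  simp only [mul_comm]
  exact aux_dot_Wv g k j x

lemma aux_S_Wv {k j : Fin 5} (hkj : k ≠ j) (x : Fq) (F : Fq → Fq) (hF : F 0 = 0) :
    ∑ i, F (Wv k j x i) = F 1 + F (-x) := by
  rw [← Finset.sum_subset (Finset.subset_univ {k, j})]
  · rw [Finset.sum_pair hkj]
    simp [Wv, hkj, Ne.symm hkj]
  · intro i _ hi
    simp only [Finset.mem_insert, Finset.mem_singleton, not_or] at hi
    simp [Wv, hi.1, hi.2, hF]

include hq hφ hc ht in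
lemma aux_perp (v : Fin 5 → Fq) (hv : v ≠ 0) :
    ∃ w : Fin 5 → Fq, ∑ i, v i * w i = 0 ∧ ∑ i, w i ^ (t + 1) ≠ 0 := by
  classical
  by_contra hcon
  push_neg at hcon
  obtain ⟨j, hj⟩ := Function.ne_iff.mp hv
  simp only [Pi.zero_apply] at hj
  -- pick k ≠ l, both ≠ j
  have hcard : 1 < (Finset.univ.erase j : Finset (Fin 5)).card := by
    rw [Finset.card_erase_of_mem (mem_univ _)]
    simp
  obtain ⟨k, hk, l, hl, hkl⟩ := Finset.one_lt_card.mp hcard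
  have hkj : k ≠ j := Finset.ne_of_mem_erase hk
  have hlj : l ≠ j := Finset.ne_of_mem_erase hl
  set c : Fin 5 → Fq := fun k => v k / v j with hcdef
  have hdot : ∀ m : Fin 5, ∑ i, v i * Wv m j (c m) i = 0 := by
    intro m
    rw [aux_dot_Wv]
    field_simp [hcdef]
    show v m - v m / v j * v j = 0
    rw [div_mul_cancel₀ _ hj, sub_self]
  have hSW : ∀ m : Fin 5, m ≠ j → 1 + (-(c m)) ^ (t + 1) = 0 := by
    intro m hm
    have := hcon (Wv m j (c m)) (hdot m)
    rwa [aux_S_Wv hm (c m) (fun z => z ^ (t+1)) (by simp), one_pow] at this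
  have hcne : ∀ m : Fin 5, m ≠ j → c m ≠ 0 := by
    intro m hm hczero
    have := hSW m hm
    rw [hczero] at this
    simp [zero_pow (by omega : t + 1 ≠ 0)] at this
  -- the sesquilinear product
  set d : Fq := (-(c k)) * (-(c l)) ^ t with hd
  have hdval : ∑ i, Wv k j (c k) i * (Wv l j (c l) i) ^ t = d := by
    simp only [Wv, add_mul]
    rw [Finset.sum_add_distrib]
    rw [aux_ite_dot (1 : Fq) (fun i => ((if i = l then 1 else 0) + (if i = j then -(c l) else 0))^t),
      aux_ite_dot (-(c k)) (fun i => ((if i = l then 1 else 0) + (if i = j then -(c l) else 0))^t)]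
    simp [hkl, hkj, Ne.symm hlj, zero_pow (by omega : t ≠ 0), hd]
  have hdval' : ∑ i, Wv l j (c l) i * (Wv k j (c k) i) ^ t = d ^ t :=
    hdval ▸ aux_Hsymm hφ hc _ _
  have hdne : d ≠ 0 := by
    apply mul_ne_zero (neg_ne_zero.mpr (hcne k hkj))
    exact pow_ne_zero _ (neg_ne_zero.mpr (hcne l hlj))
  -- vanishing on the pencil
  have hpencil : ∀ s : Fq, s ^ t * d + s * d ^ t = 0 := by
    intro s
    have hdot2 : ∑ i, v i * (Wv k j (c k) i + s * Wv l j (c l) i) = 0 := by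
      simp only [mul_add, ← mul_assoc]
      rw [Finset.sum_add_distrib, hdot k]
      simp only [mul_comm (v _) s, mul_assoc]
      rw [← Finset.mul_sum, hdot l]
      simp
    have hS2 := hcon _ hdot2
    rw [aux_S_expand hφ (Wv k j (c k)) (Wv l j (c l)) s, hdval, hdval'] at hS2
    have hSk : ∑ i, Wv k j (c k) i ^ (t+1) = 0 := hcon _ (hdot k)
    have hSl : ∑ i, Wv l j (c l) i ^ (t+1) = 0 := hcon _ (hdot l)
    rw [hSk, hSl] at hS2
    linear_combination hS2
  -- s = 1 gives d^t = -d
  have hdt : d ^ t = -d := by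
    have := hpencil 1; rw [one_pow, one_mul, one_mul] at this; linear_combination this
  have hfix : ∀ s : Fq, s ^ t = s := by
    intro s
    have h2 := hpencil s
    rw [hdt] at h2
    have h3 : d * (s ^ t - s) = 0 := by linear_combination h2
    rcases mul_eq_zero.mp h3 with h | h
    · exact absurd h hdne
    · linear_combination h
  have hcard2 : Fintype.card Fq ≤ t := by
    rw [← Finset.card_univ]
    apply le_trans (aux_roots_card (P := Polynomial.X ^ t - Polynomial.X) ?_ ?_) ?_
    · intro h0
      have : (Polynomial.X ^ t - Polynomial.X : Polynomial Fq).coeff t = 0 := by rw [h0]; simp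
      rw [Polynomial.coeff_sub, Polynomial.coeff_X_pow, if_pos rfl, Polynomial.coeff_X,
        if_neg (by omega : ¬ 1 = t)] at this
      simp at this
    · intro x _
      simp [hfix x]
    · refine (Polynomial.natDegree_sub_le _ _).trans ?_
      simp
      omega
  rw [hq] at hcard2
  nlinarith
end

-- copy from b.lean for this test file


lemma aux_eval_smul {f : MvPolynomial (Fin 5) Fq} {n : ℕ} (hf : f.IsHomogeneous n)
    (a : Fq) (v : Fin 5 → Fq) :
    MvPolynomial.eval (a • v) f = a ^ n * MvPolynomial.eval v f := by
  rw [MvPolynomial.eval_eq, MvPolynomial.eval_eq, Finset.mul_sum]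
  apply Finset.sum_congr rfl
  intro d hd
  have hdeg : ∑ i ∈ d.support, d i = n := by
    have := hf (MvPolynomial.mem_support_iff.mp hd)
    simpa [Finsupp.weight_apply, Finsupp.sum] using this
  have : ∏ i ∈ d.support, (a • v) i ^ d i
      = a ^ n * ∏ i ∈ d.support, v i ^ d i := by
    simp only [Pi.smul_apply, smul_eq_mul, mul_pow]
    rw [Finset.prod_mul_distrib, Finset.prod_pow_eq_pow_sum, hdeg]
  rw [this]; ring


section
variable {φ : Fq →+* Fq}
variable (hq : Fintype.card Fq = t ^ 2) (hφ : ∀ x : Fq, φ x = x ^ t)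
  (hc : ∀ x : Fq, x ^ (t * t) = x) (ht : 2 ≤ t)

include hq hφ hc ht in
lemma aux_vanish {h : ℕ} (hh : h ≤ t) {f : MvPolynomial (Fin 5) Fq}
    (hf : f.IsHomogeneous h)
    (hvan : ∀ v : Fin 5 → Fq, v ≠ 0 → ∑ i, v i ^ (t + 1) = 0 → MvPolynomial.eval v f = 0) :
    f = 0 := by
  classical
  -- the fixed-field facts
  have hfixpow : ∀ x : Fq, (x ^ (t+1)) ^ t = x ^ (t+1) := by
    intro x
    calc (x ^ (t+1)) ^ t = x ^ (t*t) * x ^ t := by ring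
      _ = x ^ (t+1) := by rw [hc]; ring
  -- Step 1 : f vanishes at every nonzero vector
  have claimA : ∀ v : Fin 5 → Fq, v ≠ 0 → MvPolynomial.eval v f = 0 := by
    intro v hv
    by_cases hS : ∑ i, v i ^ (t + 1) = 0
    · exact hvan v hv hS
    · set cS : Fq := ∑ i, v i ^ (t + 1) with hcS
      obtain ⟨w, hw1, hw2⟩ := aux_perp hq hφ hc ht v hv
      set q : Fin 5 → Fq := fun i => w i ^ t with hqdef
      have hSq : ∑ i, q i ^ (t+1) = φ (∑ i, w i ^ (t+1)) := by
        rw [map_sum]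
        apply Finset.sum_congr rfl
        intro i _
        rw [hφ, hqdef]
        ring
      have he : ∑ i, q i ^ (t+1) ≠ 0 := by
        rw [hSq]
        simpa only [ne_eq, _root_.map_eq_zero] using hw2
      set e : Fq := ∑ i, q i ^ (t+1) with hedef
      have hHvq : ∑ i, v i * q i ^ t = 0 := by
        rw [← hw1]
        apply Finset.sum_congr rfl
        intro i _
        rw [hqdef]
        simp only
        rw [← pow_mul, hc]
      have hHqv : ∑ i, q i * v i ^ t = 0 := by
        rw [aux_Hsymm hφ hc, hHvq]
        exact zero_pow (by omega)
      set z : Fq := -(cS / e) with hzdef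
      have hzne : z ≠ 0 := by
        simp [hzdef, _root_.div_eq_zero_iff, hS, he]
      have hfixc : cS ^ t = cS := by
        have : φ cS = cS := by
          rw [hcS, map_sum]
          apply Finset.sum_congr rfl
          intro i _
          rw [hφ, hfixpow]
        rwa [hφ] at this
      have hfixe : e ^ t = e := by
        have : φ e = e := by
          rw [hedef, map_sum]
          apply Finset.sum_congr rfl
          intro i _
          rw [hφ, hfixpow]
        rwa [hφ] at this
      have hzfix : z ^ t = z := by
        have : φ z = z := by
          rw [hzdef, map_neg, map_div₀, hφ, hφ, hfixc, hfixe]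
        rwa [hφ] at this
      have hT := aux_norm_fiber hq ht hzne hzfix
      set T : Finset Fq := univ.filter fun s : Fq => s ^ (t + 1) = z with hTdef
      -- the restriction polynomial
      set u : Polynomial Fq :=
        MvPolynomial.aeval (fun i => Polynomial.C (v i) + Polynomial.C (q i) * Polynomial.X) f
        with hudef
      have hdeg : u.natDegree ≤ h := by
        have := MvPolynomial.aeval_natDegree_le f (hf.totalDegree_le)
          (fun i => Polynomial.C (v i) + Polynomial.C (q i) * Polynomial.X) (n := 1) ?_
        · simpa using this
        · intro i
          apply le_trans (Polynomial.natDegree_add_le _ _)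
          simp only [Polynomial.natDegree_C, max_le_iff]
          exact ⟨by omega, le_trans Polynomial.natDegree_mul_le (by simp)⟩
      have hueval : ∀ s : Fq, u.eval s = MvPolynomial.eval (fun i => v i + s * q i) f := by
        intro s
        rw [hudef]
        have := MvPolynomial.comp_aeval (φ := Polynomial.aeval s (R := Fq))
          (f := fun i => Polynomial.C (v i) + Polynomial.C (q i) * Polynomial.X)
        have happ := congrFun (congrArg DFunLike.coe this) f
        simp only [AlgHom.comp_apply] at happ
        rw [show (Polynomial.aeval s) ((MvPolynomial.aeval fun i =>
            Polynomial.C (v i) + Polynomial.C (q i) * Polynomial.X) f)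
          = Polynomial.eval s ((MvPolynomial.aeval fun i =>
            Polynomial.C (v i) + Polynomial.C (q i) * Polynomial.X) f) from by
            rw [← Polynomial.coe_aeval_eq_eval]]
          at happ
        rw [happ, show (fun i => (Polynomial.aeval s) (Polynomial.C (v i)
            + Polynomial.C (q i) * Polynomial.X)) = fun i => v i + s * q i from by
          funext i
          rw [map_add, map_mul, Polynomial.aeval_C, Polynomial.aeval_C, Polynomial.aeval_X]
          simp only [Algebra.algebraMap_self, RingHom.id_apply]
          ring, ← MvPolynomial.coe_aeval_eq_eval]
        rfl
      have huzero : u = 0 := by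
        apply Polynomial.eq_zero_of_natDegree_lt_card_of_eval_eq_zero' u T
        · intro s hs
          have hsT : s ^ (t+1) = z := by
            simp only [hTdef, Finset.mem_filter] at hs
            exact hs.2
          rw [hueval s]
          apply hvan
          · -- nonzero
            intro h0
            have hzero : ∀ i, v i + s * q i = 0 := fun i => congrFun h0 i
            have hexp : ∑ i, (v i + s * q i) * q i ^ t
                = (∑ i, v i * q i ^ t) + s * ∑ i, q i ^ (t+1) := by
              rw [Finset.mul_sum, ← Finset.sum_add_distrib]
              apply Finset.sum_congr rfl
              intro i _
              rw [pow_succ]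
              ring
            have hLHS : ∑ i, (v i + s * q i) * q i ^ t = 0 :=
              Finset.sum_eq_zero (fun i _ => by rw [hzero i, zero_mul])
            rw [hLHS, hHvq, zero_add, ← hedef] at hexp
            have hs0 : s = 0 := by
              rcases mul_eq_zero.mp hexp.symm with h' | h'
              · exact h'
              · exact absurd h' he
            rw [hs0, zero_pow (by omega : t + 1 ≠ 0)] at hsT
            exact hzne hsT.symm
          · -- on the variety
            have := aux_S_expand hφ v q s
            rw [hHvq, hHqv, mul_zero, mul_zero, add_zero, add_zero, hsT] at this
            rw [this, hzdef]
            field_simp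
            rw [← hcS, ← hedef]
            ring
        · omega
      rw [show MvPolynomial.eval v f = u.eval 0 from ?_, huzero]
      · simp
      · rw [hueval 0]
        simp
  -- Step 2 : f vanishes everywhere, conclude by the cardinality lemma
  apply hf.eq_zero_of_forall_eval_eq_zero_of_le_card
  · intro v
    by_cases hv : v = 0
    · subst hv
      have h1 : (fun _ : Fin 5 => (0:Fq)) = (0 : Fq) • (fun _ : Fin 5 => (1:Fq)) := by
        funext i; simp
      have h2 := aux_eval_smul hf (0:Fq) (fun _ : Fin 5 => (1:Fq))
      have h3 : MvPolynomial.eval (fun _ : Fin 5 => (1:Fq)) f = 0 := by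
        apply claimA
        intro hcontra
        have := congrFun hcontra 0
        simp at this
      rw [show (0 : Fin 5 → Fq) = (0:Fq) • (fun _ : Fin 5 => (1:Fq)) from by funext i; simp,
        h2, h3]
      ring
    · exact claimA v hv
  · rw [Cardinal.mk_fintype, hq]
    have : (h:Cardinal) ≤ (t^2 : ℕ) := by
      rw [Nat.cast_le]
      nlinarith
    exact this

end


set_option linter.unusedSectionVars false in
lemma aux_finrank_two :
    Module.finrank Fq (MvPolynomial.homogeneousSubmodule (Fin 5) Fq 2) = 15 := by
  classical
  rw [MvPolynomial.homogeneousSubmodule_eq_finsupp_supported]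
  have e2 : {d : Fin 5 →₀ ℕ | d.degree = 2} ≃ Sym (Fin 5) 2 := by
    refine Equiv.subtypeEquiv
      ((Multiset.toFinsupp (α := Fin 5)).toEquiv.symm) (fun d => ?_)
    change d.degree = 2 ↔ Multiset.card ((Multiset.toFinsupp (α := Fin 5)).symm d) = 2
    rw [show ((Multiset.toFinsupp (α := Fin 5)).symm d : Multiset (Fin 5))
        = Finsupp.toMultiset d from rfl]
    rw [Finsupp.card_toMultiset, Finsupp.degree]
    exact Iff.rfl
  have chain : (AddMonoidAlgebra.supported Fq Fq {d : Fin 5 →₀ ℕ | d.degree = 2}) ≃ₗ[Fq]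
      (Sym (Fin 5) 2 → Fq) :=
    (AddMonoidAlgebra.supportedEquivFinsupp _) ≪≫ₗ (Finsupp.domLCongr e2) ≪≫ₗ
      (Finsupp.linearEquivFunOnFinite Fq Fq _)
  refine (LinearEquiv.finrank_eq chain).trans ?_
  rw [Module.finrank_fintype_fun_eq_card, Sym.card_sym_eq_choose]
  decide

/-- For the Hermitian variety `X : x0^{t+1} + ⋯ + x4^{t+1} = 0` in `ℙ⁴(F_{t²})` and
`h ≤ t`, the evaluation map on degree-`h` forms is injective; consequently the
functional code `C_2(X)`, the image of the space of quadratic forms under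
evaluation at the points of `X`, has dimension 15. -/
theorem stmt_13 (t h : ℕ) (Fq : Type) [Field Fq] [Fintype Fq]
    (hq : Fintype.card Fq = t ^ 2) (hh : h ≤ t) :
    (∀ f ∈ MvPolynomial.homogeneousSubmodule (Fin 5) Fq h,
      (∀ x : {x : Projectivization Fq (Fin 5 → Fq) // ∑ i, x.rep i ^ (t + 1) = 0},
        MvPolynomial.eval x.val.rep f = 0) → f = 0) ∧
    Module.finrank Fq
      ((MvPolynomial.homogeneousSubmodule (Fin 5) Fq 2).map
        (LinearMap.pi
          (fun x : {x : Projectivization Fq (Fin 5 → Fq) //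
              ∑ i, x.rep i ^ (t + 1) = 0} =>
            (MvPolynomial.aeval x.val.rep).toLinearMap))) = 15 := by
  obtain ⟨φ, hφ⟩ := aux_frob hq
  have hc := aux_pow_card hq
  have ht := aux_two_le hq
  -- part 1, for any degree h' ≤ t
  have part1 : ∀ h' : ℕ, h' ≤ t → ∀ f ∈ MvPolynomial.homogeneousSubmodule (Fin 5) Fq h',
      (∀ x : {x : Projectivization Fq (Fin 5 → Fq) // ∑ i, x.rep i ^ (t + 1) = 0},
        MvPolynomial.eval x.val.rep f = 0) → f = 0 := by
    intro h' hh' f hf hx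
    have hfh : f.IsHomogeneous h' := (MvPolynomial.mem_homogeneousSubmodule _ _).mp hf
    apply aux_vanish hq hφ hc ht hh' hfh
    intro v hv hS
    obtain ⟨a, ha⟩ := Projectivization.exists_smul_eq_mk_rep Fq v hv
    have hsmul : ((a : Fqˣ) • v : Fin 5 → Fq) = ((a : Fq) • v) := by
      funext i; simp [Units.smul_def]
    have hSrep : ∑ i, (Projectivization.mk Fq v hv).rep i ^ (t + 1) = 0 := by
      rw [← ha, hsmul]
      simp only [Pi.smul_apply, smul_eq_mul, mul_pow]
      rw [← Finset.mul_sum, hS, mul_zero]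
    have hx2 := hx ⟨Projectivization.mk Fq v hv, hSrep⟩
    simp only at hx2
    rw [← ha, hsmul, aux_eval_smul hfh] at hx2
    rcases mul_eq_zero.mp hx2 with h' | h'
    · exact absurd h' (pow_ne_zero _ (Units.ne_zero a))
    · exact h'
  refine ⟨part1 h hh, ?_⟩
  -- part 2
  set E : MvPolynomial (Fin 5) Fq →ₗ[Fq]
      ({x : Projectivization Fq (Fin 5 → Fq) // ∑ i, x.rep i ^ (t + 1) = 0} → Fq) :=
    LinearMap.pi
      (fun x : {x : Projectivization Fq (Fin 5 → Fq) //
          ∑ i, x.rep i ^ (t + 1) = 0} =>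
        (MvPolynomial.aeval x.val.rep).toLinearMap) with hE
  set M := MvPolynomial.homogeneousSubmodule (Fin 5) Fq 2 with hM
  have hinj : Function.Injective (E.comp M.subtype) := by
    rw [← LinearMap.ker_eq_bot, LinearMap.ker_eq_bot']
    intro f hf0
    have hEf : E f.val = 0 := hf0
    have hall : ∀ x : {x : Projectivization Fq (Fin 5 → Fq) //
        ∑ i, x.rep i ^ (t + 1) = 0}, MvPolynomial.eval x.val.rep f.val = 0 := by
      intro x
      have h2 := congrFun hEf x
      simp only [hE, LinearMap.pi_apply, AlgHom.toLinearMap_apply, Pi.zero_apply] at h2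
      rw [← MvPolynomial.coe_aeval_eq_eval]
      exact h2
    have := part1 2 ht f.val f.property hall
    exact Subtype.ext this
  have hrange : LinearMap.range (E.comp M.subtype) = M.map E := by
    rw [LinearMap.range_comp, Submodule.range_subtype]
  rw [← hrange, ← (LinearEquiv.ofInjective _ hinj).finrank_eq]
  exact aux_finrank_two
end

section
/- Let X be a non-degenerate quadric in P^4(F_q), let D1 and D2 be two distinct intersecting lines contained in X, and let P be the plane they span. Among the q+1 hyperplanes containing P, at most one is tangent to X. -/
/-- A non-degenerate quadric in `ℙ⁴(F_q)`: a nonzero quadratic form in 5 variables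
that cannot, after any invertible linear change of variables, be written using
fewer than 5 variables. -/
def NondegQuadric {Fq : Type} [Field Fq]
    (f : MvPolynomial (Fin 5) Fq) : Prop :=
  f.IsHomogeneous 2 ∧ f ≠ 0 ∧
    ∀ A : (Fin 5 → Fq) ≃ₗ[Fq] (Fin 5 → Fq),
      ¬ ∀ x y : Fin 5 → Fq, (∀ i : Fin 5, (i : ℕ) < 4 → x i = y i) →
        MvPolynomial.eval (A x) f = MvPolynomial.eval (A y) f

/-- The hyperplane `ker ℓ` is tangent to the quadric `Z(f)`: the hyperplane section
is a cone, i.e. there is a point `p` of the section such that the section contains,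
with any of its points, the whole line joining it to `p`. -/
def TangentHyperplane {Fq : Type} [Field Fq]
    (f : MvPolynomial (Fin 5) Fq) (ℓ : (Fin 5 → Fq) →ₗ[Fq] Fq) : Prop :=
  ∃ p : Fin 5 → Fq, p ≠ 0 ∧ ℓ p = 0 ∧ MvPolynomial.eval p f = 0 ∧
    ∀ v : Fin 5 → Fq, ℓ v = 0 → MvPolynomial.eval v f = 0 →
      ∀ a b : Fq, MvPolynomial.eval (a • p + b • v) f = 0


section Stmt16Aux

open MvPolynomial

variable {Fq : Type} [Field Fq]


lemma monomial_two (d : Fin 5 →₀ ℕ) (hd : (Finsupp.weight (1 : Fin 5 → ℕ)) d = 2) :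
    ∃ i j : Fin 5, ∀ x : Fin 5 → Fq, eval x (monomial d (1 : Fq)) = x i * x j := by
  have hcard : Multiset.card d.toMultiset = 2 := by
    rw [Finsupp.card_toMultiset]
    simpa [Finsupp.weight_apply, Finsupp.sum] using hd
  obtain ⟨i, j, hij⟩ := Multiset.card_eq_two.mp hcard
  refine ⟨i, j, fun x => ?_⟩
  have hd2 : d = Finsupp.single i 1 + Finsupp.single j 1 := by
    have h1 : Multiset.toFinsupp d.toMultiset = Multiset.toFinsupp {i, j} := by rw [hij]
    classical
    rw [Finsupp.toMultiset_toFinsupp] at h1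
    rw [h1]
    have : ({i, j} : Multiset (Fin 5)) = {i} + {j} := by
      rw [Multiset.insert_eq_cons, Multiset.singleton_add]
    rw [this, Multiset.toFinsupp_add, Multiset.toFinsupp_singleton, Multiset.toFinsupp_singleton]
  subst hd2
  have : monomial (Finsupp.single i 1 + Finsupp.single j 1) (1 : Fq) = X i * X j := by
    rw [X, X, monomial_mul, one_mul]
  rw [this]
  simp

lemma exists_rep (f : MvPolynomial (Fin 5) Fq) (hf : f.IsHomogeneous 2) :
    ∃ (s : Finset (Fin 5 →₀ ℕ)) (c : (Fin 5 →₀ ℕ) → Fq) (a b : (Fin 5 →₀ ℕ) → Fin 5),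
      ∀ x : Fin 5 → Fq, eval x f = ∑ d ∈ s, c d * (x (a d) * x (b d)) := by
  classical
  have H : ∀ d ∈ f.support, ∃ i j : Fin 5,
      ∀ x : Fin 5 → Fq, eval x (monomial d (1 : Fq)) = x i * x j := by
    intro d hd
    exact monomial_two d (hf (mem_support_iff.mp hd))
  choose! a b hab using H
  refine ⟨f.support, fun d => coeff d f, a, b, fun x => ?_⟩
  conv_lhs => rw [← f.support_sum_monomial_coeff]
  rw [map_sum]
  refine Finset.sum_congr rfl fun d hd => ?_
  have h := hab d hd x
  rw [eval_monomial, one_mul] at h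
  rw [eval_monomial, h]

noncomputable def Bform (s : Finset (Fin 5 →₀ ℕ)) (c : (Fin 5 →₀ ℕ) → Fq)
    (a b : (Fin 5 →₀ ℕ) → Fin 5) : (Fin 5 → Fq) →ₗ[Fq] (Fin 5 → Fq) →ₗ[Fq] Fq :=
  LinearMap.mk₂ Fq (fun x y => ∑ d ∈ s, c d * (x (a d) * y (b d) + y (a d) * x (b d)))
    (fun x x' y => by
      simp only [Pi.add_apply, ← Finset.sum_add_distrib]
      exact Finset.sum_congr rfl fun d _ => by ring)
    (fun t x y => by
      simp only [Pi.smul_apply, smul_eq_mul, Finset.mul_sum]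
      exact Finset.sum_congr rfl fun d _ => by ring)
    (fun x y y' => by
      simp only [Pi.add_apply, ← Finset.sum_add_distrib]
      exact Finset.sum_congr rfl fun d _ => by ring)
    (fun t x y => by
      simp only [Pi.smul_apply, smul_eq_mul, Finset.mul_sum]
      exact Finset.sum_congr rfl fun d _ => by ring)

lemma exists_B (f : MvPolynomial (Fin 5) Fq) (hf2 : f.IsHomogeneous 2) :
    ∃ B : (Fin 5 → Fq) →ₗ[Fq] (Fin 5 → Fq) →ₗ[Fq] Fq,
      (∀ x y, eval (x + y) f = eval x f + eval y f + B x y) ∧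
      (∀ x y, B x y = B y x) ∧
      (∀ t x, eval (t • x) f = t ^ 2 * eval x f) := by
  obtain ⟨s, c, a, b, hrep⟩ := exists_rep f hf2
  refine ⟨Bform s c a b, fun x y => ?_, fun x y => ?_, fun t x => ?_⟩
  · simp only [hrep, Bform, LinearMap.mk₂_apply, Pi.add_apply, ← Finset.sum_add_distrib]
    exact Finset.sum_congr rfl fun d _ => by ring
  · simp only [Bform, LinearMap.mk₂_apply]
    exact Finset.sum_congr rfl fun d _ => by ring
  · simp only [hrep, Pi.smul_apply, smul_eq_mul, Finset.mul_sum]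
    exact Finset.sum_congr rfl fun d _ => by ring

/-- Shear linear equivalence sending `Pi.single j 1` to `w`, assuming `w j ≠ 0`. -/
noncomputable def shear (w : Fin 5 → Fq) (j : Fin 5) (hj : w j ≠ 0) :
    (Fin 5 → Fq) ≃ₗ[Fq] (Fin 5 → Fq) where
  toFun x := x + x j • (w - Pi.single j 1)
  invFun x := x + ((w j)⁻¹ * x j) • (Pi.single j 1 - w)
  map_add' x y := by
    funext i
    simp only [Pi.add_apply, Pi.smul_apply, Pi.sub_apply, smul_eq_mul]
    ring
  map_smul' t x := by
    funext i
    simp only [Pi.add_apply, Pi.smul_apply, Pi.sub_apply, smul_eq_mul, RingHom.id_apply]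
    ring
  left_inv x := by
    funext i
    simp only [Pi.add_apply, Pi.smul_apply, Pi.sub_apply, Pi.single_eq_same, smul_eq_mul]
    field_simp
    ring
  right_inv x := by
    funext i
    simp only [Pi.add_apply, Pi.smul_apply, Pi.sub_apply, Pi.single_eq_same, smul_eq_mul]
    field_simp
    ring

lemma shear_single (w : Fin 5 → Fq) (j : Fin 5) (hj : w j ≠ 0) :
    shear w j hj (Pi.single j 1) = w := by
  show Pi.single j 1 + (Pi.single j 1 : Fin 5 → Fq) j • (w - Pi.single j 1) = w
  rw [Pi.single_eq_same, one_smul]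
  abel

/-- From a vector in the radical of the quadratic form, contradict nondegeneracy. -/
lemma nondeg_rad (f : MvPolynomial (Fin 5) Fq) (hf : NondegQuadric f)
    (B : (Fin 5 → Fq) →ₗ[Fq] (Fin 5 → Fq) →ₗ[Fq] Fq)
    (hB : ∀ x y, eval (x + y) f = eval x f + eval y f + B x y)
    (hQs : ∀ t x, eval (t • x) f = t ^ 2 * eval x f)
    (w : Fin 5 → Fq) (hw : w ≠ 0) (hQw : eval w f = 0)
    (hBw : ∀ z, B z w = 0) : False := by
  classical
  obtain ⟨j, hj⟩ : ∃ j, w j ≠ 0 := by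
    by_contra h
    push_neg at h
    exact hw (funext h)
  set A : (Fin 5 → Fq) ≃ₗ[Fq] (Fin 5 → Fq) :=
    (LinearEquiv.funCongrLeft Fq Fq (Equiv.swap j 4)).trans (shear w j hj) with hA
  apply hf.2.2 A
  intro x y hxy
  have hkey : (y ∘ Equiv.swap j 4 : Fin 5 → Fq)
      = (x ∘ Equiv.swap j 4) + (y 4 - x 4) • (Pi.single j 1 : Fin 5 → Fq) := by
    funext i
    simp only [Function.comp_apply, Pi.add_apply, Pi.smul_apply, smul_eq_mul]
    by_cases hij : i = j
    · subst hij
      rw [Equiv.swap_apply_left, Pi.single_eq_same]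
      ring
    · rw [Pi.single_eq_of_ne hij, mul_zero, add_zero]
      have h4 : Equiv.swap j 4 i ≠ 4 := by
        intro h
        apply hij
        have := (Equiv.swap j 4).injective (a₁ := i) (a₂ := j)
        apply this
        rw [h, Equiv.swap_apply_left]
      have hlt : ((Equiv.swap j 4 i : Fin 5) : ℕ) < 4 := by
        have h5 := (Equiv.swap j 4 i).isLt
        have : ((Equiv.swap j 4 i : Fin 5) : ℕ) ≠ 4 := fun hc => h4 (Fin.ext hc)
        omega
      exact (hxy _ hlt).symm
  have hAx : A y = A x + (y 4 - x 4) • w := by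
    have h1 : A y = shear w j hj (y ∘ Equiv.swap j 4) := rfl
    have h2 : A x = shear w j hj (x ∘ Equiv.swap j 4) := rfl
    rw [h1, h2, hkey, map_add, map_smul, shear_single]
  rw [hAx, hB, hQs, hQw, map_smul, smul_eq_mul, hBw]
  ring

/-- No 3-dimensional totally singular subspace. -/
lemma no_TS3 (f : MvPolynomial (Fin 5) Fq) (hf : NondegQuadric f)
    (B : (Fin 5 → Fq) →ₗ[Fq] (Fin 5 → Fq) →ₗ[Fq] Fq)
    (hB : ∀ x y, eval (x + y) f = eval x f + eval y f + B x y)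
    (hBsym : ∀ x y, B x y = B y x)
    (hQs : ∀ t x, eval (t • x) f = t ^ 2 * eval x f)
    (U : Submodule Fq (Fin 5 → Fq)) (hU : Module.finrank Fq U = 3)
    (hUX : ∀ v ∈ U, eval v f = 0) : False := by
  classical
  set T : U →ₗ[Fq] Module.Dual Fq (Fin 5 → Fq) := B.domRestrict U with hT
  have hrange : LinearMap.range T ≤ U.dualAnnihilator := by
    rintro g ⟨u, rfl⟩
    rw [Submodule.mem_dualAnnihilator]
    intro v hv
    have h1 : eval ((u : Fin 5 → Fq) + v) f = 0 := hUX _ (U.add_mem u.2 hv)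
    have h2 : eval (u : Fin 5 → Fq) f = 0 := hUX _ u.2
    have h3 : eval v f = 0 := hUX _ hv
    have h4 := hB (u : Fin 5 → Fq) v
    show B (u : Fin 5 → Fq) v = 0
    rw [h1, h2, h3] at h4
    linear_combination -h4
  have hann : Module.finrank Fq U.dualAnnihilator = 2 := by
    have h1 : Module.finrank Fq ((Fin 5 → Fq) ⧸ U) = Module.finrank Fq U.dualAnnihilator :=
      (Subspace.quotEquivAnnihilator U).finrank_eq
    have h2 := Submodule.finrank_quotient_add_finrank U
    have h5 : Module.finrank Fq (Fin 5 → Fq) = 5 := by simp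
    omega
  have hrk : Module.finrank Fq (LinearMap.range T) ≤ 2 :=
    hann ▸ Submodule.finrank_mono hrange
  have hker : LinearMap.ker T ≠ ⊥ := by
    intro hbot
    have h1 := LinearMap.finrank_range_add_finrank_ker T
    rw [hbot, finrank_bot] at h1
    omega
  obtain ⟨u, hu, hune⟩ := Submodule.exists_mem_ne_zero_of_ne_bot hker
  refine nondeg_rad f hf B hB hQs (u : Fin 5 → Fq) ?_ (hUX _ u.2) ?_
  · simpa using hune
  · intro z
    rw [hBsym]
    have : B (u : Fin 5 → Fq) = 0 := hu
    rw [this]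
    rfl

end Stmt16Aux

set_option maxHeartbeats 1000000 in
/-- Let `X` be a non-degenerate quadric in `ℙ⁴(F_q)`, `D1, D2` two distinct
intersecting lines contained in `X` (2-dimensional subspaces on which the form
vanishes), and `P = ⟨D1, D2⟩` the plane they span. Then among the hyperplanes
containing `P`, at most one is tangent to `X`. -/
theorem stmt_16 (q : ℕ) (Fq : Type) [Field Fq] [Fintype Fq]
    (hq : Fintype.card Fq = q)
    (f : MvPolynomial (Fin 5) Fq) (hf : NondegQuadric f)
    (W1 W2 : Submodule Fq (Fin 5 → Fq))
    (hW1 : Module.finrank Fq W1 = 2) (hW2 : Module.finrank Fq W2 = 2)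
    (hW1X : ∀ v ∈ W1, MvPolynomial.eval v f = 0)
    (hW2X : ∀ v ∈ W2, MvPolynomial.eval v f = 0)
    (hWne : W1 ≠ W2) (hsec : W1 ⊓ W2 ≠ ⊥) :
    ∀ ℓ1 ℓ2 : (Fin 5 → Fq) →ₗ[Fq] Fq, ℓ1 ≠ 0 → ℓ2 ≠ 0 →
      W1 ⊔ W2 ≤ LinearMap.ker ℓ1 → W1 ⊔ W2 ≤ LinearMap.ker ℓ2 →
      TangentHyperplane f ℓ1 → TangentHyperplane f ℓ2 →
      LinearMap.ker ℓ1 = LinearMap.ker ℓ2 := by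
  intro ℓ1 ℓ2 hl1 hl2 hker1 hker2 ht1 ht2
  classical
  obtain ⟨B, hB, hBsym, hQs⟩ := exists_B f hf.1
  have hV5 : Module.finrank Fq (Fin 5 → Fq) = 5 := by simp
  -- dimensions
  have hinfle : Module.finrank Fq ↥(W1 ⊓ W2) ≤ 2 := hW1 ▸ Submodule.finrank_mono inf_le_left
  have hinfpos : Module.finrank Fq ↥(W1 ⊓ W2) ≠ 0 := by
    intro h
    exact hsec (by rwa [Submodule.finrank_eq_zero] at h)
  have hinfne2 : Module.finrank Fq ↥(W1 ⊓ W2) ≠ 2 := by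
    intro h
    have e1 : W1 ⊓ W2 = W1 := Submodule.eq_of_le_of_finrank_eq inf_le_left (h.trans hW1.symm)
    have e2 : W1 ⊓ W2 = W2 := Submodule.eq_of_le_of_finrank_eq inf_le_right (h.trans hW2.symm)
    exact hWne (e1.symm.trans e2)
  have hinf1 : Module.finrank Fq ↥(W1 ⊓ W2) = 1 := by omega
  have hsupinf := Submodule.finrank_sup_add_finrank_inf_eq W1 W2
  have hsup3 : Module.finrank Fq ↥(W1 ⊔ W2) = 3 := by omega
  -- the vertex of a tangent hyperplane through W1 ⊔ W2 lies in W1 ⊓ W2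
  have vertex_mem : ∀ (ℓ : (Fin 5 → Fq) →ₗ[Fq] Fq) (p : Fin 5 → Fq),
      W1 ⊔ W2 ≤ LinearMap.ker ℓ → p ≠ 0 →
      (∀ v, ℓ v = 0 → MvPolynomial.eval v f = 0 →
        ∀ a b : Fq, MvPolynomial.eval (a • p + b • v) f = 0) →
      p ∈ W1 ⊓ W2 := by
    intro ℓ p hker hp0 hvert
    have key : ∀ W : Submodule Fq (Fin 5 → Fq), Module.finrank Fq W = 2 →
        (∀ v ∈ W, MvPolynomial.eval v f = 0) → W ≤ LinearMap.ker ℓ → p ∈ W := by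
      intro W hWr hWX hWker
      by_contra hp
      have hspan1 : Module.finrank Fq (Submodule.span Fq {p} : Submodule Fq (Fin 5 → Fq)) = 1 :=
        finrank_span_singleton hp0
      have hinfbot : W ⊓ Submodule.span Fq {p} = ⊥ := by
        by_contra hnb
        have hle : W ⊓ Submodule.span Fq {p} ≤ Submodule.span Fq {p} := inf_le_right
        have h1 : Module.finrank Fq ↥(W ⊓ Submodule.span Fq {p}) ≠ 0 := fun h =>
          hnb (by rwa [Submodule.finrank_eq_zero] at h)
        have h2 : Module.finrank Fq ↥(W ⊓ Submodule.span Fq {p}) ≤ 1 :=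
          hspan1 ▸ Submodule.finrank_mono hle
        have heq : W ⊓ Submodule.span Fq {p} = Submodule.span Fq {p} :=
          Submodule.eq_of_le_of_finrank_eq hle (by omega)
        have hmem : p ∈ Submodule.span Fq {p} := Submodule.mem_span_singleton_self p
        rw [← heq] at hmem
        exact hp hmem.1
      have hU3 : Module.finrank Fq ↥(W ⊔ Submodule.span Fq {p}) = 3 := by
        have h3 := Submodule.finrank_sup_add_finrank_inf_eq W (Submodule.span Fq {p})
        rw [hinfbot, finrank_bot] at h3
        omega
      apply no_TS3 f hf B hB hBsym hQs (W ⊔ Submodule.span Fq {p}) hU3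
      intro v hv
      obtain ⟨w, hw, x, hx, rfl⟩ := Submodule.mem_sup.mp hv
      obtain ⟨t, rfl⟩ := Submodule.mem_span_singleton.mp hx
      have h5 := hvert w (LinearMap.mem_ker.mp (hWker hw)) (hWX w hw) t 1
      rw [one_smul] at h5
      rw [add_comm w (t • p)]
      exact h5
    exact ⟨key W1 hW1 hW1X (le_trans le_sup_left hker),
           key W2 hW2 hW2X (le_trans le_sup_right hker)⟩
  -- main claim: for a tangent hyperplane through W1 ⊔ W2 with vertex p, ker ℓ = ker (B p)
  have main : ∀ (ℓ : (Fin 5 → Fq) →ₗ[Fq] Fq) (p : Fin 5 → Fq), ℓ ≠ 0 →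
      W1 ⊔ W2 ≤ LinearMap.ker ℓ → p ≠ 0 → MvPolynomial.eval p f = 0 →
      (∀ v, ℓ v = 0 → MvPolynomial.eval v f = 0 →
        ∀ a b : Fq, MvPolynomial.eval (a • p + b • v) f = 0) →
      LinearMap.ker ℓ = LinearMap.ker (B p) := by
    intro ℓ p hl hker hp0 hQp hvert
    have hBp : B p ≠ 0 := by
      intro h
      exact nondeg_rad f hf B hB hQs p hp0 hQp (fun z => by rw [hBsym z p, h]; rfl)
    have hkerrank : ∀ g : (Fin 5 → Fq) →ₗ[Fq] Fq, g ≠ 0 →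
        Module.finrank Fq (LinearMap.ker g) = 4 := by
      intro g hg
      have h1 := LinearMap.finrank_range_add_finrank_ker g
      have h2 : Module.finrank Fq (LinearMap.range g) = 1 := by
        have hr : LinearMap.range g ≠ ⊥ := fun h => hg (LinearMap.range_eq_bot.mp h)
        have hle : Module.finrank Fq (LinearMap.range g) ≤ 1 := by
          have h6 := Submodule.finrank_le (LinearMap.range g)
          simpa using h6
        have hne0 : Module.finrank Fq (LinearMap.range g) ≠ 0 := fun h =>
          hr (by rwa [Submodule.finrank_eq_zero] at h)
        omega
      rw [h2, hV5] at h1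
      omega
    have hk4 := hkerrank ℓ hl
    have ht4 := hkerrank (B p) hBp
    have hsub : ∀ v, ℓ v = 0 → MvPolynomial.eval v f = 0 → B p v = 0 := by
      intro v h1 h2
      have h3 := hvert v h1 h2 1 1
      rw [one_smul, one_smul] at h3
      have h4 := hB p v
      rw [h3, hQp, h2] at h4
      linear_combination -h4
    have hWT : W1 ⊔ W2 ≤ LinearMap.ker (B p) := by
      rw [sup_le_iff]
      constructor
      · intro w hw
        exact LinearMap.mem_ker.mpr
          (hsub w (LinearMap.mem_ker.mp (hker (Submodule.mem_sup_left hw))) (hW1X w hw))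
      · intro w hw
        exact LinearMap.mem_ker.mpr
          (hsub w (LinearMap.mem_ker.mp (hker (Submodule.mem_sup_right hw))) (hW2X w hw))
    by_contra hne
    have hTnotle : ¬ LinearMap.ker (B p) ≤ LinearMap.ker ℓ := by
      intro h
      exact hne (Submodule.eq_of_le_of_finrank_eq h (by omega)).symm
    have hsup5 : Module.finrank Fq ↥(LinearMap.ker ℓ ⊔ LinearMap.ker (B p)) = 5 := by
      have hle5 : Module.finrank Fq ↥(LinearMap.ker ℓ ⊔ LinearMap.ker (B p)) ≤ 5 := by
        have h6 := Submodule.finrank_le (LinearMap.ker ℓ ⊔ LinearMap.ker (B p))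
        omega
      have hge : Module.finrank Fq ↥(LinearMap.ker ℓ) ≤
          Module.finrank Fq ↥(LinearMap.ker ℓ ⊔ LinearMap.ker (B p)) :=
        Submodule.finrank_mono le_sup_left
      have h4 : Module.finrank Fq ↥(LinearMap.ker ℓ ⊔ LinearMap.ker (B p)) ≠ 4 := by
        intro h
        have heq : LinearMap.ker ℓ = LinearMap.ker ℓ ⊔ LinearMap.ker (B p) :=
          Submodule.eq_of_le_of_finrank_eq le_sup_left (by omega)
        exact hTnotle (by rw [heq]; exact le_sup_right)
      omega
    have hinf3 : Module.finrank Fq ↥(LinearMap.ker ℓ ⊓ LinearMap.ker (B p)) = 3 := by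
      have h6 := Submodule.finrank_sup_add_finrank_inf_eq (LinearMap.ker ℓ) (LinearMap.ker (B p))
      omega
    have hPinf : W1 ⊔ W2 = LinearMap.ker ℓ ⊓ LinearMap.ker (B p) :=
      Submodule.eq_of_le_of_finrank_eq (le_inf hker hWT) (by omega)
    have hSP : ∀ v, ℓ v = 0 → MvPolynomial.eval v f = 0 → v ∈ W1 ⊔ W2 := by
      intro v h1 h2
      rw [hPinf]
      exact ⟨LinearMap.mem_ker.mpr h1, LinearMap.mem_ker.mpr (hsub v h1 h2)⟩
    obtain ⟨u, hul, huP⟩ : ∃ u, ℓ u = 0 ∧ u ∉ W1 ⊔ W2 := by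
      by_contra h
      push_neg at h
      have h6 : LinearMap.ker ℓ ≤ W1 ⊔ W2 := fun v hv => h v (LinearMap.mem_ker.mp hv)
      have h7 := Submodule.finrank_mono h6
      omega
    have hQu : MvPolynomial.eval u f ≠ 0 := fun h => huP (hSP u hul h)
    have hBuP : ∀ w ∈ W1 ⊔ W2, B u w = 0 := by
      have hsing : ∀ W : Submodule Fq (Fin 5 → Fq), W ≤ W1 ⊔ W2 →
          (∀ v ∈ W, MvPolynomial.eval v f = 0) → ∀ w ∈ W, B u w = 0 := by
        intro W hWle hWX w hw
        by_contra hBuw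
        set t := -(MvPolynomial.eval u f) / B u w with hts
        have hv : MvPolynomial.eval (u + t • w) f = 0 := by
          have h1 := hB u (t • w)
          rw [hQs, hWX w hw] at h1
          have h2 : B u (t • w) = t * B u w := by rw [map_smul, smul_eq_mul]
          rw [h2, hts] at h1
          rw [h1]
          field_simp
          ring
        have hlv : ℓ (u + t • w) = 0 := by
          have h8 : ℓ w = 0 := LinearMap.mem_ker.mp (hker (hWle hw))
          rw [map_add, map_smul, hul, h8]
          simp
        have hmem := hSP _ hlv hv
        apply huP
        have htw : t • w ∈ W1 ⊔ W2 := Submodule.smul_mem _ t (hWle hw)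
        have h9 := Submodule.sub_mem _ hmem htw
        simpa using h9
      intro w hw
      obtain ⟨w1, hw1, w2, hw2, rfl⟩ := Submodule.mem_sup.mp hw
      rw [map_add, hsing W1 le_sup_left hW1X w1 hw1, hsing W2 le_sup_right hW2X w2 hw2, add_zero]
    by_cases hcase : ∀ w ∈ W1 ⊔ W2, MvPolynomial.eval w f = 0
    · exact no_TS3 f hf B hB hBsym hQs (W1 ⊔ W2) hsup3 hcase
    · push_neg at hcase
      obtain ⟨w0, hw0P, hQw0⟩ := hcase
      obtain ⟨w1, hw1, w2, hw2, rfl⟩ := Submodule.mem_sup.mp hw0P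
      have hβ : B w1 w2 ≠ 0 := by
        intro h
        apply hQw0
        have h1 := hB w1 w2
        rw [hW1X w1 hw1, hW2X w2 hw2, h] at h1
        linear_combination h1
      set t := -(MvPolynomial.eval u f) / B w1 w2 with hts
      have hw12 : w1 + t • w2 ∈ W1 ⊔ W2 :=
        Submodule.add_mem _ (Submodule.mem_sup_left hw1)
          (Submodule.smul_mem _ t (Submodule.mem_sup_right hw2))
      have hQv : MvPolynomial.eval (u + (w1 + t • w2)) f = 0 := by
        have h1 := hB u (w1 + t • w2)
        rw [hBuP _ hw12] at h1
        have h2 := hB w1 (t • w2)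
        rw [hQs, hW2X w2 hw2, hW1X w1 hw1] at h2
        have h3 : B w1 (t • w2) = t * B w1 w2 := by rw [map_smul, smul_eq_mul]
        rw [h3] at h2
        rw [h1, h2, hts]
        field_simp
        ring
      have hlv : ℓ (u + (w1 + t • w2)) = 0 := by
        have h8 : ℓ (w1 + t • w2) = 0 := LinearMap.mem_ker.mp (hker hw12)
        rw [map_add, hul, h8, add_zero]
      have hmem := hSP _ hlv hQv
      apply huP
      have h9 := Submodule.sub_mem _ hmem hw12
      simpa using h9
  -- conclude
  obtain ⟨p1, hp10, hlp1, hQp1, hvert1⟩ := ht1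
  obtain ⟨p2, hp20, hlp2, hQp2, hvert2⟩ := ht2
  have hm1 := vertex_mem ℓ1 p1 hker1 hp10 hvert1
  have hm2 := vertex_mem ℓ2 p2 hker2 hp20 hvert2
  have hk1 := main ℓ1 p1 hl1 hker1 hp10 hQp1 hvert1
  have hk2 := main ℓ2 p2 hl2 hker2 hp20 hQp2 hvert2
  have hspanW0 : Submodule.span Fq {p1} = W1 ⊓ W2 := by
    apply Submodule.eq_of_le_of_finrank_eq
    · rw [Submodule.span_le]
      simpa using hm1
    · rw [finrank_span_singleton hp10, hinf1]
  obtain ⟨t, rfl⟩ : ∃ t : Fq, p2 = t • p1 := by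
    have h6 : p2 ∈ Submodule.span Fq {p1} := by rw [hspanW0]; exact hm2
    obtain ⟨t, ht⟩ := Submodule.mem_span_singleton.mp h6
    exact ⟨t, ht.symm⟩
  have htne : t ≠ 0 := by
    rintro rfl
    exact hp20 (zero_smul Fq p1)
  have hBt : B (t • p1) = t • B p1 := map_smul B t p1
  rw [hk1, hk2, hBt]
  ext v
  simp only [LinearMap.mem_ker, LinearMap.smul_apply, smul_eq_mul]
  constructor
  · intro h
    rw [h, mul_zero]
  · intro h
    rcases mul_eq_zero.mp h with h' | h'
    · exact absurd h' htne
    · exact h'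
end
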